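/- arXiv:2007.05953 — 14 statements merged into one kernel-verified Lean document; each statement's English description precedes it below -/
import Mathlib

section
/- Let d > 1 be a square-free integer and let ε_d = x + y√d be the fundamental unit of Q(√d), where x, y are integers or half-integers. If the norm of ε_d equals 1, then none of 2(x+1), 2(x−1), 2d(x+1), 2d(x−1) is a square of a rational number. -/
lemma aux_int (d : ℤ) (hsq : Squarefree d) (q : ℚ) (m : ℤ)
    (h : (d : ℚ) * q ^ 2 = m) : ∃ b : ℤ, q = b := by
  have hd0 : (q.den : ℚ) ≠ 0 := by exact_mod_cast q.den_ne_zero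
  have hq : (q.num : ℚ) / (q.den : ℚ) = q := Rat.num_div_den q
  have hcast : (d : ℚ) * (q.num : ℚ) ^ 2 = (m : ℚ) * (q.den : ℚ) ^ 2 := by
    rw [← hq] at h; field_simp at h; linarith
  have hint : d * q.num ^ 2 = m * (q.den : ℤ) ^ 2 := by exact_mod_cast hcast
  have hdvd : ((q.den : ℤ)) ^ 2 ∣ d * q.num ^ 2 := ⟨m, by linarith [hint]⟩
  have hcop : IsCoprime ((q.den : ℤ)) q.num := by
    rw [Int.isCoprime_iff_gcd_eq_one]
    simpa [Int.gcd, Nat.coprime_comm] using q.reduced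
  have hcop2 : IsCoprime (((q.den : ℤ)) ^ 2) (q.num ^ 2) := hcop.pow
  have hdvd2 : ((q.den : ℤ)) ^ 2 ∣ d := hcop2.dvd_of_dvd_mul_right hdvd
  have hu : IsUnit ((q.den : ℤ)) := hsq _ (by rwa [← sq])
  have h1 : (q.den : ℤ) = 1 := by
    rcases Int.isUnit_iff.mp hu with h | h
    · exact h
    · exfalso; omega
  refine ⟨q.num, ?_⟩
  have : (q.den : ℕ) = 1 := by exact_mod_cast h1
  rw [← hq, this]; simp

section main
variable (d : ℤ) (hd : 1 < d) (hsq : Squarefree d) (x y : ℚ)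
    (hx2 : ∃ a : ℤ, 2 * x = a) (hy2 : ∃ b : ℤ, 2 * y = b)
    (hxpos : 0 < x) (hypos : 0 < y)
    (hnorm : x ^ 2 - (d : ℚ) * y ^ 2 = 1)
    (hfund : ∀ x' y' : ℚ, (∃ a : ℤ, 2 * x' = a) → (∃ b : ℤ, 2 * y' = b) →
      0 < x' → 0 < y' →
      (x' ^ 2 - (d : ℚ) * y' ^ 2 = 1 ∨ x' ^ 2 - (d : ℚ) * y' ^ 2 = -1) → x ≤ x')

include hd hsq hx2 hy2 hxpos hypos hnorm hfund

set_option maxHeartbeats 1600000 in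
lemma key1 : ¬ IsSquare (2 * (x + 1)) := by
  obtain ⟨a0, ha0⟩ := hx2
  have hdq : (1 : ℚ) < d := by exact_mod_cast hd
  have hx1 : 1 < x := by nlinarith [sq_nonneg y, mul_pos hypos hypos]
  rintro ⟨r, hr⟩
  have hr0 : r ≠ 0 := by rintro rfl; nlinarith
  set s := |r| with hs
  have hs0 : 0 < s := abs_pos.mpr hr0
  have hss : s * s = 2 * (x + 1) := by rw [abs_mul_abs_self]; exact hr.symm
  set a := s / 2 with ha
  set b := y / s with hb
  have hapos : 0 < a := by positivity
  have hbpos : 0 < b := by positivity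
  have hab : a ^ 2 - (d : ℚ) * b ^ 2 = 1 := by
    have hsne : s ≠ 0 := ne_of_gt hs0
    rw [ha, hb]; field_simp
    nlinarith [hss, hnorm]
  have ha2 : ∃ c : ℤ, 2 * a = c := by
    have : ((1 : ℤ) : ℚ) * s ^ 2 = ((a0 + 2 : ℤ) : ℚ) := by
      push_cast; nlinarith [hss]
    obtain ⟨c, hc⟩ := aux_int 1 squarefree_one s _ this
    exact ⟨c, by rw [ha]; rw [hc] at *; ring⟩
  have hb2 : ∃ c : ℤ, 2 * b = c := by
    have : ((d : ℤ) : ℚ) * (2 * b) ^ 2 = ((a0 - 2 : ℤ) : ℚ) := by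
      have hsne : s ≠ 0 := ne_of_gt hs0
      rw [hb]; push_cast
      field_simp
      nlinarith [hss, hnorm]
    obtain ⟨c, hc⟩ := aux_int d hsq (2 * b) _ this
    exact ⟨c, hc⟩
  have hle := hfund a b ha2 hb2 hapos hbpos (Or.inl hab)
  have haxx : a ^ 2 = (x + 1) / 2 := by
    have hsne : s ≠ 0 := ne_of_gt hs0
    rw [ha]; field_simp; nlinarith [hss]
  nlinarith [hle, haxx, hx1, hapos]

set_option maxHeartbeats 1600000 in
lemma key2 : ¬ IsSquare (2 * (x - 1)) := by
  obtain ⟨a0, ha0⟩ := hx2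
  have hdq : (1 : ℚ) < d := by exact_mod_cast hd
  have hx1 : 1 < x := by nlinarith [sq_nonneg y, mul_pos hypos hypos]
  rintro ⟨r, hr⟩
  have hr0 : r ≠ 0 := by rintro rfl; nlinarith
  set s := |r| with hs
  have hs0 : 0 < s := abs_pos.mpr hr0
  have hss : s * s = 2 * (x - 1) := by rw [abs_mul_abs_self]; exact hr.symm
  set a := s / 2 with ha
  set b := y / s with hb
  have hapos : 0 < a := by positivity
  have hbpos : 0 < b := by positivity
  have hab : a ^ 2 - (d : ℚ) * b ^ 2 = -1 := by
    have hsne : s ≠ 0 := ne_of_gt hs0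
    rw [ha, hb]; field_simp
    nlinarith [hss, hnorm]
  have ha2 : ∃ c : ℤ, 2 * a = c := by
    have : ((1 : ℤ) : ℚ) * s ^ 2 = ((a0 - 2 : ℤ) : ℚ) := by
      push_cast; nlinarith [hss]
    obtain ⟨c, hc⟩ := aux_int 1 squarefree_one s _ this
    exact ⟨c, by rw [ha]; rw [hc] at *; ring⟩
  have hb2 : ∃ c : ℤ, 2 * b = c := by
    have : ((d : ℤ) : ℚ) * (2 * b) ^ 2 = ((a0 + 2 : ℤ) : ℚ) := by
      have hsne : s ≠ 0 := ne_of_gt hs0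
      rw [hb]; push_cast
      field_simp
      nlinarith [hss, hnorm]
    obtain ⟨c, hc⟩ := aux_int d hsq (2 * b) _ this
    exact ⟨c, hc⟩
  have hle := hfund a b ha2 hb2 hapos hbpos (Or.inr hab)
  have haxx : a ^ 2 = (x - 1) / 2 := by
    have hsne : s ≠ 0 := ne_of_gt hs0
    rw [ha]; field_simp; nlinarith [hss]
  nlinarith [hle, haxx, hx1, hapos]

end main

/-- Az-00 Lemma 5: if the fundamental unit `ε_d = x + y√d` of `ℚ(√d)` (with `x, y`
integers or half-integers, minimal among all units `> 1`) has norm `1`, then none of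
`2(x+1)`, `2(x-1)`, `2d(x+1)`, `2d(x-1)` is a square in `ℚ`. -/
theorem stmt_0 (d : ℤ) (hd : 1 < d) (hsq : Squarefree d) (x y : ℚ)
    (hx2 : ∃ a : ℤ, 2 * x = a) (hy2 : ∃ b : ℤ, 2 * y = b)
    (hxpos : 0 < x) (hypos : 0 < y)
    (hnorm : x ^ 2 - (d : ℚ) * y ^ 2 = 1)
    (hfund : ∀ x' y' : ℚ, (∃ a : ℤ, 2 * x' = a) → (∃ b : ℤ, 2 * y' = b) →
      0 < x' → 0 < y' →
      (x' ^ 2 - (d : ℚ) * y' ^ 2 = 1 ∨ x' ^ 2 - (d : ℚ) * y' ^ 2 = -1) → x ≤ x') :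
    ¬ IsSquare (2 * (x + 1)) ∧ ¬ IsSquare (2 * (x - 1)) ∧
      ¬ IsSquare (2 * (d : ℚ) * (x + 1)) ∧ ¬ IsSquare (2 * (d : ℚ) * (x - 1)) := by
  have h1 := key1 d hd hsq x y hx2 hy2 hxpos hypos hnorm hfund
  have h2 := key2 d hd hsq x y hx2 hy2 hxpos hypos hnorm hfund
  have hdq : (1 : ℚ) < d := by exact_mod_cast hd
  have hx1 : 1 < x := by nlinarith [sq_nonneg y, mul_pos hypos hypos]
  refine ⟨h1, h2, ?_, ?_⟩
  · rintro ⟨r, hr⟩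
    have hr0 : r ≠ 0 := by rintro rfl; nlinarith
    exact h2 ⟨2 * d * y / r, by field_simp; nlinarith [hr, hnorm]⟩
  · rintro ⟨r, hr⟩
    have hr0 : r ≠ 0 := by rintro rfl; nlinarith
    exact h1 ⟨2 * d * y / r, by field_simp; nlinarith [hr, hnorm]⟩
end

section
/- Let p and q be primes with q ≡ 7 (mod 8), p ≡ 5 (mod 8), and Legendre symbol (p/q) = 1. If x, y are positive integers with x² − 2pq·y² = 1 and (x, y) minimal (i.e., x + y√(2pq) is the fundamental unit of norm 1), then p(x+1) is a perfect square in ℕ. -/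
private lemma split_sq {d e a b z : ℤ} (hd : 0 < d) (he : 0 < e) (ha : 0 < a) (hb : 0 < b)
    (hda : d ∣ a) (heb : e ∣ b) (hcop : IsCoprime a b)
    (hprod : a * b = d * e * z ^ 2) :
    ∃ u v : ℤ, a = d * u ^ 2 ∧ b = e * v ^ 2 := by
  obtain ⟨a', rfl⟩ := hda
  obtain ⟨b', rfl⟩ := heb
  have hde : d * e ≠ 0 := (mul_pos hd he).ne'
  have hz : a' * b' = z ^ 2 := by
    have h' : (d * e) * (a' * b') = (d * e) * z ^ 2 := by linear_combination hprod
    exact mul_left_cancel₀ hde h'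
  have hcop' : IsCoprime a' b' :=
    (hcop.of_isCoprime_of_dvd_left (dvd_mul_left a' d)).of_isCoprime_of_dvd_right
      (dvd_mul_left b' e)
  obtain ⟨u, hu⟩ := Int.sq_of_isCoprime hcop' hz
  obtain ⟨v, hv⟩ := Int.sq_of_isCoprime hcop'.symm (show b' * a' = z ^ 2 by linear_combination hz)
  have ha' : 0 < a' := by
    rcases mul_pos_iff.mp ha with ⟨_, h⟩ | ⟨h, _⟩
    · exact h
    · exact absurd hd (not_lt.mpr h.le)
  have hau : a' = u ^ 2 := by
    rcases hu with hu | hu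
    · exact hu
    · nlinarith [sq_nonneg u]
  have hb' : 0 < b' := by
    rcases mul_pos_iff.mp hb with ⟨_, h⟩ | ⟨h, _⟩
    · exact h
    · exact absurd he (not_lt.mpr h.le)
  have hbv : b' = v ^ 2 := by
    rcases hv with hv | hv
    · exact hv
    · nlinarith [sq_nonneg v]
  exact ⟨u, v, by rw [hau], by rw [hbv]⟩

private lemma isSquare_cast_of_sq_rel (r : ℕ) [Fact r.Prime] {c u m : ℤ}
    (h : c * u ^ 2 = 1 + (r : ℤ) * m) :
    IsSquare ((c : ZMod r)) := by
  have h2 : (c : ZMod r) * ((u : ZMod r)) ^ 2 = 1 := by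
    have h3 := congrArg (fun n : ℤ => (n : ZMod r)) h
    push_cast at h3
    simpa [ZMod.natCast_self] using h3
  have hu : (u : ZMod r) ≠ 0 := by
    intro h0
    rw [h0] at h2
    simp at h2
  refine ⟨((u : ZMod r))⁻¹, ?_⟩
  field_simp
  linear_combination h2

/-- If `q ≡ 7 (mod 8)`, `p ≡ 5 (mod 8)`, `(p/q) = 1`, and `(x, y)` is the fundamental
(minimal positive) solution of `X² − 2pq·Y² = 1`, then `p(x+1)` is a perfect square. -/
theorem stmt_1 (p q : ℕ) (hp : p.Prime) (hq : q.Prime)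
    (hq7 : q % 8 = 7) (hp5 : p % 8 = 5)
    (hleg : @legendreSym q ⟨hq⟩ (p : ℤ) = 1)
    (x y : ℤ) (hx : 0 < x) (hy : 0 < y)
    (hpell : x ^ 2 - 2 * p * q * y ^ 2 = 1)
    (hmin : ∀ x' y' : ℤ, 0 < x' → 0 < y' → x' ^ 2 - 2 * p * q * y' ^ 2 = 1 → x ≤ x') :
    ∃ k : ℤ, (p : ℤ) * (x + 1) = k ^ 2 := by
  haveI instp : Fact p.Prime := ⟨hp⟩
  haveI instq : Fact q.Prime := ⟨hq⟩
  have hp2 : p ≠ 2 := by omega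
  have hq2 : q ≠ 2 := by omega
  have hpq : p ≠ q := by omega
  have hP0 : (0:ℤ) < (p:ℤ) := by exact_mod_cast hp.pos
  have hQ0 : (0:ℤ) < (q:ℤ) := by exact_mod_cast hq.pos
  -- x is odd
  have hxodd : Odd x := by
    rcases Int.even_or_odd x with ⟨k, hk⟩ | h
    · exfalso
      have h4 : 4 * k ^ 2 - 2 * ((p:ℤ) * q * y ^ 2) = 1 := by
        rw [hk] at hpell; linear_combination hpell
      obtain ⟨K, hK⟩ : ∃ K, k ^ 2 = K := ⟨_, rfl⟩
      obtain ⟨M, hM⟩ : ∃ M, (p:ℤ) * q * y ^ 2 = M := ⟨_, rfl⟩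
      rw [hK, hM] at h4
      omega
    · exact h
  obtain ⟨t, hxt⟩ := hxodd
  have ht0 : 0 ≤ t := by omega
  -- y is even
  have hyeven : Even y := by
    rcases Int.even_or_odd y with h | ⟨n, hn⟩
    · exact h
    · exfalso
      have key : 2 * (t ^ 2 + t) = 4 * (((p:ℤ) * q) * (n ^ 2 + n)) + (p:ℤ) * q := by
        rw [hxt, hn] at hpell
        refine mul_left_cancel₀ (two_ne_zero) ?_
        linear_combination hpell
      have hM2 : ((p:ℤ) * q) % 2 = 1 := by
        have h1 : (p:ℤ) % 2 = 1 := by omega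
        have h2 : (q:ℤ) % 2 = 1 := by omega
        rw [Int.mul_emod, h1, h2]; norm_num
      obtain ⟨M, hM⟩ : ∃ M, (p:ℤ) * q = M := ⟨_, rfl⟩
      rw [hM] at key hM2
      obtain ⟨E, hE⟩ : ∃ E, M * (n ^ 2 + n) = E := ⟨_, rfl⟩
      obtain ⟨A, hA⟩ : ∃ A, t ^ 2 + t = A := ⟨_, rfl⟩
      rw [hE, hA] at key
      omega
  obtain ⟨z, hyz⟩ := hyeven
  have hz0 : 0 < z := by omega
  -- the core equation t(t+1) = 2pq z²
  have habz : t * (t + 1) = 2 * (p:ℤ) * q * z ^ 2 := by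
    have h4 : (4:ℤ) * (t * (t + 1)) = 4 * (2 * (p:ℤ) * q * z ^ 2) := by
      rw [hxt, hyz] at hpell; linear_combination hpell
    exact mul_left_cancel₀ (by norm_num) h4
  have ht1 : 0 < t := by
    rcases lt_or_eq_of_le ht0 with h | h
    · exact h
    · exfalso
      have hpos : 0 < 2 * (p:ℤ) * q * z ^ 2 :=
        mul_pos (mul_pos (mul_pos two_pos hP0) hQ0) (pow_pos hz0 2)
      rw [← habz, ← h] at hpos
      simp at hpos
  have ht10 : (0:ℤ) < t + 1 := by linarith
  -- primality / coprimality facts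
  have hPrimeP : Prime ((p:ℤ)) := Nat.prime_iff_prime_int.mp hp
  have hPrimeQ : Prime ((q:ℤ)) := Nat.prime_iff_prime_int.mp hq
  have hPrime2 : Prime ((2:ℤ)) := Int.prime_two
  have cop_ab : IsCoprime t (t + 1) := ⟨-1, 1, by ring⟩
  have cop2P : IsCoprime (2:ℤ) ((p:ℤ)) := by
    have h := Nat.Coprime.isCoprime ((Nat.coprime_primes Nat.prime_two hp).mpr (Ne.symm hp2))
    exact_mod_cast h
  have cop2Q : IsCoprime (2:ℤ) ((q:ℤ)) := by
    have h := Nat.Coprime.isCoprime ((Nat.coprime_primes Nat.prime_two hq).mpr (Ne.symm hq2))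
    exact_mod_cast h
  have copPQ : IsCoprime ((p:ℤ)) ((q:ℤ)) := by
    have h := Nat.Coprime.isCoprime ((Nat.coprime_primes hp hq).mpr hpq)
    exact_mod_cast h
  -- each of 2, p, q divides t or t+1
  have h2d : (2:ℤ) ∣ t ∨ (2:ℤ) ∣ (t + 1) :=
    hPrime2.dvd_or_dvd (show (2:ℤ) ∣ t * (t + 1) from habz ▸ ⟨(p:ℤ) * q * z ^ 2, by ring⟩)
  have hPd : ((p:ℤ)) ∣ t ∨ ((p:ℤ)) ∣ (t + 1) :=
    hPrimeP.dvd_or_dvd (show ((p:ℤ)) ∣ t * (t + 1) from habz ▸ ⟨2 * (q:ℤ) * z ^ 2, by ring⟩)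
  have hQd : ((q:ℤ)) ∣ t ∨ ((q:ℤ)) ∣ (t + 1) :=
    hPrimeQ.dvd_or_dvd (show ((q:ℤ)) ∣ t * (t + 1) from habz ▸ ⟨2 * (p:ℤ) * z ^ 2, by ring⟩)
  -- Legendre symbol facts
  have hlegqP : legendreSym q ((p:ℤ)) = 1 := hleg
  have hlegpQ : legendreSym p ((q:ℤ)) = 1 := by
    have h := legendreSym.quadratic_reciprocity_one_mod_four (p := p) (q := q) (by omega) hq2
    rw [← h]; exact hleg
  have hnsq2p : ¬ IsSquare ((2 : ZMod p)) := by
    intro h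
    have := (ZMod.exists_sq_eq_two_iff (p := p) hp2).mp h
    omega
  have hnsqn2p : ¬ IsSquare ((-2 : ZMod p)) := by
    intro h
    have := (ZMod.exists_sq_eq_neg_two_iff (p := p) hp2).mp h
    omega
  have hnsqn1q : ¬ IsSquare ((-1 : ZMod q)) := by
    intro h
    exact (ZMod.exists_sq_eq_neg_one_iff (p := q)).mp h (by omega)
  have hcast2p : (((2:ℤ)) : ZMod p) = 2 := by push_cast; ring
  have hcastn2p : (((-2:ℤ)) : ZMod p) = -2 := by push_cast; ring
  have hcastn1q : (((-1:ℤ)) : ZMod q) = -1 := by push_cast; ring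
  have hlp_n2 : legendreSym p (-2) = -1 :=
    (legendreSym.eq_neg_one_iff p).mpr (by rw [hcastn2p]; exact hnsqn2p)
  have hlq_n1 : legendreSym q (-1) = -1 :=
    (legendreSym.eq_neg_one_iff q).mpr (by rw [hcastn1q]; exact hnsqn1q)
  have hnsqn2q : ¬ IsSquare ((-2 : ZMod q)) := by
    intro h
    have := (ZMod.exists_sq_eq_neg_two_iff (p := q) hq2).mp h
    omega
  have hlq_n2 : legendreSym q (-2) = -1 :=
    (legendreSym.eq_neg_one_iff q).mpr (by rw [show (((-2:ℤ)) : ZMod q) = -2 by push_cast; ring]; exact hnsqn2q)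
  -- main case analysis
  rcases h2d with h2a | h2b <;> rcases hPd with hPa | hPb <;> rcases hQd with hQa | hQb
  · -- 2, p, q all divide t : minimality contradiction
    exfalso
    have hdvd : (2 * (p:ℤ) * (q:ℤ)) ∣ t :=
      (cop2Q.mul_left copPQ).mul_dvd (cop2P.mul_dvd h2a hPa) hQa
    obtain ⟨u, v, hu, hv⟩ := split_sq (z := z)
      (mul_pos (mul_pos two_pos hP0) hQ0) one_pos ht1 ht10 hdvd (one_dvd _) cop_ab
      (by linear_combination habz)
    have hu0 : u ≠ 0 := by
      rintro rfl
      rw [show (0:ℤ) ^ 2 = 0 by ring, mul_zero] at hu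
      omega
    have hv0 : v ≠ 0 := by
      rintro rfl
      simp at hv
      omega
    have heq : |v| ^ 2 - 2 * (p:ℤ) * (q:ℤ) * |u| ^ 2 = 1 := by
      rw [sq_abs, sq_abs]; linear_combination hu - hv
    have hxle := hmin |v| |u| (abs_pos.mpr hv0) (abs_pos.mpr hu0) heq
    have h1 : x * x ≤ |v| * |v| := mul_le_mul hxle hxle (by linarith) (abs_nonneg v)
    have h2 : |v| * |v| = t + 1 := by
      rw [← pow_two, sq_abs]; linarith [hv]
    nlinarith [h1, h2, hxt, ht1]
  · -- 2, p ∣ t, q ∣ t+1 : (-2p) is a square mod q, contradiction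
    exfalso
    obtain ⟨u, v, hu, hv⟩ := split_sq (z := z)
      (mul_pos two_pos hP0) hQ0 ht1 ht10 (cop2P.mul_dvd h2a hPa) hQb cop_ab
      (by linear_combination habz)
    have hsq := isSquare_cast_of_sq_rel q (c := (-2) * (p:ℤ)) (u := u) (m := -v ^ 2)
      (by linear_combination hu - hv)
    have hcomp : legendreSym q ((-2) * (p:ℤ)) = -1 := by
      rw [legendreSym.mul, hlq_n2, hlegqP]; norm_num
    exact ((legendreSym.eq_neg_one_iff q).mp hcomp) hsq
  · -- 2, q ∣ t, p ∣ t+1 : (-2q) is a square mod p, contradiction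
    exfalso
    obtain ⟨u, v, hu, hv⟩ := split_sq (z := z)
      (mul_pos two_pos hQ0) hP0 ht1 ht10 (cop2Q.mul_dvd h2a hQa) hPb cop_ab
      (by linear_combination habz)
    have hsq := isSquare_cast_of_sq_rel p (c := (-2) * (q:ℤ)) (u := u) (m := -v ^ 2)
      (by linear_combination hu - hv)
    have hcomp : legendreSym p ((-2) * (q:ℤ)) = -1 := by
      rw [legendreSym.mul, hlp_n2, hlegpQ]; norm_num
    exact ((legendreSym.eq_neg_one_iff p).mp hcomp) hsq
  · -- 2 ∣ t, p, q ∣ t+1 : (-2) is a square mod p, contradiction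
    exfalso
    obtain ⟨u, v, hu, hv⟩ := split_sq (z := z)
      two_pos (mul_pos hP0 hQ0) ht1 ht10 h2a ((copPQ).mul_dvd hPb hQb) cop_ab
      (by linear_combination habz)
    have hsq := isSquare_cast_of_sq_rel p (c := (-2:ℤ)) (u := u) (m := -((q:ℤ) * v ^ 2))
      (by linear_combination hu - hv)
    rw [hcastn2p] at hsq
    exact hnsqn2p hsq
  · -- p, q ∣ t, 2 ∣ t+1 : 2 is a square mod p, contradiction
    exfalso
    obtain ⟨u, v, hu, hv⟩ := split_sq (z := z)
      (mul_pos hP0 hQ0) two_pos ht1 ht10 (copPQ.mul_dvd hPa hQa) h2b cop_ab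
      (by linear_combination habz)
    have hsq := isSquare_cast_of_sq_rel p (c := (2:ℤ)) (u := v) (m := (q:ℤ) * u ^ 2)
      (by linear_combination hu - hv)
    rw [hcast2p] at hsq
    exact hnsq2p hsq
  · -- p ∣ t, 2, q ∣ t+1 : (-p) is a square mod q, contradiction
    exfalso
    obtain ⟨u, v, hu, hv⟩ := split_sq (z := z)
      hP0 (mul_pos two_pos hQ0) ht1 ht10 hPa (cop2Q.mul_dvd h2b hQb) cop_ab
      (by linear_combination habz)
    have hsq := isSquare_cast_of_sq_rel q (c := (-1) * (p:ℤ)) (u := u) (m := -(2 * v ^ 2))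
      (by linear_combination hu - hv)
    have hcomp : legendreSym q ((-1) * (p:ℤ)) = -1 := by
      rw [legendreSym.mul, hlq_n1, hlegqP]; norm_num
    exact ((legendreSym.eq_neg_one_iff q).mp hcomp) hsq
  · -- q ∣ t, 2, p ∣ t+1 : the desired conclusion
    obtain ⟨u, v, hu, hv⟩ := split_sq (z := z)
      hQ0 (mul_pos two_pos hP0) ht1 ht10 hQa (cop2P.mul_dvd h2b hPb) cop_ab
      (by linear_combination habz)
    exact ⟨2 * (p:ℤ) * v, by linear_combination (p:ℤ) * hxt + 2 * (p:ℤ) * hv⟩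
  · -- 2, p, q ∣ t+1 : (-1) is a square mod q, contradiction
    exfalso
    have hdvd : (2 * (p:ℤ) * (q:ℤ)) ∣ (t + 1) :=
      (cop2Q.mul_left copPQ).mul_dvd (cop2P.mul_dvd h2b hPb) hQb
    obtain ⟨u, v, hu, hv⟩ := split_sq (z := z)
      one_pos (mul_pos (mul_pos two_pos hP0) hQ0) ht1 ht10 (one_dvd _) hdvd cop_ab
      (by linear_combination habz)
    have hsq := isSquare_cast_of_sq_rel q (c := (-1:ℤ)) (u := u) (m := -(2 * (p:ℤ) * v ^ 2))
      (by linear_combination hu - hv)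
    rw [hcastn1q] at hsq
    exact hnsqn1q hsq
end

section
/- Let p and q be primes with q ≡ 7 (mod 8), p ≡ 5 (mod 8), and (p/q) = 1. If x, y are positive integers with x² − 2pq·y² = 1 giving the fundamental solution, then there exist positive integers y₁, y₂ with y = y₁·y₂, x + 1 = p·y₁², x − 1 = 2q·y₂², and hence 2 = p·y₁² − 2q·y₂². -/
private lemma split_sq_s2 (m n d e t : ℤ) (hm0 : 0 < m) (hn0 : 0 < n) (ht0 : 0 < t)
    (hd0 : 0 < d) (he0 : 0 < e)
    (hcop : IsCoprime m n) (hdm : d ∣ m) (hen : e ∣ n)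
    (heq : m * n = (d * e) * t ^ 2) :
    ∃ u v : ℤ, 0 < u ∧ 0 < v ∧ m = d * u ^ 2 ∧ n = e * v ^ 2 ∧ t = u * v := by
  obtain ⟨m1, hm1⟩ := hdm
  obtain ⟨n1, hn1⟩ := hen
  have hde : d * e ≠ 0 := by positivity
  have key : m1 * n1 = t ^ 2 := by
    have h : (d * e) * (m1 * n1) = (d * e) * t ^ 2 := by
      rw [← heq, hm1, hn1]; ring
    exact mul_left_cancel₀ hde h
  have hm10 : 0 < m1 := by
    by_contra h
    push_neg at h
    nlinarith [hm1]
  have hn10 : 0 < n1 := by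
    by_contra h
    push_neg at h
    nlinarith [hn1]
  have c1 : IsCoprime m1 n1 :=
    (hcop.of_isCoprime_of_dvd_left ⟨d, by rw [hm1]; ring⟩).of_isCoprime_of_dvd_right
      ⟨e, by rw [hn1]; ring⟩
  obtain ⟨a, ha⟩ := Int.sq_of_isCoprime c1 key
  obtain ⟨b, hb⟩ := Int.sq_of_isCoprime c1.symm (by rw [mul_comm]; exact key)
  have ha' : m1 = a ^ 2 := by
    rcases ha with h | h
    · exact h
    · exfalso; nlinarith [sq_nonneg a]
  have hb' : n1 = b ^ 2 := by
    rcases hb with h | h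
    · exact h
    · exfalso; nlinarith [sq_nonneg b]
  have ha0 : a ≠ 0 := by intro h; rw [h] at ha'; simp at ha'; omega
  have hb0 : b ≠ 0 := by intro h; rw [h] at hb'; simp at hb'; omega
  refine ⟨|a|, |b|, abs_pos.mpr ha0, abs_pos.mpr hb0, ?_, ?_, ?_⟩
  · rw [hm1, ha', sq_abs]
  · rw [hn1, hb', sq_abs]
  · have hsq : (|a| * |b|) ^ 2 = t ^ 2 := by
      rw [mul_pow, sq_abs, sq_abs, ← ha', ← hb', key]
    have hpos : 0 < |a| * |b| := mul_pos (abs_pos.mpr ha0) (abs_pos.mpr hb0)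
    have h0 : (|a| * |b| - t) * (|a| * |b| + t) = 0 := by linear_combination hsq
    rcases mul_eq_zero.mp h0 with h | h
    · linarith
    · linarith

/-- If `q ≡ 7 (mod 8)`, `p ≡ 5 (mod 8)`, `(p/q) = 1`, and `(x, y)` is the fundamental
solution of `X² − 2pq·Y² = 1`, then `x + 1 = p·y₁²`, `x − 1 = 2q·y₂²` with `y = y₁y₂`,
hence `2 = p·y₁² − 2q·y₂²`. -/
theorem stmt_2 (p q : ℕ) (hp : p.Prime) (hq : q.Prime)
    (hq7 : q % 8 = 7) (hp5 : p % 8 = 5)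
    (hleg : @legendreSym q ⟨hq⟩ (p : ℤ) = 1)
    (x y : ℤ) (hx : 0 < x) (hy : 0 < y)
    (hpell : x ^ 2 - 2 * p * q * y ^ 2 = 1)
    (hmin : ∀ x' y' : ℤ, 0 < x' → 0 < y' → x' ^ 2 - 2 * p * q * y' ^ 2 = 1 → x ≤ x') :
    ∃ y₁ y₂ : ℤ, 0 < y₁ ∧ 0 < y₂ ∧ y = y₁ * y₂ ∧
      x + 1 = p * y₁ ^ 2 ∧ x - 1 = 2 * q * y₂ ^ 2 ∧
      (p : ℤ) * y₁ ^ 2 - 2 * q * y₂ ^ 2 = 2 := by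
  haveI hqf : Fact q.Prime := ⟨hq⟩
  haveI hpf : Fact p.Prime := ⟨hp⟩
  have hp5n : 5 ≤ p := hp5 ▸ Nat.mod_le p 8
  have hq7n : 7 ≤ q := hq7 ▸ Nat.mod_le q 8
  have hp5z : (5 : ℤ) ≤ (p : ℤ) := by exact_mod_cast hp5n
  have hq7z : (7 : ℤ) ≤ (q : ℤ) := by exact_mod_cast hq7n
  have hp0 : (0 : ℤ) < (p : ℤ) := by linarith
  have hq0 : (0 : ℤ) < (q : ℤ) := by linarith
  have hne : p ≠ q := by intro h; rw [h] at hp5; omega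
  have hp2 : p ≠ 2 := by omega
  have hq2 : q ≠ 2 := by omega
  -- x ≥ 3
  have hy2 : (1 : ℤ) ≤ y ^ 2 := by nlinarith
  have hpq35 : (35 : ℤ) ≤ (p : ℤ) * q := by nlinarith
  have hx2 : (71 : ℤ) ≤ x ^ 2 := by
    nlinarith [mul_le_mul hpq35 hy2 (by norm_num) (by positivity : (0:ℤ) ≤ (p:ℤ) * q)]
  have hx3 : 3 ≤ x := by
    by_contra hcon
    push_neg at hcon
    nlinarith [mul_nonneg (by omega : (0:ℤ) ≤ 2 - x) (le_of_lt hx)]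
  -- x is odd
  have hxodd : Odd x := by
    have h2 : Odd (x ^ 2) := ⟨(p : ℤ) * q * y ^ 2, by linarith⟩
    rcases Int.odd_pow.mp h2 with h | h
    · exact h
    · exact absurd h (by norm_num)
  obtain ⟨k, hk⟩ := hxodd
  have hk0 : 0 < k := by omega
  -- y is even
  have hpodd : Odd p := hp.odd_of_ne_two hp2
  have hqodd : Odd q := hq.odd_of_ne_two hq2
  obtain ⟨a8, ha8⟩ := Int.even_mul_succ_self k
  have hyev : (2 : ℤ) ∣ y := by
    rcases Int.even_or_odd y with he | ho
    · exact he.two_dvd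
    · exfalso
      obtain ⟨c, hc⟩ := ho
      obtain ⟨pa, hpa⟩ := hpodd
      obtain ⟨qb, hqb⟩ := hqodd
      have hpaz : (p : ℤ) = 2 * (pa:ℤ) + 1 := by rw [hpa]; push_cast; ring
      have hqbz : (q : ℤ) = 2 * (qb:ℤ) + 1 := by rw [hqb]; push_cast; ring
      have this' := hpell
      rw [hpaz, hqbz, hc, hk] at this'
      have hP : 8 * a8 = 2 * ((2 * (pa:ℤ) + 1) * (2 * (qb:ℤ) + 1) * (2 * c + 1) ^ 2) := by
        linear_combination this' - 4 * ha8
      have hodd : Odd ((2 * (pa:ℤ) + 1) * (2 * (qb:ℤ) + 1) * (2 * c + 1) ^ 2) :=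
        (Odd.mul ⟨(pa:ℤ), by ring⟩ ⟨(qb:ℤ), by ring⟩).mul (Odd.pow ⟨(c:ℤ), by ring⟩)
      obtain ⟨w0, hw0⟩ := hodd
      rw [hw0] at hP
      omega
  obtain ⟨t, hty⟩ := hyev
  have ht0 : 0 < t := by omega
  -- k * (k+1) = 2 p q t²
  have hmn : k * (k + 1) = 2 * (p : ℤ) * q * t ^ 2 := by
    have hpell' := hpell
    rw [hk, hty] at hpell'
    have h4 : 4 * (k * (k + 1)) = 4 * (2 * (p : ℤ) * q * t ^ 2) := by
      linear_combination hpell'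
    exact mul_left_cancel₀ (by norm_num : (4:ℤ) ≠ 0) h4
  have hcop : IsCoprime k (k + 1) := ⟨-1, 1, by ring⟩
  have hp' : Prime ((p : ℕ) : ℤ) := Nat.prime_iff_prime_int.mp hp
  have hq' : Prime ((q : ℕ) : ℤ) := Nat.prime_iff_prime_int.mp hq
  have h2' : Prime (2 : ℤ) := Int.prime_two
  have hd2 : (2 : ℤ) ∣ k * (k + 1) := ⟨(p:ℤ) * q * t ^ 2, by rw [hmn]; ring⟩
  have hdp : ((p:ℕ) : ℤ) ∣ k * (k + 1) := ⟨2 * (q:ℤ) * t ^ 2, by rw [hmn]; ring⟩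
  have hdq : ((q:ℕ) : ℤ) ∣ k * (k + 1) := ⟨2 * (p:ℤ) * t ^ 2, by rw [hmn]; ring⟩
  have c2p : IsCoprime (2 : ℤ) ((p:ℕ) : ℤ) := by
    rw [show (2:ℤ) = ((2:ℕ):ℤ) by norm_num]
    exact Nat.isCoprime_iff_coprime.mpr ((Nat.coprime_primes Nat.prime_two hp).mpr (by omega))
  have c2q : IsCoprime (2 : ℤ) ((q:ℕ) : ℤ) := by
    rw [show (2:ℤ) = ((2:ℕ):ℤ) by norm_num]
    exact Nat.isCoprime_iff_coprime.mpr ((Nat.coprime_primes Nat.prime_two hq).mpr (by omega))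
  have cpq : IsCoprime ((p:ℕ) : ℤ) ((q:ℕ) : ℤ) :=
    Nat.isCoprime_iff_coprime.mpr ((Nat.coprime_primes hp hq).mpr hne)
  -- quadratic residue facts
  have hq43 : q % 4 = 3 := by omega
  have hnsqm1 : ¬ IsSquare (-1 : ZMod q) := fun h =>
    (ZMod.exists_sq_eq_neg_one_iff.mp h) hq43
  have hnsq2 : ¬ IsSquare (2 : ZMod p) := fun h => by
    have := (ZMod.exists_sq_eq_two_iff hp2).mp h; omega
  have hnsqm2 : ¬ IsSquare (-2 : ZMod p) := fun h => by
    have := (ZMod.exists_sq_eq_neg_two_iff hp2).mp h; omega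
  have hpne0 : ((p : ℕ) : ZMod q) ≠ 0 := by
    rw [Ne, ZMod.natCast_eq_zero_iff]
    intro hdvd
    exact hne ((Nat.prime_dvd_prime_iff_eq hq hp).mp hdvd).symm
  have hqne0 : ((q : ℕ) : ZMod p) ≠ 0 := by
    rw [Ne, ZMod.natCast_eq_zero_iff]
    intro hdvd
    exact hne ((Nat.prime_dvd_prime_iff_eq hp hq).mp hdvd)
  have hpsq : IsSquare ((p : ℕ) : ZMod q) := by
    have h := (legendreSym.eq_one_iff q (a := ((p:ℕ):ℤ)) (by simpa using hpne0)).mp hleg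
    simpa using h
  obtain ⟨s, hs⟩ := hpsq
  have h2sq : IsSquare (2 : ZMod q) := (ZMod.exists_sq_eq_two_iff hq2).mpr (Or.inr hq7)
  obtain ⟨w, hw⟩ := h2sq
  have hqsq : IsSquare ((q : ℕ) : ZMod p) := by
    have hrec : legendreSym q (p:ℤ) = legendreSym p (q:ℤ) :=
      legendreSym.quadratic_reciprocity_one_mod_four (by omega) hq2
    have h := (legendreSym.eq_one_iff p (a := ((q:ℕ):ℤ)) (by simpa using hqne0)).mp
      (by rw [← hrec]; exact hleg)
    simpa using h
  obtain ⟨r, hr⟩ := hqsq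
  -- case analysis on which of k, k+1 each of 2, p, q divides
  rcases h2'.dvd_or_dvd hd2 with h2k | h2k1 <;>
    rcases hp'.dvd_or_dvd hdp with hpk | hpk1 <;>
      rcases hq'.dvd_or_dvd hdq with hqk | hqk1
  · -- 2pq ∣ k : minimality contradiction
    obtain ⟨u, v, hu, hv, hku, hkv, htuv⟩ :=
      split_sq_s2 k (k + 1) (2 * (p:ℤ) * (q:ℤ)) 1 t hk0 (by omega) ht0
        (by positivity) one_pos hcop
        ((c2q.mul_left cpq).mul_dvd (c2p.mul_dvd h2k hpk) hqk) (one_dvd _)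
        (by rw [hmn]; try ring)
    exfalso
    have hsol : v ^ 2 - 2 * (p:ℤ) * q * u ^ 2 = 1 := by linear_combination hku - hkv
    have hxv := hmin v u hv hu hsol
    nlinarith [hkv, hk, hx3, hv,
      mul_nonneg (by omega : (0:ℤ) ≤ v - 1) (by omega : (0:ℤ) ≤ 2*v + 1)]
  · -- k = 2p u², k+1 = q v²
    obtain ⟨u, v, hu, hv, hku, hkv, htuv⟩ :=
      split_sq_s2 k (k + 1) (2 * (p:ℤ)) ((q:ℕ):ℤ) t hk0 (by omega) ht0
        (by positivity) hq0 hcop (c2p.mul_dvd h2k hpk) hqk1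
        (by rw [hmn]; try ring)
    exfalso
    have hE : ((q:ℕ):ℤ) * v ^ 2 = 2 * (p:ℤ) * u ^ 2 + 1 := by linear_combination hku - hkv
    have h := congrArg (fun z : ℤ => (z : ZMod q)) hE
    push_cast at h
    rw [ZMod.natCast_self] at h
    have hzm : 2 * ((p:ℕ) : ZMod q) * ((u : ZMod q)) ^ 2 + 1 = 0 := by linear_combination -h
    exact hnsqm1 ⟨w * s * (u : ZMod q), by
      linear_combination (-1 : ZMod q) * hzm + (u : ZMod q)^2 * ((p:ℕ):ZMod q) * hw
        + (u : ZMod q)^2 * w * w * hs⟩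
  · -- k = 2q u², k+1 = p v²
    obtain ⟨u, v, hu, hv, hku, hkv, htuv⟩ :=
      split_sq_s2 k (k + 1) (2 * (q:ℤ)) ((p:ℕ):ℤ) t hk0 (by omega) ht0
        (by positivity) hp0 hcop (c2q.mul_dvd h2k hqk) hpk1
        (by rw [hmn]; try ring)
    exfalso
    have hE : ((p:ℕ):ℤ) * v ^ 2 = 2 * (q:ℤ) * u ^ 2 + 1 := by linear_combination hku - hkv
    have h := congrArg (fun z : ℤ => (z : ZMod p)) hE
    push_cast at h
    rw [ZMod.natCast_self] at h
    have hzm : 2 * ((q:ℕ) : ZMod p) * ((u : ZMod p)) ^ 2 + 1 = 0 := by linear_combination -h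
    exact hnsqm2 ⟨2 * r * (u : ZMod p), by
      linear_combination (-2 : ZMod p) * hzm + 4 * (u : ZMod p)^2 * hr⟩
  · -- k = 2 u², k+1 = pq v²
    obtain ⟨u, v, hu, hv, hku, hkv, htuv⟩ :=
      split_sq_s2 k (k + 1) 2 (((p:ℕ):ℤ) * ((q:ℕ):ℤ)) t hk0 (by omega) ht0
        (by norm_num) (by positivity) hcop h2k (cpq.mul_dvd hpk1 hqk1)
        (by rw [hmn]; try ring)
    exfalso
    have hE : ((p:ℕ):ℤ) * ((q:ℕ):ℤ) * v ^ 2 = 2 * u ^ 2 + 1 := by linear_combination hku - hkv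
    have h := congrArg (fun z : ℤ => (z : ZMod p)) hE
    push_cast at h
    rw [ZMod.natCast_self] at h
    have hzm : 2 * ((u : ZMod p)) ^ 2 + 1 = 0 := by linear_combination -h
    exact hnsqm2 ⟨2 * (u : ZMod p), by linear_combination (-2 : ZMod p) * hzm⟩
  · -- k = pq u², k+1 = 2 v²
    obtain ⟨u, v, hu, hv, hku, hkv, htuv⟩ :=
      split_sq_s2 k (k + 1) (((p:ℕ):ℤ) * ((q:ℕ):ℤ)) 2 t hk0 (by omega) ht0
        (by positivity) (by norm_num) hcop (cpq.mul_dvd hpk hqk) h2k1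
        (by rw [hmn]; try ring)
    exfalso
    have hE : 2 * v ^ 2 = ((p:ℕ):ℤ) * ((q:ℕ):ℤ) * u ^ 2 + 1 := by linear_combination hku - hkv
    have h := congrArg (fun z : ℤ => (z : ZMod p)) hE
    push_cast at h
    rw [ZMod.natCast_self] at h
    have hzm : 2 * ((v : ZMod p)) ^ 2 - 1 = 0 := by linear_combination h
    exact hnsq2 ⟨2 * (v : ZMod p), by linear_combination (-2 : ZMod p) * hzm⟩
  · -- k = p u², k+1 = 2q v²
    obtain ⟨u, v, hu, hv, hku, hkv, htuv⟩ :=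
      split_sq_s2 k (k + 1) ((p:ℕ):ℤ) (2 * ((q:ℕ):ℤ)) t hk0 (by omega) ht0
        hp0 (by positivity) hcop hpk (c2q.mul_dvd h2k1 hqk1)
        (by rw [hmn]; try ring)
    exfalso
    have hE : 2 * ((q:ℕ):ℤ) * v ^ 2 = ((p:ℕ):ℤ) * u ^ 2 + 1 := by linear_combination hku - hkv
    have h := congrArg (fun z : ℤ => (z : ZMod q)) hE
    push_cast at h
    rw [ZMod.natCast_self] at h
    have hzm : ((p:ℕ) : ZMod q) * ((u : ZMod q)) ^ 2 + 1 = 0 := by linear_combination -h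
    exact hnsqm1 ⟨s * (u : ZMod q), by
      linear_combination (-1 : ZMod q) * hzm + (u : ZMod q)^2 * hs⟩
  · -- GOOD case: k = q u², k+1 = 2p v²
    obtain ⟨u, v, hu, hv, hku, hkv, htuv⟩ :=
      split_sq_s2 k (k + 1) ((q:ℕ):ℤ) (2 * ((p:ℕ):ℤ)) t hk0 (by omega) ht0
        hq0 (by positivity) hcop hqk (c2p.mul_dvd h2k1 hpk1)
        (by rw [hmn]; try ring)
    refine ⟨2 * v, u, by positivity, hu, ?_, ?_, ?_, ?_⟩
    · rw [hty, htuv]; ring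
    · linear_combination hk + 2 * hkv
    · linear_combination hk + 2 * hku
    · linear_combination 2 * hku - 2 * hkv
  · -- k = u², k+1 = 2pq v²
    obtain ⟨u, v, hu, hv, hku, hkv, htuv⟩ :=
      split_sq_s2 k (k + 1) 1 (2 * ((p:ℕ):ℤ) * ((q:ℕ):ℤ)) t hk0 (by omega) ht0
        one_pos (by positivity) hcop (one_dvd _)
        ((c2q.mul_left cpq).mul_dvd (c2p.mul_dvd h2k1 hpk1) hqk1)
        (by rw [hmn]; try ring)
    exfalso
    have hE : 2 * ((p:ℕ):ℤ) * ((q:ℕ):ℤ) * v ^ 2 = u ^ 2 + 1 := by linear_combination hku - hkv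
    have h := congrArg (fun z : ℤ => (z : ZMod q)) hE
    push_cast at h
    rw [ZMod.natCast_self] at h
    have hzm : ((u : ZMod q)) ^ 2 + 1 = 0 := by linear_combination -h
    exact hnsqm1 ⟨(u : ZMod q), by linear_combination (-1 : ZMod q) * hzm⟩
end

section
/- Let p and q be primes with q ≡ 7 (mod 8), p ≡ 5 (mod 8), and (p/q) = 1. If a, b are positive integers with a² − pq·b² = 1 giving the fundamental solution of norm 1, then 2p(a+1) is a perfect square; moreover there exist positive integers b₁, b₂ with b = 2·b₁·b₂, a + 1 = 2p·b₁², a − 1 = 2q·b₂², and hence 1 = p·b₁² − q·b₂². -/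
private lemma odd_sq_mod8 {u : ℤ} (h : Odd u) : u ^ 2 % 8 = 1 := by
  obtain ⟨k, rfl⟩ := h
  obtain ⟨m, hm⟩ := Int.even_mul_succ_self k
  have h1 : (2 * k + 1) ^ 2 = 4 * (k * (k + 1)) + 1 := by ring
  omega

/-- coprime positive factors of a square are squares, with matching product -/
private lemma sqsq {k l c : ℤ} (hk : 0 < k) (hl : 0 < l) (hc : 0 < c)
    (hcop : IsCoprime k l) (h : k * l = c ^ 2) :
    ∃ u v : ℤ, 0 < u ∧ 0 < v ∧ k = u ^ 2 ∧ l = v ^ 2 ∧ c = u * v := by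
  obtain ⟨u0, hu0⟩ := Int.sq_of_isCoprime hcop h
  obtain ⟨v0, hv0⟩ := Int.sq_of_isCoprime hcop.symm (by rw [mul_comm]; exact h)
  have hk2 : k = u0 ^ 2 := by
    rcases hu0 with h' | h'
    · exact h'
    · nlinarith [sq_nonneg u0]
  have hl2 : l = v0 ^ 2 := by
    rcases hv0 with h' | h'
    · exact h'
    · nlinarith [sq_nonneg v0]
  have hu0ne : u0 ≠ 0 := by rintro rfl; simp at hk2; omega
  have hv0ne : v0 ≠ 0 := by rintro rfl; simp at hl2; omega
  refine ⟨|u0|, |v0|, abs_pos.mpr hu0ne, abs_pos.mpr hv0ne, by rw [hk2, sq_abs],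
    by rw [hl2, sq_abs], ?_⟩
  have hcsq : c ^ 2 = (|u0| * |v0|) ^ 2 := by
    rw [mul_pow, sq_abs, sq_abs, ← hk2, ← hl2, h]
  have habs : 0 < |u0| * |v0| := mul_pos (abs_pos.mpr hu0ne) (abs_pos.mpr hv0ne)
  nlinarith [hcsq, hc, habs]

/-- factorization of a coprime product equal to `P*Q*c²` for distinct primes -/
private lemma keyfac {P Q m n c : ℤ} (hp : Prime P) (hq : Prime Q)
    (hPQ : IsCoprime P Q) (hP : 0 < P) (hQ : 0 < Q)
    (hm : 0 < m) (hn : 0 < n) (hc : 0 < c)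
    (hcop : IsCoprime m n) (h : m * n = P * Q * c ^ 2) :
    ∃ u v : ℤ, 0 < u ∧ 0 < v ∧ c = u * v ∧
      ((m = u ^ 2 ∧ n = P * Q * v ^ 2) ∨ (m = P * Q * u ^ 2 ∧ n = v ^ 2) ∨
       (m = P * u ^ 2 ∧ n = Q * v ^ 2) ∨ (m = Q * u ^ 2 ∧ n = P * v ^ 2)) := by
  have hPQne : P * Q ≠ 0 := by positivity
  have hPdvd : P ∣ m * n := ⟨Q * c ^ 2, by rw [h]; ring⟩
  have hQdvd : Q ∣ m * n := ⟨P * c ^ 2, by rw [h]; ring⟩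
  rcases hp.dvd_mul.mp hPdvd with hPm | hPn <;> rcases hq.dvd_mul.mp hQdvd with hQm | hQn
  · -- P ∣ m, Q ∣ m
    obtain ⟨k, hk⟩ := hPQ.mul_dvd hPm hQm
    have hkpos : 0 < k := by
      by_contra hcon
      push_neg at hcon
      have := mul_nonpos_of_nonneg_of_nonpos (mul_pos hP hQ).le hcon
      rw [hk] at hm; linarith
    have hkl : k * n = c ^ 2 := by
      apply mul_left_cancel₀ hPQne
      rw [← h, hk]; ring
    have hcop' : IsCoprime k n := hcop.of_isCoprime_of_dvd_left ⟨P * Q, by rw [hk]; ring⟩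
    obtain ⟨u, v, hu, hv, hk2, hn2, hc2⟩ := sqsq hkpos hn hc hcop' hkl
    exact ⟨u, v, hu, hv, hc2, Or.inr (Or.inl ⟨by rw [hk, hk2], hn2⟩)⟩
  · -- P ∣ m, Q ∣ n
    obtain ⟨k, hk⟩ := hPm
    obtain ⟨l, hl⟩ := hQn
    have hkpos : 0 < k := by
      by_contra hcon; push_neg at hcon
      have := mul_nonpos_of_nonneg_of_nonpos hP.le hcon
      rw [hk] at hm; linarith
    have hlpos : 0 < l := by
      by_contra hcon; push_neg at hcon
      have := mul_nonpos_of_nonneg_of_nonpos hQ.le hcon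
      rw [hl] at hn; linarith
    have hkl : k * l = c ^ 2 := by
      apply mul_left_cancel₀ hPQne
      rw [← h, hk, hl]; ring
    have hcop' : IsCoprime k l :=
      (hcop.of_isCoprime_of_dvd_left ⟨P, by rw [hk]; ring⟩).of_isCoprime_of_dvd_right
        ⟨Q, by rw [hl]; ring⟩
    obtain ⟨u, v, hu, hv, hk2, hl2, hc2⟩ := sqsq hkpos hlpos hc hcop' hkl
    exact ⟨u, v, hu, hv, hc2, Or.inr (Or.inr (Or.inl ⟨by rw [hk, hk2], by rw [hl, hl2]⟩))⟩
  · -- P ∣ n, Q ∣ m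
    obtain ⟨k, hk⟩ := hQm
    obtain ⟨l, hl⟩ := hPn
    have hkpos : 0 < k := by
      by_contra hcon; push_neg at hcon
      have := mul_nonpos_of_nonneg_of_nonpos hQ.le hcon
      rw [hk] at hm; linarith
    have hlpos : 0 < l := by
      by_contra hcon; push_neg at hcon
      have := mul_nonpos_of_nonneg_of_nonpos hP.le hcon
      rw [hl] at hn; linarith
    have hkl : k * l = c ^ 2 := by
      apply mul_left_cancel₀ hPQne
      rw [← h, hk, hl]; ring
    have hcop' : IsCoprime k l :=
      (hcop.of_isCoprime_of_dvd_left ⟨Q, by rw [hk]; ring⟩).of_isCoprime_of_dvd_right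
        ⟨P, by rw [hl]; ring⟩
    obtain ⟨u, v, hu, hv, hk2, hl2, hc2⟩ := sqsq hkpos hlpos hc hcop' hkl
    exact ⟨u, v, hu, hv, hc2, Or.inr (Or.inr (Or.inr ⟨by rw [hk, hk2], by rw [hl, hl2]⟩))⟩
  · -- P ∣ n, Q ∣ n
    obtain ⟨l, hl⟩ := hPQ.mul_dvd hPn hQn
    have hlpos : 0 < l := by
      by_contra hcon; push_neg at hcon
      have := mul_nonpos_of_nonneg_of_nonpos (mul_pos hP hQ).le hcon
      rw [hl] at hn; linarith
    have hkl : m * l = c ^ 2 := by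
      apply mul_left_cancel₀ hPQne
      rw [← h, hl]; ring
    have hcop' : IsCoprime m l := hcop.of_isCoprime_of_dvd_right ⟨P * Q, by rw [hl]; ring⟩
    obtain ⟨u, v, hu, hv, hm2, hl2, hc2⟩ := sqsq hm hlpos hc hcop' hkl
    exact ⟨u, v, hu, hv, hc2, Or.inl ⟨hm2, by rw [hl, hl2]⟩⟩

/-- If `q ≡ 7 (mod 8)`, `p ≡ 5 (mod 8)`, `(p/q) = 1`, and `(a, b)` is the fundamental
solution of `X² − pq·Y² = 1`, then `2p(a+1)` is a perfect square; moreover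
`a + 1 = 2p·b₁²`, `a − 1 = 2q·b₂²` with `b = 2b₁b₂`, hence `1 = p·b₁² − q·b₂²`. -/
theorem stmt_3 (p q : ℕ) (hp : p.Prime) (hq : q.Prime)
    (hq7 : q % 8 = 7) (hp5 : p % 8 = 5)
    (hleg : @legendreSym q ⟨hq⟩ (p : ℤ) = 1)
    (a b : ℤ) (ha : 0 < a) (hb : 0 < b)
    (hpell : a ^ 2 - p * q * b ^ 2 = 1)
    (hmin : ∀ a' b' : ℤ, 0 < a' → 0 < b' → a' ^ 2 - p * q * b' ^ 2 = 1 → a ≤ a') :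
    (∃ k : ℤ, 2 * p * (a + 1) = k ^ 2) ∧
    ∃ b₁ b₂ : ℤ, 0 < b₁ ∧ 0 < b₂ ∧ b = 2 * b₁ * b₂ ∧
      a + 1 = 2 * p * b₁ ^ 2 ∧ a - 1 = 2 * q * b₂ ^ 2 ∧
      (p : ℤ) * b₁ ^ 2 - q * b₂ ^ 2 = 1 := by
  haveI : Fact p.Prime := ⟨hp⟩
  haveI : Fact q.Prime := ⟨hq⟩
  have hp2 : p ≠ 2 := by omega
  have hq2 : q ≠ 2 := by omega
  have hne : p ≠ q := by omega
  have hPp : Prime (p : ℤ) := by rw [Int.prime_iff_natAbs_prime]; simpa using hp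
  have hPq : Prime (q : ℤ) := by rw [Int.prime_iff_natAbs_prime]; simpa using hq
  have hPQcop : IsCoprime (p : ℤ) (q : ℤ) := by
    rw [Nat.isCoprime_iff_coprime]; exact (Nat.coprime_primes hp hq).mpr hne
  have hPpos : (0 : ℤ) < p := by exact_mod_cast hp.pos
  have hQpos : (0 : ℤ) < q := by exact_mod_cast hq.pos
  have hp5' : (p : ℤ) % 8 = 5 := by omega
  have hq7' : (q : ℤ) % 8 = 7 := by omega
  have hpq8 : ((p : ℤ) * q) % 8 = 3 := by
    rw [Int.mul_emod, hp5', hq7']; norm_num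
  -- quadratic residue facts
  have hpq0 : (((p : ℤ) : ZMod q)) ≠ 0 := by
    rw [Int.cast_natCast, Ne, ZMod.natCast_eq_zero_iff]
    intro hdvd
    exact hne ((Nat.prime_dvd_prime_iff_eq hq hp).mp hdvd).symm
  have hsq_p_q : IsSquare ((p : ZMod q)) := by
    have := (legendreSym.eq_one_iff q hpq0).mp hleg
    simpa using this
  have hsq_q_p : IsSquare ((q : ZMod p)) :=
    (ZMod.exists_sq_eq_prime_iff_of_mod_four_eq_one (by omega) hq2).mpr hsq_p_q
  have hnsq_neg1_q : ¬ IsSquare (-1 : ZMod q) := by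
    rw [ZMod.exists_sq_eq_neg_one_iff]; omega
  have hnsq_2_p : ¬ IsSquare (2 : ZMod p) := by
    rw [ZMod.exists_sq_eq_two_iff hp2]; omega
  have hsq_neg1_p : IsSquare (-1 : ZMod p) := by
    rw [ZMod.exists_sq_eq_neg_one_iff]; omega
  -- basic size facts
  have hp5n : (5 : ℤ) ≤ p := by omega
  have hq7n : (7 : ℤ) ≤ q := by omega
  have hb2 : 1 ≤ b ^ 2 := by nlinarith
  have hpq35 : (35 : ℤ) ≤ (p : ℤ) * q := by nlinarith
  have h35 : (35 : ℤ) * 1 ≤ (p : ℤ) * q * b ^ 2 :=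
    mul_le_mul hpq35 hb2 (by norm_num) (by positivity)
  have ha3 : 3 ≤ a := by nlinarith
  rcases Int.even_or_odd a with haev | haodd
  · -- a even : derive a contradiction
    exfalso
    obtain ⟨j, rfl⟩ := haev
    -- b is odd
    have hbodd : Odd b := by
      rcases Int.even_or_odd b with ⟨k, rfl⟩ | hbo
      · have h4 : 4 * j ^ 2 - 4 * ((p : ℤ) * q * k ^ 2) = 1 := by linear_combination hpell
        generalize j ^ 2 = X at h4
        generalize (p : ℤ) * q * k ^ 2 = Y at h4
        omega
      · exact hbo
    have hcopmn : IsCoprime (j + j + 1) (j + j - 1) := ⟨-(j - 1), j, by ring⟩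
    have hprod : (j + j + 1) * (j + j - 1) = (p : ℤ) * q * b ^ 2 := by
      linear_combination hpell
    obtain ⟨u, v, hu, hv, hcb, hcases⟩ :=
      keyfac hPp hPq hPQcop hPpos hQpos (by linarith) (by linarith) hb hcopmn hprod
    obtain ⟨huodd, hvodd⟩ := Int.odd_mul.mp (hcb ▸ hbodd)
    have hu8 := odd_sq_mod8 huodd
    have hv8 := odd_sq_mod8 hvodd
    rcases hcases with ⟨h1, h2⟩ | ⟨h1, h2⟩ | ⟨h1, h2⟩ | ⟨h1, h2⟩
    · -- a+1 = u², a-1 = pq v² : u² - pq v² = 2, impossible mod 8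
      have heq : u ^ 2 - (p : ℤ) * q * v ^ 2 = 2 := by linear_combination h2 - h1
      have hY : ((p : ℤ) * q * v ^ 2) % 8 = 3 := by
        rw [Int.mul_emod, Int.mul_emod (p : ℤ) q, hp5', hq7', hv8]; norm_num
      generalize u ^ 2 = X at heq hu8
      generalize (p : ℤ) * q * v ^ 2 = Y at heq hY
      omega
    · -- a+1 = pq u², a-1 = v² : v² ≡ -2 mod p, impossible
      have heq : (p : ℤ) * q * u ^ 2 - v ^ 2 = 2 := by linear_combination h2 - h1
      have hcast : ((q : ZMod p)) * (v : ZMod p) ^ 2 * 0 - ((v : ZMod p)) ^ 2 = 2 → True :=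
        fun _ => trivial
      have hz : ((v : ℤ) : ZMod p) ^ 2 = -2 := by
        have := congrArg (fun z : ℤ => (z : ZMod p)) heq
        push_cast at this
        rw [ZMod.natCast_self] at this
        simp at this
        linear_combination -this
      have hsq : IsSquare (-2 : ZMod p) := ⟨((v : ℤ) : ZMod p), by rw [← hz]; ring⟩
      apply hnsq_2_p
      have := hsq.mul hsq_neg1_p
      simpa using this
    · -- a+1 = p u², a-1 = q v² : p u² - q v² = 2, impossible mod 8
      have heq : (p : ℤ) * u ^ 2 - (q : ℤ) * v ^ 2 = 2 := by linear_combination h2 - h1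
      have hX : ((p : ℤ) * u ^ 2) % 8 = 5 := by rw [Int.mul_emod, hp5', hu8]; norm_num
      have hY : ((q : ℤ) * v ^ 2) % 8 = 7 := by rw [Int.mul_emod, hq7', hv8]; norm_num
      generalize (p : ℤ) * u ^ 2 = X at heq hX
      generalize (q : ℤ) * v ^ 2 = Y at heq hY
      omega
    · -- a+1 = q u², a-1 = p v² : q u² ≡ 2 mod p, so 2 is a square mod p, impossible
      have heq : (q : ℤ) * u ^ 2 - (p : ℤ) * v ^ 2 = 2 := by linear_combination h2 - h1
      have hz : (q : ZMod p) * ((u : ℤ) : ZMod p) ^ 2 = 2 := by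
        have := congrArg (fun z : ℤ => (z : ZMod p)) heq
        push_cast at this
        rw [ZMod.natCast_self] at this
        simpa using this
      obtain ⟨t, ht⟩ := hsq_q_p
      apply hnsq_2_p
      exact ⟨t * ((u : ℤ) : ZMod p), by rw [← hz, ht]; ring⟩
  · -- a odd : main case
    obtain ⟨j, rfl⟩ := haodd
    have hj1 : 1 ≤ j := by omega
    -- b is even
    have hbev : Even b := by
      rcases Int.even_or_odd b with hbe | hbo
      · exact hbe
      · exfalso
        have hb8 := odd_sq_mod8 hbo
        obtain ⟨m, hm⟩ := Int.even_mul_succ_self j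
        have h4 : 4 * (j * (j + 1)) = (p : ℤ) * q * b ^ 2 := by linear_combination hpell
        have hY : ((p : ℤ) * q * b ^ 2) % 8 = 3 := by
          rw [Int.mul_emod, Int.mul_emod (p : ℤ) q, hp5', hq7', hb8]; norm_num
        generalize hXd : (p : ℤ) * q * b ^ 2 = Y at h4 hY
        omega
    obtain ⟨c, rfl⟩ := hbev
    have hcpos : 0 < c := by omega
    have hprod : (j + 1) * j = (p : ℤ) * q * c ^ 2 := by
      apply mul_left_cancel₀ (show (4 : ℤ) ≠ 0 by norm_num)
      linear_combination hpell
    have hcopmn : IsCoprime (j + 1) j := ⟨1, -1, by ring⟩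
    obtain ⟨u, v, hu, hv, hcb, hcases⟩ :=
      keyfac hPp hPq hPQcop hPpos hQpos (by omega) (by omega) hcpos hcopmn hprod
    rcases hcases with ⟨h1, h2⟩ | ⟨h1, h2⟩ | ⟨h1, h2⟩ | ⟨h1, h2⟩
    · -- j+1 = u², j = pq v² : smaller solution, contradicts minimality
      exfalso
      have heq : u ^ 2 - (p : ℤ) * q * v ^ 2 = 1 := by linear_combination h2 - h1
      have := hmin u v hu hv heq
      nlinarith [h1, hj1]
    · -- j+1 = pq u², j = v² : v² ≡ -1 mod q, impossible
      exfalso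
      have heq : v ^ 2 - (p : ℤ) * q * u ^ 2 = -1 := by linear_combination h1 - h2
      have hz : ((v : ℤ) : ZMod q) ^ 2 = -1 := by
        have := congrArg (fun z : ℤ => (z : ZMod q)) heq
        push_cast at this
        rw [ZMod.natCast_self] at this
        simpa using this
      exact hnsq_neg1_q ⟨((v : ℤ) : ZMod q), by rw [← hz]; ring⟩
    · -- j+1 = p u², j = q v² : the desired conclusion
      constructor
      · exact ⟨2 * p * u, by rw [show 2 * j + 1 + 1 = 2 * (j + 1) by ring, h1]; ring⟩
      · refine ⟨u, v, hu, hv, by rw [hcb]; ring, by rw [show 2 * j + 1 + 1 = 2 * (j + 1) by ring, h1]; ring,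
          by rw [show 2 * j + 1 - 1 = 2 * j by ring, h2]; ring, by linear_combination h2 - h1⟩
    · -- j+1 = q u², j = p v² : -p v² ≡ 1 mod q, so -1 is a square mod q, impossible
      exfalso
      have heq : (q : ℤ) * u ^ 2 - (p : ℤ) * v ^ 2 = 1 := by linear_combination h2 - h1
      have hz : (p : ZMod q) * ((v : ℤ) : ZMod q) ^ 2 = -1 := by
        have := congrArg (fun z : ℤ => (z : ZMod q)) heq
        push_cast at this
        rw [ZMod.natCast_self] at this
        simp at this
        linear_combination -this
      obtain ⟨t, ht⟩ := hsq_p_q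
      exact hnsq_neg1_q ⟨t * ((v : ℤ) : ZMod q), by rw [← hz, ht]; ring⟩
end

section
/- Let q be a prime with q ≡ 7 (mod 8). If c, d are positive integers with c² − 2q·d² = 1 giving the fundamental solution, then c + 1 is a perfect square; moreover there exist positive integers d₁, d₂ with d = d₁·d₂, c + 1 = d₁², c − 1 = 2q·d₂², and hence 2 = d₁² − 2q·d₂². -/
private lemma aux_sq {a b e : ℤ} (h : IsCoprime a b) (heq : a * b = e ^ 2) (ha : 0 ≤ a) :
    ∃ s, 0 ≤ s ∧ a = s ^ 2 := by
  obtain ⟨s, hs | hs⟩ := Int.sq_of_isCoprime h heq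
  · exact ⟨|s|, abs_nonneg _, by rw [hs, sq_abs]⟩
  · refine ⟨0, le_refl _, ?_⟩; nlinarith [sq_nonneg s]

private lemma aux_pos {a x y : ℤ} (h : a = x * y) (hx : 0 < x) (ha : 0 < a) : 0 < y := by
  rcases le_or_gt y 0 with hy | hy
  · nlinarith [mul_nonpos_of_nonneg_of_nonpos (le_of_lt hx) hy]
  · exact hy

private lemma aux_pos_sq {s v : ℤ} (hs0 : 0 ≤ s) (hv : 0 < v) (h : v = s ^ 2) : 0 < s := by
  rcases hs0.lt_or_eq with h' | h'
  · exact h'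
  · exfalso; rw [← h'] at h; simp at h; omega

/-- If `q ≡ 7 (mod 8)` and `(c, d)` is the fundamental solution of `X² − 2q·Y² = 1`,
then `c + 1` is a perfect square; moreover `c + 1 = d₁²`, `c − 1 = 2q·d₂²` with
`d = d₁d₂`, hence `2 = d₁² − 2q·d₂²`. -/
theorem stmt_4 (q : ℕ) (hq : q.Prime) (hq7 : q % 8 = 7)
    (c d : ℤ) (hc : 0 < c) (hd : 0 < d)
    (hpell : c ^ 2 - 2 * q * d ^ 2 = 1)
    (hmin : ∀ c' d' : ℤ, 0 < c' → 0 < d' → c' ^ 2 - 2 * q * d' ^ 2 = 1 → c ≤ c') :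
    (∃ k : ℤ, c + 1 = k ^ 2) ∧
    ∃ d₁ d₂ : ℤ, 0 < d₁ ∧ 0 < d₂ ∧ d = d₁ * d₂ ∧
      c + 1 = d₁ ^ 2 ∧ c - 1 = 2 * q * d₂ ^ 2 ∧
      d₁ ^ 2 - 2 * q * d₂ ^ 2 = 2 := by
  haveI : Fact q.Prime := ⟨hq⟩
  have hqP : Prime (q : ℤ) := Int.prime_iff_natAbs_prime.mpr (by simpa using hq)
  have hq7' : (7 : ℤ) ≤ (q : ℤ) := by exact_mod_cast (by omega : 7 ≤ q)
  have hq2 : ¬ (2 : ℤ) ∣ (q : ℤ) := by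
    intro h
    have : (2 : ℕ) ∣ q := by exact_mod_cast h
    omega
  have hqZ2 : ¬ (q : ℤ) ∣ 2 := fun h => by
    have := Int.le_of_dvd (by norm_num) h; linarith
  -- c is odd
  rcases Int.even_or_odd c with ⟨k, hk⟩ | ⟨k, hk⟩
  · exfalso
    have h2 : (2 : ℤ) ∣ 1 := ⟨2 * k ^ 2 - (q : ℤ) * d ^ 2, by
      rw [← hpell, hk]; ring⟩
    norm_num at h2
  -- c = 2k+1
  have hc4 : 4 ≤ c := by nlinarith [sq_nonneg d, sq_nonneg (d - 1)]
  have hk1 : 1 ≤ k := by omega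
  -- d is even
  have hqd2 : (q : ℤ) * d ^ 2 = 2 * (k ^ 2 + k) := by nlinarith
  have h2d : (2 : ℤ) ∣ d := by
    have h2d2 : (2 : ℤ) ∣ (q : ℤ) * d ^ 2 := ⟨k ^ 2 + k, hqd2⟩
    rcases (Int.prime_two.dvd_mul.mp h2d2) with h | h
    · exact absurd h hq2
    · exact Int.prime_two.dvd_of_dvd_pow h
  obtain ⟨e, he⟩ := h2d
  have he1 : 1 ≤ e := by omega
  -- key factorization : (k+1) * k = 2q e²
  have hkey : (k + 1) * k = 2 * (q : ℤ) * e ^ 2 := by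
    have h4 : 2 * ((k + 1) * k) = 2 * (2 * (q : ℤ) * e ^ 2) := by
      rw [he] at hqd2; linear_combination -hqd2
    exact mul_left_cancel₀ two_ne_zero h4
  have hcop : IsCoprime (k + 1 : ℤ) k := ⟨1, -1, by ring⟩
  have hq_dvd : (q : ℤ) ∣ (k + 1) * k := ⟨2 * e ^ 2, by linarith [hkey]⟩
  have h2_dvd : (2 : ℤ) ∣ (k + 1) * k := ⟨(q : ℤ) * e ^ 2, by linarith [hkey]⟩
  rcases hqP.dvd_mul.mp hq_dvd with hqa | hqb
  · -- q ∣ k+1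
    obtain ⟨m, hm⟩ := hqa
    rcases Int.prime_two.dvd_mul.mp h2_dvd with h2a | h2b
    · -- 2 ∣ k+1 : k+1 = 2q m', contradiction : -1 square mod q
      exfalso
      have h2m : (2 : ℤ) ∣ m := by
        rcases h2a with ⟨u, hu⟩
        rcases Int.prime_two.dvd_mul.mp (⟨u, by rw [← hu, hm]⟩ : (2:ℤ) ∣ (q:ℤ) * m) with h | h
        · exact absurd h hq2
        · exact h
      obtain ⟨m', hm'⟩ := h2m
      have hmb : m' * k = e ^ 2 := by
        have h2q : (2 : ℤ) * q ≠ 0 := by positivity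
        have h4 : 2 * (q:ℤ) * (m' * k) = 2 * (q:ℤ) * e ^ 2 := by
          linear_combination hkey - k * hm - (q:ℤ) * k * hm'
        exact mul_left_cancel₀ h2q h4
      have hcop' : IsCoprime (m' : ℤ) k :=
        hcop.of_isCoprime_of_dvd_left ⟨2 * q, by linear_combination hm + (q:ℤ) * hm'⟩
      have hm'pos : 0 < m' := aux_pos (a := k + 1) (y := m') (by linear_combination hm + (q:ℤ) * hm')
        (show (0:ℤ) < 2 * q by positivity) (by linarith)
      obtain ⟨s, _, hs⟩ := aux_sq hcop' hmb (by linarith)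
      obtain ⟨t, _, ht⟩ := aux_sq hcop'.symm (by rw [mul_comm]; exact hmb) (by linarith)
      have heq : 2 * (q : ℤ) * s ^ 2 - t ^ 2 = 1 := by
        linear_combination -hm - (q:ℤ) * hm' - 2 * (q:ℤ) * hs + ht
      have hcast := congrArg (fun z : ℤ => (z : ZMod q)) heq
      push_cast [ZMod.natCast_self] at hcast
      have : IsSquare (-1 : ZMod q) := ⟨((t : ℤ) : ZMod q), by linear_combination hcast⟩
      rw [ZMod.exists_sq_eq_neg_one_iff] at this
      omega
    · -- 2 ∣ k : k+1 = q m, k = 2 n, contradiction : -2 square mod q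
      exfalso
      obtain ⟨n, hn⟩ := h2b
      have hmn : m * n = e ^ 2 := by
        have h2q : (2 : ℤ) * q ≠ 0 := by positivity
        have h4 : 2 * (q:ℤ) * (m * n) = 2 * (q:ℤ) * e ^ 2 := by
          linear_combination hkey - k * hm - (q:ℤ) * m * hn
        exact mul_left_cancel₀ h2q h4
      have hcopm : IsCoprime (m : ℤ) n := by
        have h1 : IsCoprime (m : ℤ) k := hcop.of_isCoprime_of_dvd_left ⟨q, by linear_combination hm⟩
        exact h1.of_isCoprime_of_dvd_right ⟨2, by linear_combination hn⟩
      have hmpos : 0 < m := aux_pos hm (by positivity : (0:ℤ) < q) (by linarith)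
      obtain ⟨s, _, hs⟩ := aux_sq hcopm hmn (by linarith)
      obtain ⟨t, _, ht⟩ := aux_sq hcopm.symm (by rw [mul_comm]; exact hmn)
        (le_of_lt (aux_pos hn two_pos (by linarith)))
      have heq : (q : ℤ) * s ^ 2 - 2 * t ^ 2 = 1 := by
        linear_combination -hm + hn - (q:ℤ) * hs + 2 * ht
      have hcast := congrArg (fun z : ℤ => (z : ZMod q)) heq
      push_cast [ZMod.natCast_self] at hcast
      have : IsSquare (-2 : ZMod q) := ⟨2 * ((t : ℤ) : ZMod q), by linear_combination 2 * hcast⟩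
      rw [ZMod.exists_sq_eq_neg_two_iff (by omega : q ≠ 2)] at this
      omega
  · -- q ∣ k
    obtain ⟨m, hm⟩ := hqb
    rcases Int.prime_two.dvd_mul.mp h2_dvd with h2a | h2b
    · -- GOOD CASE : k+1 = 2 s², k = q t²
      obtain ⟨n, hn⟩ := h2a
      have hnm : n * m = e ^ 2 := by
        have h2q : (2 : ℤ) * q ≠ 0 := by positivity
        have h4 : 2 * (q:ℤ) * (n * m) = 2 * (q:ℤ) * e ^ 2 := by
          linear_combination hkey - k * hn - 2 * n * hm
        exact mul_left_cancel₀ h2q h4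
      have hcopn : IsCoprime (n : ℤ) m := by
        have h1 : IsCoprime (n : ℤ) k := hcop.of_isCoprime_of_dvd_left ⟨2, by linear_combination hn⟩
        exact h1.of_isCoprime_of_dvd_right ⟨q, by linear_combination hm⟩
      have hnpos : 0 < n := aux_pos hn two_pos (by linarith)
      have hmpos : 0 < m := aux_pos hm (by positivity : (0:ℤ) < q) (by linarith)
      obtain ⟨s, hs0, hs⟩ := aux_sq hcopn hnm (by linarith)
      obtain ⟨t, ht0, ht⟩ := aux_sq hcopn.symm (by rw [mul_comm]; exact hnm) (by linarith)
      have hsp : 0 < s := aux_pos_sq hs0 hnpos hs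
      have htp : 0 < t := aux_pos_sq ht0 hmpos ht
      have hc1 : c + 1 = (2 * s) ^ 2 := by linear_combination hk + 2 * hn + 4 * hs
      have hc2 : c - 1 = 2 * (q : ℤ) * t ^ 2 := by
        linear_combination hk + 2 * hm + 2 * (q:ℤ) * ht
      have hde : d = 2 * s * t := by
        have hest : (e - s * t) * (e + s * t) = 0 := by
          linear_combination -hnm + m * hs + s ^ 2 * ht
        rcases mul_eq_zero.mp hest with h0 | h0
        · rw [he]; have : e = s * t := by linarith
          rw [this]; ring
        · exfalso; nlinarith [mul_pos hsp htp]
      exact ⟨⟨2 * s, hc1⟩, 2 * s, t, by positivity, htp, hde, hc1, hc2, by linarith⟩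
    · -- k+1 = s², k = 2q t² : contradicts minimality
      exfalso
      obtain ⟨n, hn⟩ := h2b
      have hqn : (q : ℤ) ∣ 2 * n := ⟨m, by linear_combination -hn + hm⟩
      rcases hqP.dvd_mul.mp hqn with h | h
      · exact hqZ2 h
      obtain ⟨n', hn'⟩ := h
      have hkn' : k = 2 * (q : ℤ) * n' := by linear_combination hn + 2 * hn'
      have hab : (k + 1) * n' = e ^ 2 := by
        have h2q : (2 : ℤ) * q ≠ 0 := by positivity
        have h4 : 2 * (q:ℤ) * ((k + 1) * n') = 2 * (q:ℤ) * e ^ 2 := by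
          linear_combination hkey - (k + 1) * hkn'
        exact mul_left_cancel₀ h2q h4
      have hcop' : IsCoprime (k + 1 : ℤ) n' :=
        hcop.of_isCoprime_of_dvd_right ⟨2 * q, by linear_combination hkn'⟩
      have hn'pos : 0 < n' := aux_pos hkn' (show (0:ℤ) < 2 * q by positivity) (by linarith)
      obtain ⟨s, hs0, hs⟩ := aux_sq hcop' hab (by linarith)
      obtain ⟨t, ht0, ht⟩ := aux_sq hcop'.symm (by rw [mul_comm]; exact hab) (by linarith)
      have hsp : 0 < s := aux_pos_sq hs0 (by linarith) hs
      have htp : 0 < t := aux_pos_sq ht0 hn'pos ht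
      have hpell' : s ^ 2 - 2 * (q : ℤ) * t ^ 2 = 1 := by
        linear_combination -hs + hkn' + 2 * (q:ℤ) * ht
      have hle := hmin s t hsp htp hpell'
      have h2s : 2 * s ^ 2 = c + 1 := by linear_combination -hk - 2 * hs
      nlinarith [mul_self_le_mul_self (by linarith : (0:ℤ) ≤ c) hle]
end

section
/- Let q be a prime with q ≡ 7 (mod 8). If α, β are positive integers with α² − q·β² = 1 giving the fundamental solution, then α + 1 is a perfect square; moreover there exist positive integers β₁, β₂ with β = β₁·β₂, α + 1 = β₁² and 2 = β₁² − q·β₂², where √(2ε_q) = β₁ + β₂√q. -/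
/-- If `x` is odd then `x² ≡ 1 (mod 8)`. -/
lemma aux_odd_sq8 (x : ℤ) (h : Odd x) : ∃ a : ℤ, x ^ 2 = 8 * a + 1 := by
  obtain ⟨t, rfl⟩ := h
  obtain ⟨r, hr⟩ := Int.even_mul_succ_self t
  exact ⟨r, by linear_combination 4 * hr⟩

/-- Splitting a coprime product which is a square into two positive squares. -/
lemma aux_split (a b c : ℤ) (h : IsCoprime a b) (hab : a * b = c ^ 2)
    (ha : 0 < a) (hb : 0 < b) (hc : 0 < c) :
    ∃ u v : ℤ, 0 < u ∧ 0 < v ∧ a = u ^ 2 ∧ b = v ^ 2 ∧ c = u * v := by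
  obtain ⟨u0, hu0⟩ := Int.sq_of_isCoprime h hab
  obtain ⟨v0, hv0⟩ := Int.sq_of_isCoprime h.symm (by linear_combination hab : b * a = c ^ 2)
  have hu : a = |u0| ^ 2 := by
    rcases hu0 with h1 | h1
    · rw [sq_abs]; exact h1
    · exfalso; nlinarith [sq_nonneg u0]
  have hv : b = |v0| ^ 2 := by
    rcases hv0 with h1 | h1
    · rw [sq_abs]; exact h1
    · exfalso; nlinarith [sq_nonneg v0]
  have hu0' : 0 < |u0| := by
    rcases eq_or_lt_of_le (abs_nonneg u0) with h1 | h1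
    · exfalso; rw [← h1] at hu; simp at hu; omega
    · exact h1
  have hv0' : 0 < |v0| := by
    rcases eq_or_lt_of_le (abs_nonneg v0) with h1 | h1
    · exfalso; rw [← h1] at hv; simp at hv; omega
    · exact h1
  refine ⟨|u0|, |v0|, hu0', hv0', hu, hv, ?_⟩
  have h0 : (c - |u0| * |v0|) * (c + |u0| * |v0|) = 0 := by
    have : c ^ 2 = (|u0| * |v0|) ^ 2 := by rw [← hab, hu, hv]; ring
    linear_combination this
  rcases mul_eq_zero.mp h0 with h1 | h1
  · linarith
  · nlinarith

/-- `q·w² − u² = 2` is impossible for odd `u, w` and `q ≡ 7 (mod 8)`. -/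
lemma aux_mod8 (q u w : ℤ) (hq : q % 8 = 7) (hu : Odd u) (hw : Odd w)
    (h : q * w ^ 2 - u ^ 2 = 2) : False := by
  obtain ⟨a, ha⟩ := aux_odd_sq8 u hu
  obtain ⟨b, hb⟩ := aux_odd_sq8 w hw
  have hc : q = 8 * (q / 8) + 7 := by omega
  set c := q / 8 with hcdef
  rw [ha, hb, hc] at h
  have h3 : 64 * (c * b) + 8 * c + 56 * b - 8 * a + 6 = 2 := by linear_combination h
  obtain ⟨e, he⟩ : ∃ e : ℤ, c * b = e := ⟨_, rfl⟩
  rw [he] at h3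
  omega

/-- `u² − q·w² = −1` is impossible for `q` prime with `q ≡ 3 (mod 4)`. -/
lemma aux_neg_one (q : ℕ) (hq : q.Prime) (hq4 : q % 4 = 3) (u w : ℤ)
    (h : u ^ 2 - (q : ℤ) * w ^ 2 = -1) : False := by
  haveI : Fact q.Prime := ⟨hq⟩
  have h1 : ((u : ZMod q)) ^ 2 = -1 := by
    have := congrArg (fun z : ℤ => (z : ZMod q)) h
    push_cast at this
    rw [ZMod.natCast_self] at this
    linear_combination this
  have h2 : IsSquare (-1 : ZMod q) := ⟨u, by rw [← h1]; ring⟩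
  exact (ZMod.exists_sq_eq_neg_one_iff.mp h2) hq4

/-- If `q ≡ 7 (mod 8)` and `ε_q = α + β√q` is the fundamental unit (minimal positive
solution of `X² − q·Y² = 1`), then `α + 1` is a perfect square, and `2ε_q` is a square
in `ℚ(√q)`: there are positive integers `β₁, β₂` with `β = β₁β₂`, `β₁² − q·β₂² = 2`
and `2α = β₁² + q·β₂²` (i.e. `2ε_q = (β₁ + β₂√q)²`). -/
theorem stmt_5 (q : ℕ) (hq : q.Prime) (hq7 : q % 8 = 7)
    (α β : ℤ) (hα : 0 < α) (hβ : 0 < β)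
    (hpell : α ^ 2 - q * β ^ 2 = 1)
    (hmin : ∀ α' β' : ℤ, 0 < α' → 0 < β' → α' ^ 2 - q * β' ^ 2 = 1 → α ≤ α') :
    (∃ k : ℤ, α + 1 = k ^ 2) ∧
    ∃ β₁ β₂ : ℤ, 0 < β₁ ∧ 0 < β₂ ∧ β = β₁ * β₂ ∧
      β₁ ^ 2 - q * β₂ ^ 2 = 2 ∧ 2 * α = β₁ ^ 2 + q * β₂ ^ 2 := by
  have hq7' : (7 : ℤ) ≤ (q : ℤ) := by
    have : 7 ≤ q := by omega
    exact_mod_cast this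
  have hqz : (q : ℤ) % 8 = 7 := by omega
  have hqz0 : (q : ℤ) ≠ 0 := by positivity
  have hqp : Prime (q : ℤ) := Int.prime_iff_natAbs_prime.mpr (by simpa using hq)
  have hα3 : 3 ≤ α := by nlinarith [sq_nonneg β]
  have key : (α - 1) * (α + 1) = (q : ℤ) * β ^ 2 := by linear_combination hpell
  rcases Int.even_or_odd α with hαpar | hαpar
  · -- α even : this is the real case
    obtain ⟨m0, hm0⟩ := hαpar
    have hcop : IsCoprime (α - 1) (α + 1) :=
      ⟨-(m0 * α), m0 * α - (α - 1), by subst hm0; ring⟩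
    have hdvd : (q : ℤ) ∣ (α - 1) * (α + 1) := ⟨β ^ 2, key⟩
    rcases hqp.dvd_mul.mp hdvd with hd | hd
    · -- q ∣ α - 1 : conclusion case
      obtain ⟨m, hm⟩ := hd
      have hmpos : 0 < m := by
        by_contra h
        push_neg at h
        nlinarith
      have hprod : (α + 1) * m = β ^ 2 := by
        apply mul_left_cancel₀ hqz0
        linear_combination key - (α + 1) * hm
      have hcop2 : IsCoprime (α + 1) m :=
        hcop.symm.of_isCoprime_of_dvd_right ⟨(q : ℤ), by rw [hm]; ring⟩
      obtain ⟨b1, b2, hb1, hb2, hsq1, hsq2, hbeq⟩ :=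
        aux_split (α + 1) m β hcop2 hprod (by linarith) hmpos hβ
      refine ⟨⟨b1, hsq1⟩, b1, b2, hb1, hb2, hbeq, ?_, ?_⟩
      · linear_combination -hsq1 + (q : ℤ) * hsq2 + hm
      · linear_combination hsq1 + hm + (q : ℤ) * hsq2
    · -- q ∣ α + 1 : impossible mod 8
      exfalso
      obtain ⟨m, hm⟩ := hd
      have hmpos : 0 < m := by
        by_contra h
        push_neg at h
        nlinarith
      have hprod : (α - 1) * m = β ^ 2 := by
        apply mul_left_cancel₀ hqz0
        linear_combination key - (α - 1) * hm
      have hcop2 : IsCoprime (α - 1) m :=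
        hcop.of_isCoprime_of_dvd_right ⟨(q : ℤ), by rw [hm]; ring⟩
      obtain ⟨u, w, hu, hw, hsq1, hsq2, hbeq⟩ :=
        aux_split (α - 1) m β hcop2 hprod (by linarith) hmpos hβ
      have huodd : Odd u := by
        rcases Int.even_or_odd u with he | ho
        · exfalso
          obtain ⟨t, rfl⟩ := he
          have h1 : α - 1 = 4 * t ^ 2 := by rw [hsq1]; ring
          obtain ⟨e, he2⟩ : ∃ e : ℤ, t ^ 2 = e := ⟨_, rfl⟩
          rw [he2] at h1
          omega
        · exact ho
      have hwodd : Odd w := by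
        rcases Int.even_or_odd w with he | ho
        · exfalso
          obtain ⟨t, rfl⟩ := he
          have h1 : α + 1 = 4 * ((q : ℤ) * t ^ 2) := by rw [hm, hsq2]; ring
          obtain ⟨e, he2⟩ : ∃ e : ℤ, (q : ℤ) * t ^ 2 = e := ⟨_, rfl⟩
          rw [he2] at h1
          omega
        · exact ho
      refine aux_mod8 (q : ℤ) u w hqz huodd hwodd ?_
      linear_combination -hm - (q : ℤ) * hsq2 + hsq1
  · -- α odd : impossible
    exfalso
    obtain ⟨s, hs⟩ := hαpar
    have hβeven : (2 : ℤ) ∣ β := by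
      have h2 : (2 : ℤ) ∣ (q : ℤ) * β ^ 2 :=
        ⟨2 * s ^ 2 + 2 * s, by linear_combination -hpell + (α + 2 * s + 1) * hs⟩
      rcases (Int.prime_two.dvd_mul.mp h2) with h3 | h3
      · exfalso; omega
      · exact Int.prime_two.dvd_of_dvd_pow h3
    obtain ⟨b, hb⟩ := hβeven
    have hbpos : 0 < b := by linarith
    have hspos : 0 < s := by omega
    have hkey2 : s * (s + 1) = (q : ℤ) * b ^ 2 := by
      have h4 : 4 * (s * (s + 1)) = 4 * ((q : ℤ) * b ^ 2) := by
        linear_combination hpell - (α + 2 * s + 1) * hs + (q : ℤ) * (β + 2 * b) * hb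
      linarith
    have hqdvd : (q : ℤ) ∣ s * (s + 1) := ⟨b ^ 2, hkey2⟩
    have hcop01 : IsCoprime s (s + 1) := ⟨-1, 1, by ring⟩
    rcases hqp.dvd_mul.mp hqdvd with hd | hd
    · -- q ∣ s : smaller solution contradicts minimality
      obtain ⟨m, hm⟩ := hd
      have hmpos : 0 < m := by
        by_contra h
        push_neg at h
        nlinarith
      have hprod : m * (s + 1) = b ^ 2 := by
        apply mul_left_cancel₀ hqz0
        linear_combination hkey2 - (s + 1) * hm
      have hcop2 : IsCoprime m (s + 1) :=
        hcop01.of_isCoprime_of_dvd_left ⟨(q : ℤ), by rw [hm]; ring⟩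
      obtain ⟨u, v, hu, hv, hsqm, hsqv, hbe⟩ :=
        aux_split m (s + 1) b hcop2 hprod hmpos (by linarith) hbpos
      have hpell' : v ^ 2 - (q : ℤ) * u ^ 2 = 1 := by
        linear_combination -hsqv + (q : ℤ) * hsqm + hm
      have hminv := hmin v u hv hu hpell'
      nlinarith
    · -- q ∣ s + 1 : u² − q·w² = −1, impossible since q ≡ 3 (mod 4)
      obtain ⟨m, hm⟩ := hd
      have hmpos : 0 < m := by
        by_contra h
        push_neg at h
        nlinarith
      have hprod : s * m = b ^ 2 := by
        apply mul_left_cancel₀ hqz0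
        linear_combination hkey2 - s * hm
      have hcop2 : IsCoprime s m :=
        hcop01.of_isCoprime_of_dvd_right ⟨(q : ℤ), by rw [hm]; ring⟩
      obtain ⟨u, w, hu, hw, hsqs, hsqm, hbe⟩ :=
        aux_split s m b hcop2 hprod hspos hmpos hbpos
      refine aux_neg_one q hq (by omega) u w ?_
      linear_combination -hsqs + (q : ℤ) * hsqm + hm
end

section
/- Let p and q be primes with q ≡ 7 (mod 8), p ≡ 3 (mod 8), and (p/q) = 1. If x, y give the fundamental solution of x² − pq·y² = 1 (x, y positive, possibly half-integers with 2x, 2y odd integers), then 2q(x−1) is a square in ℚ, and there exist y₁, y₂ with y = 2y₁y₂ and 1 = −q·y₁² + p·y₂². -/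
private lemma both_sq {s t w : ℤ} (hs : 0 < s) (ht : 0 < t) (hco : IsCoprime s t)
    (h : s * t = w ^ 2) :
    ∃ a b : ℤ, 0 < a ∧ 0 < b ∧ s = a ^ 2 ∧ t = b ^ 2 ∧ w ^ 2 = (a * b) ^ 2 := by
  obtain ⟨a₀, ha⟩ := Int.sq_of_isCoprime hco h
  obtain ⟨b₀, hb⟩ := Int.sq_of_isCoprime hco.symm (by rw [mul_comm]; exact h)
  have ha' : s = a₀ ^ 2 := by
    rcases ha with h1 | h1
    · exact h1
    · nlinarith [sq_nonneg a₀]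
  have hb' : t = b₀ ^ 2 := by
    rcases hb with h1 | h1
    · exact h1
    · nlinarith [sq_nonneg b₀]
  have ha0 : a₀ ≠ 0 := by rintro rfl; simp at ha'; omega
  have hb0 : b₀ ≠ 0 := by rintro rfl; simp at hb'; omega
  refine ⟨|a₀|, |b₀|, abs_pos.mpr ha0, abs_pos.mpr hb0, by rw [sq_abs]; exact ha',
    by rw [sq_abs]; exact hb', ?_⟩
  rw [mul_pow, sq_abs, sq_abs, ← ha', ← hb', h]

private lemma fact4 {p q u v w : ℤ} (hp : Prime p) (hq : Prime q) (hpq : ¬ p ∣ q)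
    (hp0 : 0 < p) (hq0 : 0 < q)
    (hu : 0 < u) (hv : 0 < v) (huv : IsCoprime u v) (h : u * v = p * q * w ^ 2) :
    ∃ a b : ℤ, 0 < a ∧ 0 < b ∧ w ^ 2 = (a * b) ^ 2 ∧
      ((u = a ^ 2 ∧ v = p * q * b ^ 2) ∨ (u = p * q * a ^ 2 ∧ v = b ^ 2) ∨
       (u = p * a ^ 2 ∧ v = q * b ^ 2) ∨ (u = q * a ^ 2 ∧ v = p * b ^ 2)) := by
  have hcpq : IsCoprime p q := (hp.coprime_iff_not_dvd).mpr hpq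
  have hpq0 : (0:ℤ) < p * q := mul_pos hp0 hq0
  have hpuv : p ∣ u ∨ p ∣ v := hp.dvd_mul.mp ⟨q * w ^ 2, by rw [h]; ring⟩
  have hquv : q ∣ u ∨ q ∣ v := hq.dvd_mul.mp ⟨p * w ^ 2, by rw [h]; ring⟩
  rcases hpuv with hpu | hpv <;> rcases hquv with hqu | hqv
  · -- p ∣ u, q ∣ u : u = p*q*a², v = b²
    obtain ⟨t, ht⟩ := hcpq.mul_dvd hpu hqu
    have ht0 : 0 < t := by nlinarith
    have htv : IsCoprime t v := huv.of_isCoprime_of_dvd_left ⟨p * q, by rw [ht]; ring⟩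
    have heq : t * v = w ^ 2 := by
      have h2 : (p * q) * (t * v) = (p * q) * w ^ 2 := by rw [← h, ht]; ring
      exact mul_left_cancel₀ (ne_of_gt hpq0) h2
    obtain ⟨a, b, ha, hb, hs, hts, hw⟩ := both_sq ht0 hv htv heq
    exact ⟨a, b, ha, hb, hw, Or.inr (Or.inl ⟨by rw [ht, hs], hts⟩)⟩
  · -- p ∣ u, q ∣ v : u = p*a², v = q*b²
    obtain ⟨s, hsu⟩ := hpu
    obtain ⟨t, htv⟩ := hqv
    have hs0 : 0 < s := by nlinarith
    have ht0 : 0 < t := by nlinarith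
    have hst : IsCoprime s t :=
      (huv.of_isCoprime_of_dvd_left ⟨p, by rw [hsu]; ring⟩).of_isCoprime_of_dvd_right
        ⟨q, by rw [htv]; ring⟩
    have heq : s * t = w ^ 2 := by
      have h2 : (p * q) * (s * t) = (p * q) * w ^ 2 := by rw [← h, hsu, htv]; ring
      exact mul_left_cancel₀ (ne_of_gt hpq0) h2
    obtain ⟨a, b, ha, hb, hs', hts, hw⟩ := both_sq hs0 ht0 hst heq
    exact ⟨a, b, ha, hb, hw, Or.inr (Or.inr (Or.inl
      ⟨by rw [hsu, hs'], by rw [htv, hts]⟩))⟩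
  · -- q ∣ u, p ∣ v : u = q*a², v = p*b²
    obtain ⟨s, hsu⟩ := hqu
    obtain ⟨t, htv⟩ := hpv
    have hs0 : 0 < s := by nlinarith
    have ht0 : 0 < t := by nlinarith
    have hst : IsCoprime s t :=
      (huv.of_isCoprime_of_dvd_left ⟨q, by rw [hsu]; ring⟩).of_isCoprime_of_dvd_right
        ⟨p, by rw [htv]; ring⟩
    have heq : s * t = w ^ 2 := by
      have h2 : (p * q) * (s * t) = (p * q) * w ^ 2 := by rw [← h, hsu, htv]; ring
      exact mul_left_cancel₀ (ne_of_gt hpq0) h2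
    obtain ⟨a, b, ha, hb, hs', hts, hw⟩ := both_sq hs0 ht0 hst heq
    exact ⟨a, b, ha, hb, hw, Or.inr (Or.inr (Or.inr
      ⟨by rw [hsu, hs'], by rw [htv, hts]⟩))⟩
  · -- p ∣ v, q ∣ v : u = a², v = p*q*b²
    obtain ⟨t, ht⟩ := hcpq.mul_dvd hpv hqv
    have ht0 : 0 < t := by nlinarith
    have hut : IsCoprime u t := huv.of_isCoprime_of_dvd_right ⟨p * q, by rw [ht]; ring⟩
    have heq : u * t = w ^ 2 := by
      have h2 : (p * q) * (u * t) = (p * q) * w ^ 2 := by rw [← h, ht]; ring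
      exact mul_left_cancel₀ (ne_of_gt hpq0) h2
    obtain ⟨a, b, ha, hb, hs, hts, hw⟩ := both_sq hu ht0 hut heq
    exact ⟨a, b, ha, hb, hw, Or.inl ⟨hs, by rw [ht, hts]⟩⟩

private lemma no_neg_four_sq {q : ℕ} [Fact q.Prime] (hq4 : q % 4 = 3) {c : ZMod q}
    (h : c ^ 2 = -4) : False := by
  have hq3 : 3 ≤ q := by
    have := (Fact.out : q.Prime).two_le; omega
  have h2 : (2 : ZMod q) ≠ 0 := by
    intro h0
    have : ((2:ℕ) : ZMod q) = 0 := by exact_mod_cast h0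
    have := (ZMod.natCast_eq_zero_iff 2 q).mp this
    have := Nat.le_of_dvd (by norm_num) this
    omega
  have hsq : IsSquare (-1 : ZMod q) := by
    refine ⟨c * 2⁻¹, ?_⟩
    have h4 : (2 : ZMod q) * 2 ≠ 0 := mul_ne_zero h2 h2
    field_simp
    linear_combination -h
  exact (ZMod.exists_sq_eq_neg_one_iff.mp hsq) hq4

set_option maxHeartbeats 1000000 in
/-- If `q ≡ 7 (mod 8)`, `p ≡ 3 (mod 8)`, `(p/q) = 1`, and `ε_pq = x + y√(pq)` is the
fundamental unit of `ℚ(√(pq))` (of norm 1, with `x, y` integers or half-integers),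
then `2q(x−1)` is a square in `ℚ`, and there are half-integers `y₁, y₂` with
`y = 2y₁y₂` and `1 = −q·y₁² + p·y₂²`. -/
theorem stmt_6 (p q : ℕ) (hp : p.Prime) (hq : q.Prime)
    (hq7 : q % 8 = 7) (hp3 : p % 8 = 3)
    (hleg : @legendreSym q ⟨hq⟩ (p : ℤ) = 1)
    (x y : ℚ) (hx2 : ∃ a : ℤ, 2 * x = a) (hy2 : ∃ b : ℤ, 2 * y = b)
    (hxpos : 0 < x) (hypos : 0 < y)
    (hnorm : x ^ 2 - (p : ℚ) * q * y ^ 2 = 1)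
    (hfund : ∀ x' y' : ℚ, (∃ a : ℤ, 2 * x' = a) → (∃ b : ℤ, 2 * y' = b) →
      0 < x' → 0 < y' →
      (x' ^ 2 - (p : ℚ) * q * y' ^ 2 = 1 ∨ x' ^ 2 - (p : ℚ) * q * y' ^ 2 = -1) →
      x ≤ x') :
    IsSquare (2 * (q : ℚ) * (x - 1)) ∧
    ∃ y₁ y₂ : ℚ, (∃ a : ℤ, 2 * y₁ = a) ∧ (∃ b : ℤ, 2 * y₂ = b) ∧
      0 < y₁ ∧ 0 < y₂ ∧ y = 2 * y₁ * y₂ ∧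
      -(q : ℚ) * y₁ ^ 2 + p * y₂ ^ 2 = 1 := by
  haveI hqF : Fact q.Prime := ⟨hq⟩
  haveI hpF : Fact p.Prime := ⟨hp⟩
  have hp2 := hp.two_le
  have hq2 := hq.two_le
  have hq4 : q % 4 = 3 := by omega
  have hp4 : p % 4 = 3 := by omega
  have hpqne : p ≠ q := by omega
  -- legendre symbol (q/p) = -1
  have hlegpq : legendreSym p (q : ℤ) = -1 := by
    have h := legendreSym.quadratic_reciprocity_three_mod_four hp4 hq4
    rw [hleg] at h
    linarith
  -- pass to integers
  obtain ⟨X, hX⟩ := hx2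
  obtain ⟨Y, hY⟩ := hy2
  have hX0 : 0 < X := by
    have : (0:ℚ) < (X:ℚ) := by rw [← hX]; linarith
    exact_mod_cast this
  have hY0 : 0 < Y := by
    have : (0:ℚ) < (Y:ℚ) := by rw [← hY]; linarith
    exact_mod_cast this
  have hXY : X ^ 2 - (p * q : ℤ) * Y ^ 2 = 4 := by
    have h : ((X:ℚ))^2 - ((p:ℚ) * q) * (Y:ℚ)^2 = 4 := by
      rw [← hX, ← hY]; linear_combination 4 * hnorm
    exact_mod_cast h
  have hp3' : 3 ≤ (p:ℤ) := by exact_mod_cast (by omega : 3 ≤ p)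
  have hq7' : 7 ≤ (q:ℤ) := by exact_mod_cast (by omega : 7 ≤ q)
  have hN21 : 21 ≤ (p:ℤ) * q := by nlinarith
  have hY1 : 1 ≤ Y := hY0
  have hYsq : 1 ≤ Y ^ 2 := by nlinarith
  have hX25 : 25 ≤ X ^ 2 := by nlinarith [mul_le_mul hN21 hYsq (by norm_num) (by linarith)]
  have hX5 : 5 ≤ X := by nlinarith
  -- primality over ℤ
  have hpZ : Prime ((p:ℕ) : ℤ) := Nat.prime_iff_prime_int.mp hp
  have hqZ : Prime ((q:ℕ) : ℤ) := Nat.prime_iff_prime_int.mp hq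
  have hndvd : ¬ ((p:ℤ)) ∣ ((q:ℤ)) := by
    intro hdvd
    have := Int.natCast_dvd_natCast.mp hdvd
    exact hpqne ((Nat.prime_dvd_prime_iff_eq hp hq).mp this)
  have hndvd' : ¬ ((q:ℤ)) ∣ ((p:ℤ)) := by
    intro hdvd
    have := Int.natCast_dvd_natCast.mp hdvd
    exact hpqne ((Nat.prime_dvd_prime_iff_eq hq hp).mp this).symm
  have hp0 : (0:ℤ) < p := by linarith
  have hq0 : (0:ℤ) < q := by linarith
  -- minimality in integer form
  have hmin : ∀ X' Y' : ℤ, 0 < X' → 0 < Y' →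
      (X' ^ 2 - (p * q : ℤ) * Y' ^ 2 = 4 ∨ X' ^ 2 - (p * q : ℤ) * Y' ^ 2 = -4) → X ≤ X' := by
    intro X' Y' hX' hY' hn
    have hX'Q : (0:ℚ) < (X':ℚ) := by exact_mod_cast hX'
    have hY'Q : (0:ℚ) < (Y':ℚ) := by exact_mod_cast hY'
    have h1 : x ≤ (X' : ℚ) / 2 := by
      apply hfund ((X':ℚ)/2) ((Y':ℚ)/2) ⟨X', by ring⟩ ⟨Y', by ring⟩ (by linarith) (by linarith)
      rcases hn with hn | hn
      · left
        have h2 : ((X':ℚ))^2 - ((p:ℚ)*q) * (Y':ℚ)^2 = 4 := by exact_mod_cast hn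
        linear_combination h2 / 4
      · right
        have h2 : ((X':ℚ))^2 - ((p:ℚ)*q) * (Y':ℚ)^2 = -4 := by exact_mod_cast hn
        linear_combination h2 / 4
    have h3 : (X:ℚ) ≤ (X':ℚ) := by rw [← hX]; linarith
    exact_mod_cast h3
  -- useful ZMod facts
  have hq0p : (((q:ℤ)) : ZMod p) ≠ 0 := by
    intro h0
    have : ((q:ℕ) : ZMod p) = 0 := by exact_mod_cast h0
    have := (ZMod.natCast_eq_zero_iff q p).mp this
    exact hpqne ((Nat.prime_dvd_prime_iff_eq hp hq).mp this)
  have hp0q : (((p:ℤ)) : ZMod q) ≠ 0 := by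
    intro h0
    have : ((p:ℕ) : ZMod q) = 0 := by exact_mod_cast h0
    have := (ZMod.natCast_eq_zero_iff p q).mp this
    exact hpqne ((Nat.prime_dvd_prime_iff_eq hq hp).mp this).symm
  rcases Int.even_or_odd X with ⟨x₀, hx₀⟩ | ⟨m0, hm0⟩
  · -- X even
    subst hx₀
    -- Y is even
    have hpodd : Odd ((p:ℤ)) := by rw [Int.odd_iff]; omega
    have hqodd : Odd ((q:ℤ)) := by rw [Int.odd_iff]; omega
    have hYe : Even Y := by
      have hE : Even ((p:ℤ) * q * Y ^ 2) := ⟨2 * x₀ ^ 2 - 2, by linear_combination -hXY⟩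
      have := (Int.even_mul.mp hE).resolve_left (Int.not_even_iff_odd.mpr (hpodd.mul hqodd))
      exact (Int.even_pow.mp this).1
    obtain ⟨y₀, hy₀⟩ := hYe
    subst hy₀
    have hsmall : x₀ ^ 2 - (p * q : ℤ) * y₀ ^ 2 = 1 := by
      have h4 : (4:ℤ) * (x₀ ^ 2 - (p * q : ℤ) * y₀ ^ 2) = 4 * 1 := by linear_combination hXY
      exact mul_left_cancel₀ (by norm_num) h4
    -- y₀ is even (mod 8 argument)
    have hp8 : ((p : ℕ) : ZMod 8) = 3 := by rw [← ZMod.natCast_mod, hp3]; rfl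
    have hq8 : ((q : ℕ) : ZMod 8) = 7 := by rw [← ZMod.natCast_mod, hq7]; rfl
    rcases Int.even_or_odd y₀ with ⟨w0, hw0⟩ | ⟨k, hk⟩
    swap
    · -- y₀ odd : impossible mod 8
      exfalso
      subst hk
      have h8 := congrArg (fun z : ℤ => (z : ZMod 8)) hsmall
      push_cast at h8
      have key : ∀ A B P Q : ZMod 8, P = 3 → Q = 7 → A ^ 2 - P * Q * (2 * B + 1) ^ 2 ≠ 1 := by
        decide
      exact key ((x₀ : ZMod 8)) ((k : ZMod 8)) _ _ hp8 hq8 (by linear_combination h8)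
    · subst hw0
      -- x₀ is odd
      have hw0' : 0 < w0 := by linarith
      rcases Int.even_or_odd x₀ with ⟨t0, ht0⟩ | ⟨m, hm⟩
      · -- x₀ even : impossible mod 2
        exfalso
        subst ht0
        have hp2' : ((p : ℕ) : ZMod 2) = 1 := by
          rw [← ZMod.natCast_mod, (by omega : p % 2 = 1)]; rfl
        have hq2' : ((q : ℕ) : ZMod 2) = 1 := by
          rw [← ZMod.natCast_mod, (by omega : q % 2 = 1)]; rfl
        have h2 := congrArg (fun z : ℤ => (z : ZMod 2)) hsmall
        push_cast at h2
        have key : ∀ A B P Q : ZMod 2, P = 1 → Q = 1 →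
            (A + A) ^ 2 - P * Q * (B + B) ^ 2 ≠ 1 := by decide
        exact key ((t0 : ZMod 2)) ((w0 : ZMod 2)) _ _ hp2' hq2' (by linear_combination h2)
      · subst hm
        have hm0' : 0 < m := by linarith
        -- m * (m + 1) = p * q * w0 ^ 2
        have hmain : m * (m + 1) = (p * q : ℤ) * w0 ^ 2 := by
          have h4 : (4:ℤ) * (m * (m + 1)) = 4 * ((p * q : ℤ) * w0 ^ 2) := by
            linear_combination hsmall
          exact mul_left_cancel₀ (by norm_num) h4
        have hco : IsCoprime m (m + 1) := ⟨-1, 1, by ring⟩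
        obtain ⟨a, b, ha, hb, hw, hshape⟩ :=
          fact4 hpZ hqZ hndvd hp0 hq0 hm0' (by linarith) hco hmain
        have hwab : w0 = a * b := by
          have h5 : (w0 - a * b) * (w0 + a * b) = 0 := by linear_combination hw
          rcases mul_eq_zero.mp h5 with h6 | h6
          · linarith
          · nlinarith [mul_pos ha hb]
        rcases hshape with ⟨h1, h2⟩ | ⟨h1, h2⟩ | ⟨h1, h2⟩ | ⟨h1, h2⟩
        · -- m = a², m+1 = pq b² : norm -1 smaller solution, contradiction
          exfalso
          have := hmin (a + a) (b + b) (by linarith) (by linarith)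
            (Or.inr (by linear_combination 4 * h2 - 4 * h1))
          nlinarith
        · -- m = pq a², m+1 = b² : norm 1 smaller solution, contradiction
          exfalso
          have := hmin (b + b) (a + a) (by linarith) (by linarith)
            (Or.inl (by linear_combination 4 * h1 - 4 * h2))
          nlinarith
        · -- m = p a², m+1 = q b² : (q/p) = 1, contradiction
          exfalso
          have h6 : ((q:ℤ)) * b ^ 2 - ((p:ℤ)) * a ^ 2 = 1 := by linarith
          have h7 := congrArg (fun z : ℤ => (z : ZMod p)) h6
          push_cast at h7
          rw [ZMod.natCast_self] at h7
          have hqb : ((q:ℕ) : ZMod p) * ((b:ℤ) : ZMod p) ^ 2 = 1 := by linear_combination h7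
          have hb0 : ((b:ℤ) : ZMod p) ≠ 0 := by
            intro h0
            rw [h0] at hqb
            simp at hqb
          have hsq : IsSquare (((q:ℤ)) : ZMod p) := by
            refine ⟨(((b:ℤ)) : ZMod p)⁻¹, ?_⟩
            field_simp
            push_cast
            linear_combination hqb
          have := (legendreSym.eq_one_iff p hq0p).mpr hsq
          rw [hlegpq] at this
          norm_num at this
        · -- m = q a², m+1 = p b² : the good case
          subst hwab
          push_cast at hX hY
          have hm' : (m : ℚ) = (q : ℚ) * (a:ℚ) ^ 2 := by exact_mod_cast h1
          have hm1' : (m : ℚ) + 1 = (p : ℚ) * (b:ℚ) ^ 2 := by exact_mod_cast h2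
          have ha' : (0:ℚ) < (a:ℚ) := by exact_mod_cast ha
          have hb' : (0:ℚ) < (b:ℚ) := by exact_mod_cast hb
          refine ⟨⟨2 * (q:ℚ) * a, by linear_combination (q:ℚ) * hX + 4 * (q:ℚ) * hm'⟩,
            (a:ℚ), (b:ℚ), ⟨2 * a, by push_cast; ring⟩, ⟨2 * b, by push_cast; ring⟩,
            ha', hb', by linear_combination hY / 2, by linear_combination hm' - hm1'⟩
  · -- X odd
    have hco : IsCoprime (X - 2) (X + 2) :=
      ⟨(X - 2) + ((m0 - 1) ^ 2 + (m0 - 1)), -((m0 - 1) ^ 2 + (m0 - 1)), by rw [hm0]; ring⟩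
    have hprod : (X - 2) * (X + 2) = (p * q : ℤ) * Y ^ 2 := by linear_combination hXY
    obtain ⟨a, b, ha, hb, hw, hshape⟩ :=
      fact4 hpZ hqZ hndvd hp0 hq0 (by linarith) (by linarith) hco hprod
    have hwab : Y = a * b := by
      have h5 : (Y - a * b) * (Y + a * b) = 0 := by linear_combination hw
      rcases mul_eq_zero.mp h5 with h6 | h6
      · linarith
      · nlinarith [mul_pos ha hb]
    rcases hshape with ⟨h1, h2⟩ | ⟨h1, h2⟩ | ⟨h1, h2⟩ | ⟨h1, h2⟩
    · -- X-2 = a², X+2 = pq b² : -4 must be a square mod q, contradiction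
      exfalso
      have h6 : (p * q : ℤ) * b ^ 2 - a ^ 2 = 4 := by linarith
      have h7 := congrArg (fun z : ℤ => (z : ZMod q)) h6
      push_cast at h7
      rw [ZMod.natCast_self] at h7
      exact no_neg_four_sq hq4 (c := ((a : ℤ) : ZMod q)) (by linear_combination -h7)
    · -- X-2 = pq a², X+2 = b² : smaller solution, contradiction
      exfalso
      have := hmin b a hb ha (Or.inl (by linear_combination h1 - h2))
      nlinarith
    · -- X-2 = p a², X+2 = q b² : p·a² ≡ -4 mod q with (p/q)=1, contradiction
      exfalso
      have h6 : (q : ℤ) * b ^ 2 - (p : ℤ) * a ^ 2 = 4 := by linarith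
      have h7 := congrArg (fun z : ℤ => (z : ZMod q)) h6
      push_cast at h7
      rw [ZMod.natCast_self] at h7
      have hsqp : IsSquare (((p : ℤ)) : ZMod q) := (legendreSym.eq_one_iff q hp0q).mp hleg
      obtain ⟨c, hc⟩ := hsqp
      push_cast at hc
      exact no_neg_four_sq hq4 (c := c * ((a : ℤ) : ZMod q))
        (by linear_combination -(((a : ℤ) : ZMod q)) ^ 2 * hc - h7)
    · -- X-2 = q a², X+2 = p b² : the good case
      have hm' : ((X : ℚ)) - 2 = (q : ℚ) * (a : ℚ) ^ 2 := by exact_mod_cast h1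
      have hm1' : ((X : ℚ)) + 2 = (p : ℚ) * (b : ℚ) ^ 2 := by exact_mod_cast h2
      have hY' : (Y : ℚ) = (a : ℚ) * (b : ℚ) := by exact_mod_cast hwab
      have ha' : (0 : ℚ) < (a : ℚ) := by exact_mod_cast ha
      have hb' : (0 : ℚ) < (b : ℚ) := by exact_mod_cast hb
      refine ⟨⟨(q : ℚ) * a, by linear_combination (q : ℚ) * hX + (q : ℚ) * hm'⟩,
        (a : ℚ) / 2, (b : ℚ) / 2, ⟨a, by ring⟩, ⟨b, by ring⟩, by linarith, by linarith,
        by linear_combination hY / 2 + hY' / 2, by linear_combination (hm' - hm1') / 4⟩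
end

section
/- Let p and q be primes with q ≡ 7 (mod 8), p ≡ 3 (mod 8), and (p/q) = 1. If a, b are positive integers giving the fundamental solution of a² − 2pq·b² = 1, then 2q(a−1) is a perfect square, and there exist positive integers b₁, b₂ with b = b₁·b₂, a − 1 = 2q·b₁², a + 1 = p·b₂², and hence 2 = −2q·b₁² + p·b₂². -/
private lemma factor_helper (d₁ d₂ r s c : ℤ) (hd₁ : 0 < d₁) (hd₂ : 0 < d₂)
    (hr : 0 < r) (hs : 0 < s) (hc : 0 < c) (hcop : IsCoprime r s)
    (h1 : d₁ ∣ r) (h2 : d₂ ∣ s) (heq : r * s = d₁ * d₂ * c ^ 2) :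
    ∃ u v : ℤ, 0 < u ∧ 0 < v ∧ r = d₁ * u ^ 2 ∧ s = d₂ * v ^ 2 ∧ c = u * v := by
  obtain ⟨r₀, hr₀⟩ := h1
  obtain ⟨s₀, hs₀⟩ := h2
  have hr₀pos : 0 < r₀ := by rw [hr₀] at hr; nlinarith
  have hs₀pos : 0 < s₀ := by rw [hs₀] at hs; nlinarith
  have hdd : (d₁ * d₂ : ℤ) ≠ 0 := by positivity
  have key : r₀ * s₀ = c ^ 2 := by
    apply mul_left_cancel₀ hdd
    calc d₁ * d₂ * (r₀ * s₀) = (d₁ * r₀) * (d₂ * s₀) := by ring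
    _ = r * s := by rw [← hr₀, ← hs₀]
    _ = d₁ * d₂ * c ^ 2 := heq
  have hcop' : IsCoprime r₀ s₀ :=
    IsCoprime.of_isCoprime_of_dvd_left
      (IsCoprime.of_isCoprime_of_dvd_right hcop ⟨d₂, by rw [hs₀]; ring⟩)
      ⟨d₁, by rw [hr₀]; ring⟩
  obtain ⟨u, hu⟩ := Int.sq_of_isCoprime hcop' key
  obtain ⟨v, hv⟩ := Int.sq_of_isCoprime hcop'.symm (by rw [mul_comm]; exact key)
  have hu2 : r₀ = u ^ 2 := by
    rcases hu with h | h
    · exact h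
    · nlinarith [sq_nonneg u]
  have hv2 : s₀ = v ^ 2 := by
    rcases hv with h | h
    · exact h
    · nlinarith [sq_nonneg v]
  have hune : u ≠ 0 := by intro h; rw [h] at hu2; simp at hu2; omega
  have hvne : v ≠ 0 := by intro h; rw [h] at hv2; simp at hv2; omega
  refine ⟨|u|, |v|, abs_pos.mpr hune, abs_pos.mpr hvne, ?_, ?_, ?_⟩
  · rw [hr₀, hu2, sq_abs]
  · rw [hs₀, hv2, sq_abs]
  · have hsq : (|u| * |v|) ^ 2 = c ^ 2 := by
      rw [mul_pow, sq_abs, sq_abs, ← hu2, ← hv2, key]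
    have hpos : 0 < |u| * |v| := mul_pos (abs_pos.mpr hune) (abs_pos.mpr hvne)
    have hz : (|u| * |v| - c) * (|u| * |v| + c) = 0 := by linear_combination hsq
    rcases mul_eq_zero.mp hz with h | h
    · linarith
    · linarith

private lemma int_coprime_of_primes {p q : ℕ} (hp : p.Prime) (hq : q.Prime) (h : p ≠ q) :
    IsCoprime (p : ℤ) (q : ℤ) :=
  Int.isCoprime_iff_gcd_eq_one.mpr (by
    rw [Int.gcd_natCast_natCast]; exact (Nat.coprime_primes hp hq).mpr h)

private lemma neg_one_square_trick {n : ℕ} {s : ZMod n} (hs : IsSquare s)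
    (ht : ∃ u : ZMod n, s * u ^ 2 = -1) : IsSquare (-1 : ZMod n) := by
  obtain ⟨x, hx⟩ := hs
  obtain ⟨u, hu⟩ := ht
  exact ⟨x * u, by rw [← hu, hx]; ring⟩

private lemma mod8_case4 : ∀ u v : ZMod 8, ¬ (3 * 7 * v ^ 2 - 2 * u ^ 2 = 1) := by decide

private lemma mod8_case5 : ∀ u v : ZMod 8, ¬ (2 * v ^ 2 - 3 * 7 * u ^ 2 = 1) := by decide

set_option maxHeartbeats 1000000 in
/-- If `q ≡ 7 (mod 8)`, `p ≡ 3 (mod 8)`, `(p/q) = 1`, and `(a, b)` is the fundamental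
solution of `X² − 2pq·Y² = 1`, then `2q(a−1)` is a perfect square, and
`a − 1 = 2q·b₁²`, `a + 1 = p·b₂²` with `b = b₁b₂`, hence `2 = −2q·b₁² + p·b₂²`. -/
theorem stmt_7 (p q : ℕ) (hp : p.Prime) (hq : q.Prime)
    (hq7 : q % 8 = 7) (hp3 : p % 8 = 3)
    (hleg : @legendreSym q ⟨hq⟩ (p : ℤ) = 1)
    (a b : ℤ) (ha : 0 < a) (hb : 0 < b)
    (hpell : a ^ 2 - 2 * p * q * b ^ 2 = 1)
    (hmin : ∀ a' b' : ℤ, 0 < a' → 0 < b' → a' ^ 2 - 2 * p * q * b' ^ 2 = 1 → a ≤ a') :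
    (∃ k : ℤ, 2 * q * (a - 1) = k ^ 2) ∧
    ∃ b₁ b₂ : ℤ, 0 < b₁ ∧ 0 < b₂ ∧ b = b₁ * b₂ ∧
      a - 1 = 2 * q * b₁ ^ 2 ∧ a + 1 = p * b₂ ^ 2 ∧
      -(2 * (q : ℤ) * b₁ ^ 2) + p * b₂ ^ 2 = 2 := by
  haveI hqf : Fact q.Prime := ⟨hq⟩
  haveI hpf : Fact p.Prime := ⟨hp⟩
  have hp2 : p ≠ 2 := by omega
  have hq2 : q ≠ 2 := by omega
  have hpq : p ≠ q := by omega
  have hp4 : p % 4 = 3 := by omega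
  have hq4 : q % 4 = 3 := by omega
  have hppos : (0:ℤ) < (p:ℤ) := by exact_mod_cast hp.pos
  have hqpos : (0:ℤ) < (q:ℤ) := by exact_mod_cast hq.pos
  -- Legendre symbol facts
  have hlq : legendreSym p (q : ℤ) = -1 := by
    have h := legendreSym.quadratic_reciprocity_three_mod_four hp4 hq4
    rw [hleg] at h; linarith
  have hqns : ¬ IsSquare (((q : ℤ)) : ZMod p) := (legendreSym.eq_neg_one_iff p).mp hlq
  have h2nsp : ¬ IsSquare ((2 : ℤ) : ZMod p) := by
    rw [show (((2:ℤ)) : ZMod p) = (2 : ZMod p) by push_cast; ring]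
    rw [ZMod.exists_sq_eq_two_iff hp2]
    omega
  have hneg1p : ¬ IsSquare (-1 : ZMod p) := by
    rw [ZMod.exists_sq_eq_neg_one_iff]; omega
  have hneg1q : ¬ IsSquare (-1 : ZMod q) := by
    rw [ZMod.exists_sq_eq_neg_one_iff]; omega
  have h2sq : IsSquare (2 : ZMod q) := (ZMod.exists_sq_eq_two_iff hq2).mpr (Or.inr hq7)
  have hpne0 : ((p : ℤ) : ZMod q) ≠ 0 := by
    rw [show (((p:ℤ)) : ZMod q) = ((p:ℕ) : ZMod q) by push_cast; ring]
    exact ZMod.prime_ne_zero q p (Ne.symm hpq)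
  have hpsq : IsSquare ((p : ℕ) : ZMod q) := by
    have := (legendreSym.eq_one_iff q hpne0).mp hleg
    rwa [show (((p:ℤ)) : ZMod q) = ((p:ℕ) : ZMod q) by push_cast; ring] at this
  -- 2q is a square mod p
  have hl2 : legendreSym p (2 : ℤ) = -1 := (legendreSym.eq_neg_one_iff p).mpr h2nsp
  have h2qne0 : ((2 * q : ℤ) : ZMod p) ≠ 0 := by
    intro h
    rw [ZMod.intCast_zmod_eq_zero_iff_dvd] at h
    have h' : (p : ℕ) ∣ 2 * q := by exact_mod_cast h
    rcases (Nat.Prime.dvd_mul hp).mp h' with h'' | h''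
    · have := Nat.le_of_dvd (by norm_num) h''; omega
    · exact hpq ((Nat.prime_dvd_prime_iff_eq hp hq).mp h'')
  have h2qsq : IsSquare (2 * ((q:ℕ) : ZMod p)) := by
    have hm : legendreSym p ((2 : ℤ) * (q : ℤ)) = 1 := by
      rw [legendreSym.mul, hl2, hlq]; ring
    have := (legendreSym.eq_one_iff p (by exact_mod_cast h2qne0)).mp hm
    push_cast at this
    exact this
  -- a is odd
  have hodd : Odd a := by
    rcases Int.even_or_odd a with he | ho
    · exfalso
      have h1 : Odd (a ^ 2) := ⟨(p:ℤ) * q * b ^ 2, by push_cast; linarith⟩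
      obtain ⟨t, ht⟩ := he
      have h2 : Even (a ^ 2) := ⟨2 * t * t, by rw [ht]; ring⟩
      exact (Int.not_odd_iff_even.mpr h2) h1
    · exact ho
  obtain ⟨k, hk⟩ := hodd
  have hb2 : 1 ≤ b ^ 2 := by nlinarith
  have hpq1 : 1 ≤ (p:ℤ) * q := by nlinarith
  have ha1 : 1 < a := by nlinarith
  have hk1 : 1 ≤ k := by omega
  -- b is even
  have hfac : 4 * (k * (k + 1)) = 2 * p * q * b ^ 2 := by linear_combination hpell - (a + 2*k + 1) * hk
  have hbe : (2:ℤ) ∣ b := by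
    have hpodd : ¬ ((2:ℕ):ℤ) ∣ (p:ℤ) := by
      intro h; have : (2:ℕ) ∣ p := by exact_mod_cast h
      omega
    have hqodd : ¬ ((2:ℕ):ℤ) ∣ (q:ℤ) := by
      intro h; have : (2:ℕ) ∣ q := by exact_mod_cast h
      omega
    have h1 : ((2:ℕ):ℤ) ∣ (p:ℤ) * ((q:ℤ) * b ^ 2) := ⟨k * (k+1), by push_cast; linarith⟩
    rcases Int.Prime.dvd_mul' Nat.prime_two h1 with h | h
    · exact absurd h hpodd
    · rcases Int.Prime.dvd_mul' Nat.prime_two h with h' | h'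
      · exact absurd h' hqodd
      · have := Int.Prime.dvd_pow' Nat.prime_two h'
        exact_mod_cast this
  obtain ⟨c, hc⟩ := hbe
  have hcpos : 0 < c := by linarith
  have hkk : k * (k + 1) = 2 * p * q * c ^ 2 := by
    have h4 : (4:ℤ) * (k * (k+1)) = 4 * (2 * p * q * c ^ 2) := by
      linear_combination hfac + 2 * (p:ℤ) * q * (b + 2*c) * hc
    linarith
  have hcop : IsCoprime k (k + 1) := ⟨-1, 1, by ring⟩
  have hkpos : 0 < k := hk1
  have hk1pos : 0 < k + 1 := by linarith
  -- coprimality of 2, p, q over ℤ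
  have c2p : IsCoprime ((2:ℕ):ℤ) ((p:ℕ):ℤ) := int_coprime_of_primes Nat.prime_two hp (by omega)
  have c2q : IsCoprime ((2:ℕ):ℤ) ((q:ℕ):ℤ) := int_coprime_of_primes Nat.prime_two hq (by omega)
  have cpq : IsCoprime ((p:ℕ):ℤ) ((q:ℕ):ℤ) := int_coprime_of_primes hp hq hpq
  have c2p' : IsCoprime (2:ℤ) ((p:ℕ):ℤ) := by exact_mod_cast c2p
  have c2q' : IsCoprime (2:ℤ) ((q:ℕ):ℤ) := by exact_mod_cast c2q
  -- which side each prime divides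
  have hdvd2 : (2:ℤ) ∣ k ∨ (2:ℤ) ∣ (k + 1) := by
    have := Int.Prime.dvd_mul' Nat.prime_two (m := k) (n := k+1) ⟨p * q * c ^ 2, by push_cast; linarith⟩
    exact_mod_cast this
  have hdvdp : ((p:ℕ):ℤ) ∣ k ∨ ((p:ℕ):ℤ) ∣ (k + 1) :=
    Int.Prime.dvd_mul' hp (m := k) (n := k+1) ⟨2 * q * c ^ 2, by push_cast; linarith⟩
  have hdvdq : ((q:ℕ):ℤ) ∣ k ∨ ((q:ℕ):ℤ) ∣ (k + 1) :=
    Int.Prime.dvd_mul' hq (m := k) (n := k+1) ⟨2 * p * c ^ 2, by push_cast; linarith⟩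
  have hp8 : ((p:ℕ) : ZMod 8) = 3 := by rw [← ZMod.natCast_mod p 8, hp3]; rfl
  have hq8 : ((q:ℕ) : ZMod 8) = 7 := by rw [← ZMod.natCast_mod q 8, hq7]; rfl
  rcases hdvd2 with h2 | h2 <;> rcases hdvdp with hpd | hpd <;> rcases hdvdq with hqd | hqd
  -- case 1 : 2,p,q ∣ k : minimality contradiction
  · exfalso
    obtain ⟨u, v, hu, hv, hke, hk1e, hce⟩ := factor_helper (2*p*q) 1 k (k+1) c
      (by positivity) one_pos hkpos hk1pos hcpos hcop
      ((c2q'.mul_left cpq).mul_dvd (c2p'.mul_dvd h2 hpd) hqd) (one_dvd _)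
      (by linear_combination hkk)
    have heq2 : v ^ 2 - 2 * p * q * u ^ 2 = 1 := by linear_combination hke - hk1e
    have hle := hmin v u hv hu heq2
    have hvv : a * a ≤ v * v := mul_le_mul hle hle (le_of_lt ha) (by linarith)
    nlinarith [hvv, hk1]
  -- case 2 : 2,p ∣ k, q ∣ k+1 : contradiction mod q
  · exfalso
    obtain ⟨u, v, hu, hv, hke, hk1e, hce⟩ := factor_helper (2*p) q k (k+1) c
      (by positivity) hqpos hkpos hk1pos hcpos hcop
      (c2p'.mul_dvd h2 hpd) hqd (by linear_combination hkk)
    have heqn : (q:ℤ) * v ^ 2 - 2 * p * u ^ 2 = 1 := by linear_combination hke - hk1e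
    have hcast := congrArg (fun z : ℤ => (z : ZMod q)) heqn
    push_cast at hcast
    rw [ZMod.natCast_self] at hcast
    apply hneg1q
    apply neg_one_square_trick (h2sq.mul hpsq)
    exact ⟨(u : ZMod q), by linear_combination -hcast⟩
  -- case 3 : 2,q ∣ k, p ∣ k+1 : contradiction mod p
  · exfalso
    obtain ⟨u, v, hu, hv, hke, hk1e, hce⟩ := factor_helper (2*q) p k (k+1) c
      (by positivity) hppos hkpos hk1pos hcpos hcop
      (c2q'.mul_dvd h2 hqd) hpd (by linear_combination hkk)
    have heqn : (p:ℤ) * v ^ 2 - 2 * q * u ^ 2 = 1 := by linear_combination hke - hk1e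
    have hcast := congrArg (fun z : ℤ => (z : ZMod p)) heqn
    push_cast at hcast
    rw [ZMod.natCast_self] at hcast
    apply hneg1p
    apply neg_one_square_trick h2qsq
    exact ⟨(u : ZMod p), by linear_combination -hcast⟩
  -- case 4 : 2 ∣ k, p,q ∣ k+1 : contradiction mod 8
  · exfalso
    obtain ⟨u, v, hu, hv, hke, hk1e, hce⟩ := factor_helper 2 (p*q) k (k+1) c
      two_pos (by positivity) hkpos hk1pos hcpos hcop
      h2 (cpq.mul_dvd hpd hqd) (by linear_combination hkk)
    have heqn : (p:ℤ) * q * v ^ 2 - 2 * u ^ 2 = 1 := by linear_combination hke - hk1e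
    have hcast := congrArg (fun z : ℤ => (z : ZMod 8)) heqn
    push_cast at hcast
    rw [hp8, hq8] at hcast
    exact mod8_case4 (u : ZMod 8) (v : ZMod 8) (by linear_combination hcast)
  -- case 5 : p,q ∣ k, 2 ∣ k+1 : contradiction mod 8
  · exfalso
    obtain ⟨u, v, hu, hv, hke, hk1e, hce⟩ := factor_helper (p*q) 2 k (k+1) c
      (by positivity) two_pos hkpos hk1pos hcpos hcop
      (cpq.mul_dvd hpd hqd) h2 (by linear_combination hkk)
    have heqn : 2 * v ^ 2 - (p:ℤ) * q * u ^ 2 = 1 := by linear_combination hke - hk1e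
    have hcast := congrArg (fun z : ℤ => (z : ZMod 8)) heqn
    push_cast at hcast
    rw [hp8, hq8] at hcast
    exact mod8_case5 (u : ZMod 8) (v : ZMod 8) (by linear_combination hcast)
  -- case 6 : p ∣ k, 2,q ∣ k+1 : contradiction mod q
  · exfalso
    obtain ⟨u, v, hu, hv, hke, hk1e, hce⟩ := factor_helper p (2*q) k (k+1) c
      hppos (by positivity) hkpos hk1pos hcpos hcop
      hpd (c2q'.mul_dvd h2 hqd) (by linear_combination hkk)
    have heqn : 2 * (q:ℤ) * v ^ 2 - p * u ^ 2 = 1 := by linear_combination hke - hk1e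
    have hcast := congrArg (fun z : ℤ => (z : ZMod q)) heqn
    push_cast at hcast
    rw [ZMod.natCast_self] at hcast
    apply hneg1q
    apply neg_one_square_trick hpsq
    exact ⟨(u : ZMod q), by linear_combination -hcast⟩
  -- case 7 : q ∣ k, 2,p ∣ k+1 : the good case
  · obtain ⟨u, v, hu, hv, hke, hk1e, hce⟩ := factor_helper q (2*p) k (k+1) c
      hqpos (by positivity) hkpos hk1pos hcpos hcop
      hqd (c2p'.mul_dvd h2 hpd) (by linear_combination hkk)
    refine ⟨⟨2 * (q:ℤ) * u, ?_⟩, u, 2 * v, hu, by linarith, ?_, ?_, ?_, ?_⟩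
    · linear_combination 4 * (q:ℤ) * hke + 2 * (q:ℤ) * hk
    · linear_combination hc + 2 * hce
    · linear_combination hk + 2 * hke
    · linear_combination hk + 2 * hk1e
    · linear_combination 2 * hke - 2 * hk1e
  -- case 8 : 2,p,q ∣ k+1 : contradiction mod p
  · exfalso
    obtain ⟨u, v, hu, hv, hke, hk1e, hce⟩ := factor_helper 1 (2*p*q) k (k+1) c
      one_pos (by positivity) hkpos hk1pos hcpos hcop
      (one_dvd _) ((c2q'.mul_left cpq).mul_dvd (c2p'.mul_dvd h2 hpd) hqd)
      (by linear_combination hkk)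
    have heqn : 2 * (p:ℤ) * q * v ^ 2 - u ^ 2 = 1 := by linear_combination hke - hk1e
    have hcast := congrArg (fun z : ℤ => (z : ZMod p)) heqn
    push_cast at hcast
    rw [ZMod.natCast_self] at hcast
    apply hneg1p
    apply neg_one_square_trick (IsSquare.one (α := ZMod p))
    exact ⟨(u : ZMod p), by linear_combination -hcast⟩
end

section
/- Let p be a prime with p ≡ 3 (mod 8), and let (c, d) be the fundamental solution of the Pell equation c² − 2p·d² = 1 with c, d positive integers, ε_{2p} = c + d√(2p). Then 2ε_{2p} is a square in Q(√(2p)), i.e., there exist integers d₁, d₂ with −d₁² + 2p·d₂² = 2 and 2ε_{2p} = (d₁ + d₂√(2p))². -/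
/-- If `p ≡ 3 (mod 8)` and `(c, d)` is the fundamental solution of `X² − 2p·Y² = 1`,
then there are positive integers `d₁, d₂` with `d = d₁d₂`, `c − 1 = d₁²`,
`c + 1 = 2p·d₂²`, hence `−d₁² + 2p·d₂² = 2` and `2ε_{2p} = (d₁ + d₂√(2p))²`,
i.e. `2c = d₁² + 2p·d₂²`. -/
theorem stmt_9 (p : ℕ) (hp : p.Prime) (hp3 : p % 8 = 3)
    (c d : ℤ) (hc : 0 < c) (hd : 0 < d)
    (hpell : c ^ 2 - 2 * p * d ^ 2 = 1)
    (hmin : ∀ c' d' : ℤ, 0 < c' → 0 < d' → c' ^ 2 - 2 * p * d' ^ 2 = 1 → c ≤ c') :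
    ∃ d₁ d₂ : ℤ, 0 < d₁ ∧ 0 < d₂ ∧ d = d₁ * d₂ ∧
      c - 1 = d₁ ^ 2 ∧ c + 1 = 2 * p * d₂ ^ 2 ∧
      -d₁ ^ 2 + 2 * p * d₂ ^ 2 = 2 ∧ 2 * c = d₁ ^ 2 + 2 * p * d₂ ^ 2 := by
  haveI : Fact p.Prime := ⟨hp⟩
  have hp5 : 3 ≤ p := by omega
  have hpZ : (3:ℤ) ≤ (p:ℤ) := by exact_mod_cast hp5
  have hpprime : Prime (p:ℤ) := Nat.prime_iff_prime_int.mp hp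
  have hpnd2 : ¬ ((p:ℤ) ∣ 2) := by
    intro h; have := Int.le_of_dvd (by norm_num) h; omega
  have hd1 : 1 ≤ d := hd
  -- c ≥ 3
  have hc3 : 3 ≤ c := by nlinarith [sq_nonneg (d - 1)]
  -- c is odd
  have hcodd : Odd c := by
    rcases Int.even_or_odd c with he | ho
    · exfalso
      obtain ⟨m, hm⟩ := he
      have h2 : (2:ℤ) ∣ 1 := ⟨2*m^2 - (p:ℤ)*d^2, by subst hm; linear_combination -hpell⟩
      norm_num at h2
    · exact ho
  obtain ⟨k, hk⟩ := hcodd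
  subst hk
  have hk1 : 1 ≤ k := by omega
  -- p * d ^ 2 = 2k² + 2k
  have h1 : 2*((p:ℤ)*d^2) = 4*(k^2+k) := by linear_combination -hpell
  -- d is even
  have hdeven : (2:ℤ) ∣ d := by
    have h2 : (2:ℤ) ∣ (p:ℤ)*d^2 := ⟨k^2 + k, by linarith⟩
    rcases (Int.prime_two.dvd_mul.mp h2) with h | h
    · exfalso
      have : (2:ℕ) ∣ p := by exact_mod_cast h
      omega
    · exact Int.prime_two.dvd_of_dvd_pow h
  obtain ⟨e, he⟩ := hdeven
  have he1 : 1 ≤ e := by omega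
  -- key equation
  have key : k * (k+1) = 2*(p:ℤ)*e^2 := by
    subst he; nlinarith [h1]
  have hco : IsCoprime k (k+1) := ⟨-1, 1, by ring⟩
  have posfac : ∀ y : ℤ, 0 < (p:ℤ) * y → 0 < y := by
    intro y h
    rcases mul_pos_iff.mp h with ⟨_, h2⟩ | ⟨h1, _⟩
    · exact h2
    · linarith
  -- splitting lemma
  have sqsplit : ∀ m n f : ℤ, 0 < m → 0 < n → IsCoprime m n → m * n = f^2 →
      ∃ s t : ℤ, 0 < s ∧ 0 < t ∧ m = s^2 ∧ n = t^2 := by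
    intro m n f hm hn hcop heq
    obtain ⟨s, hs⟩ := Int.sq_of_isCoprime hcop heq
    obtain ⟨t, ht⟩ := Int.sq_of_isCoprime hcop.symm (by rw [mul_comm] at heq; exact heq)
    have hms : m = s^2 := by
      rcases hs with h | h
      · exact h
      · exfalso; nlinarith [sq_nonneg s]
    have hnt : n = t^2 := by
      rcases ht with h | h
      · exact h
      · exfalso; nlinarith [sq_nonneg t]
    refine ⟨|s|, |t|, ?_, ?_, by rw [sq_abs]; exact hms, by rw [sq_abs]; exact hnt⟩
    · exact abs_pos.mpr (by rintro rfl; simp at hms; omega)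
    · exact abs_pos.mpr (by rintro rfl; simp at hnt; omega)
  have hpk : (p:ℤ) ∣ k ∨ (p:ℤ) ∣ (k+1) := by
    refine hpprime.dvd_mul.mp ⟨2*e^2, ?_⟩
    rw [key]; ring
  rcases Int.even_or_odd k with hke | hko
  · obtain ⟨m, hm⟩ := hke
    rcases hpk with hpk | hpk
    · -- k even and p ∣ k : smaller Pell solution, contradiction with minimality
      exfalso
      have hpm : (p:ℤ) ∣ m := by
        rcases hpprime.dvd_mul.mp (show (p:ℤ) ∣ 2*m by rw [show (2:ℤ)*m = k by omega]; exact hpk)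
          with h | h
        · exact absurd h hpnd2
        · exact h
      obtain ⟨m', hm'⟩ := hpm
      have key2 : m' * (k+1) = e^2 := by
        have h2 : (2*(p:ℤ)) * (m' * (k+1)) = (2*(p:ℤ)) * e^2 := by
          rw [hm'] at hm
          linear_combination key - (k+1) * hm
        exact mul_left_cancel₀ (by positivity) h2
      have hcop2 : IsCoprime m' (k+1) :=
        hco.of_isCoprime_of_dvd_left ⟨2*(p:ℤ), by rw [hm, hm']; ring⟩
      have hm'pos : 0 < m' := by
        refine posfac m' ?_
        have : k = (p:ℤ)*m' + (p:ℤ)*m' := by rw [hm, hm']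
        linarith
      obtain ⟨s, t, hs, ht, hseq, hteq⟩ := sqsplit m' (k+1) e hm'pos (by omega) hcop2 key2
      have hpell' : t^2 - 2*(p:ℤ)*s^2 = 1 := by
        rw [← hteq, ← hseq]
        have : k = 2*(p:ℤ)*m' := by rw [hm, hm']; ring
        linarith [this]
      have := hmin t s ht hs hpell'
      nlinarith [hteq]
    · -- main case: k even, p ∣ k+1
      obtain ⟨n, hn⟩ := hpk
      have key2 : m * n = e^2 := by
        have h2 : (2*(p:ℤ)) * (m * n) = (2*(p:ℤ)) * e^2 := by
          rw [hn] at key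
          linear_combination key - (p:ℤ)*n*hm
        exact mul_left_cancel₀ (by positivity) h2
      have hcop2 : IsCoprime m n :=
        (hco.of_isCoprime_of_dvd_left ⟨2, by omega⟩).of_isCoprime_of_dvd_right
          ⟨(p:ℤ), by rw [hn]; ring⟩
      have hmpos : 0 < m := by omega
      have hnpos : 0 < n := posfac n (by linarith)
      obtain ⟨s, t, hs, ht, hseq, hteq⟩ := sqsplit m n e hmpos hnpos hcop2 key2
      have hest : e = s * t := by
        have h0 : (e - s*t) * (e + s*t) = 0 := by
          rw [hseq, hteq] at key2; linear_combination -key2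
        rcases mul_eq_zero.mp h0 with h | h
        · linarith
        · exfalso; nlinarith
      have hd1pos : 0 < 2*s := by positivity
      refine ⟨2*s, t, hd1pos, ht, ?_, ?_, ?_, ?_, ?_⟩
      · rw [he, hest]; ring
      · rw [hseq] at hm; linear_combination 2 * hm
      · rw [hteq] at hn; linear_combination 2 * hn
      · rw [hseq] at hm; rw [hteq] at hn; linear_combination 2*hm - 2*hn
      · rw [hseq] at hm; rw [hteq] at hn; linear_combination 2*hn + 2*hm
  · exfalso
    obtain ⟨m, hm⟩ := hko
    rcases hpk with hpk | hpk
    · -- k odd, p ∣ k : 2 would be a square mod p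
      obtain ⟨u, hu⟩ := hpk
      have key2 : u * (m+1) = e^2 := by
        have h2 : (2*(p:ℤ)) * (u * (m+1)) = (2*(p:ℤ)) * e^2 := by
          rw [hu] at key
          have hk2 : k + 1 = 2*(m+1) := by omega
          linear_combination key - (p:ℤ)*u*hk2 + (p:ℤ)*u*hu
        exact mul_left_cancel₀ (by positivity) h2
      have hcop2 : IsCoprime u (m+1) :=
        (hco.of_isCoprime_of_dvd_left ⟨(p:ℤ), by rw [hu]; ring⟩).of_isCoprime_of_dvd_right
          ⟨2, by omega⟩
      have hupos : 0 < u := posfac u (by rw [← hu]; linarith)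
      obtain ⟨s, t, hs, ht, hseq, hteq⟩ := sqsplit u (m+1) e hupos (by omega) hcop2 key2
      -- 4 t² - 2 p s² = 2
      have h2 : (4:ℤ)*t^2 - 2*(p:ℤ)*s^2 = 2 := by
        have h3 : k = (p:ℤ) * s^2 := by rw [hu, hseq]
        have h4 : k + 1 = 2 * t^2 := by
          rw [show k + 1 = 2*(m+1) by omega, hteq]
        linarith
      have hsq : IsSquare (2 : ZMod p) := by
        refine ⟨2*t, ?_⟩
        have hcast := congrArg (fun z : ℤ => (z : ZMod p)) h2
        push_cast at hcast
        rw [ZMod.natCast_self] at hcast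
        linear_combination -hcast
      rw [ZMod.exists_sq_eq_two_iff (by omega)] at hsq
      omega
    · -- k odd, p ∣ k+1 : -1 would be a square mod p
      have hpv : (p:ℤ) ∣ (m+1) := by
        rcases hpprime.dvd_mul.mp (show (p:ℤ) ∣ 2*(m+1) by
          rw [show (2:ℤ)*(m+1) = k + 1 by omega]; exact hpk) with h | h
        · exact absurd h hpnd2
        · exact h
      obtain ⟨w, hw⟩ := hpv
      have key2 : k * w = e^2 := by
        have h2 : (2*(p:ℤ)) * (k * w) = (2*(p:ℤ)) * e^2 := by
          have : k + 1 = 2*((p:ℤ)*w) := by rw [← hw]; omega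
          linear_combination key - k * this
        exact mul_left_cancel₀ (by positivity) h2
      have hcop2 : IsCoprime k w :=
        hco.of_isCoprime_of_dvd_right ⟨2*(p:ℤ), by rw [show k+1 = 2*(m+1) by omega, hw]; ring⟩
      have hwpos : 0 < w := posfac w (by linarith)
      obtain ⟨s, t, hs, ht, hseq, hteq⟩ := sqsplit k w e (by omega) hwpos hcop2 key2
      -- 2 s² - 4 p t² = -2
      have h2 : (2:ℤ)*s^2 - 4*(p:ℤ)*t^2 = -2 := by
        have h3 : k = s^2 := hseq
        have h4 : k + 1 = 2 * ((p:ℤ) * t^2) := by rw [← hteq, ← hw]; omega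
        linarith
      have h2ne : (2 : ZMod p) ≠ 0 := by
        intro h
        have : (p:ℤ) ∣ 2 := by
          exact_mod_cast (ZMod.natCast_eq_zero_iff 2 p).mp (by exact_mod_cast h)
        exact hpnd2 this
      have hsq : IsSquare (-1 : ZMod p) := by
        refine ⟨(s : ZMod p), ?_⟩
        have hcast := congrArg (fun z : ℤ => (z : ZMod p)) h2
        push_cast at hcast
        rw [ZMod.natCast_self] at hcast
        have h5 : (2 : ZMod p) * (-1) = 2 * ((s:ZMod p) * (s:ZMod p)) := by
          linear_combination -hcast
        exact (mul_left_cancel₀ h2ne h5)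
      rw [ZMod.exists_sq_eq_neg_one_iff] at hsq
      omega
end

section
/- Let p, q be primes with q ≡ 7 (mod 8), p ≡ 5 (mod 8), and (p/q) = 1. Then in the Pell equation X² − 2pq·Y² = 1 with fundamental solution (x, y), the case x − 1 = p·y₁² and x + 1 = 2q·y₂² (for integers y₁, y₂) is impossible. -/
/-- If `q ≡ 7 (mod 8)`, `p ≡ 5 (mod 8)`, `(p/q) = 1`, and `(x, y)` is the fundamental
solution of `X² − 2pq·Y² = 1`, then the case `x − 1 = p·y₁²`, `x + 1 = 2q·y₂²` is
impossible. -/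
theorem stmt_10 (p q : ℕ) (hp : p.Prime) (hq : q.Prime)
    (hq7 : q % 8 = 7) (hp5 : p % 8 = 5)
    (hleg : @legendreSym q ⟨hq⟩ (p : ℤ) = 1)
    (x y : ℤ) (hx : 0 < x) (hy : 0 < y)
    (hpell : x ^ 2 - 2 * p * q * y ^ 2 = 1)
    (hmin : ∀ x' y' : ℤ, 0 < x' → 0 < y' → x' ^ 2 - 2 * p * q * y' ^ 2 = 1 → x ≤ x') :
    ¬ ∃ y₁ y₂ : ℤ, x - 1 = p * y₁ ^ 2 ∧ x + 1 = 2 * q * y₂ ^ 2 := by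
  haveI : Fact q.Prime := ⟨hq⟩
  rintro ⟨y₁, y₂, h1, h2⟩
  have key : 2 * (q : ℤ) * y₂ ^ 2 - (p : ℤ) * y₁ ^ 2 = 2 := by linarith
  have hp0 : ((p : ℤ) : ZMod q) ≠ 0 := by
    intro h
    rw [← legendreSym.eq_zero_iff q (p : ℤ)] at h
    omega
  obtain ⟨s, hs⟩ := (legendreSym.eq_one_iff q hp0).mp hleg
  have hcast : (((2 * (q : ℤ) * y₂ ^ 2 - (p : ℤ) * y₁ ^ 2 : ℤ)) : ZMod q) = ((2 : ℤ) : ZMod q) := by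
    rw [key]
  push_cast at hcast
  rw [ZMod.natCast_self] at hcast
  have hsq : IsSquare (-2 : ZMod q) := by
    refine ⟨s * (y₁ : ZMod q), ?_⟩
    have hps : ((p : ℤ) : ZMod q) = ((p : ℕ) : ZMod q) := by push_cast; ring
    rw [hps] at hs
    linear_combination hcast + (y₁ : ZMod q) ^ 2 * hs
  rw [ZMod.exists_sq_eq_neg_two_iff (by omega : q ≠ 2)] at hsq
  omega
end

section
/- Let p, q be primes with q ≡ 7 (mod 8), p ≡ 5 (mod 8), and (p/q) = 1. Then in the Pell equation X² − 2pq·Y² = 1 with fundamental solution (x, y), there exist no integers y₁, y₂ such that (x ± 1 = y₁² and x ∓ 1 = 2pq·y₂²), i.e., neither x+1 nor x−1 can be a perfect square with the complementary factor equal to 2pq times a square. -/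
/-- If `q ≡ 7 (mod 8)`, `p ≡ 5 (mod 8)`, `(p/q) = 1`, and `(x, y)` is the fundamental
solution of `X² − 2pq·Y² = 1`, then there are no integers `y₁, y₂` with
`x ± 1 = y₁²` and `x ∓ 1 = 2pq·y₂²`. -/
theorem stmt_11 (p q : ℕ) (hp : p.Prime) (hq : q.Prime)
    (hq7 : q % 8 = 7) (hp5 : p % 8 = 5)
    (hleg : @legendreSym q ⟨hq⟩ (p : ℤ) = 1)
    (x y : ℤ) (hx : 0 < x) (hy : 0 < y)
    (hpell : x ^ 2 - 2 * p * q * y ^ 2 = 1)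
    (hmin : ∀ x' y' : ℤ, 0 < x' → 0 < y' → x' ^ 2 - 2 * p * q * y' ^ 2 = 1 → x ≤ x') :
    ¬ ∃ y₁ y₂ : ℤ, (x + 1 = y₁ ^ 2 ∧ x - 1 = 2 * p * q * y₂ ^ 2) ∨
      (x - 1 = y₁ ^ 2 ∧ x + 1 = 2 * p * q * y₂ ^ 2) := by
  haveI : Fact p.Prime := ⟨hp⟩
  have hpne2 : p ≠ 2 := by omega
  rintro ⟨y₁, y₂, ⟨h1, h2⟩ | ⟨h1, h2⟩⟩
  · -- y₁² = 2pq y₂² + 2, so 2 is a square mod p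
    have he : (y₁ : ℤ) ^ 2 = (p : ℤ) * (2 * q * y₂ ^ 2) + 2 := by linarith
    have hc : ((y₁ : ZMod p)) ^ 2 = 2 := by
      have := congrArg (fun z : ℤ => (z : ZMod p)) he
      push_cast [ZMod.natCast_self] at this
      simpa using this
    have : IsSquare (2 : ZMod p) := ⟨(y₁ : ZMod p), by rw [← hc]; ring⟩
    rw [ZMod.exists_sq_eq_two_iff hpne2] at this
    omega
  · have he : (y₁ : ℤ) ^ 2 = (p : ℤ) * (2 * q * y₂ ^ 2) + (-2) := by linarith
    have hc : ((y₁ : ZMod p)) ^ 2 = -2 := by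
      have := congrArg (fun z : ℤ => (z : ZMod p)) he
      push_cast [ZMod.natCast_self] at this
      simpa using this
    have : IsSquare (-2 : ZMod p) := ⟨(y₁ : ZMod p), by rw [← hc]; ring⟩
    rw [ZMod.exists_sq_eq_neg_two_iff hpne2] at this
    omega
end

section
/- Let p be a prime with p ≡ 3 (mod 8) or p ≡ 5 (mod 8), and let n ≥ 1. Then p splits into exactly 2 prime ideals in the cyclotomic field Q(ζ_{2^{n+2}}), while p is inert in the maximal real subfield Q(ζ_{2^{n+2}})⁺. -/
lemma key_pow (p : ℕ) (hp8 : p % 8 = 3 ∨ p % 8 = 5) :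
    ∀ j, 1 ≤ j → p ^ 2 ^ j % 2 ^ (j + 3) = 2 ^ (j + 2) + 1 := by
  intro j hj
  induction j, hj using Nat.le_induction with
  | base =>
    have h : p ^ 2 % 16 = (p % 16) ^ 2 % 16 := Nat.pow_mod p 2 16
    have h2 : p % 16 % 8 = p % 8 := Nat.mod_mod_of_dvd p (by norm_num)
    have hlt : p % 16 < 16 := Nat.mod_lt _ (by norm_num)
    norm_num
    set r := p % 16 with hr
    interval_cases r <;> omega
  | succ j hj ih =>
    set a := p ^ 2 ^ j with ha
    have hpow : p ^ 2 ^ (j + 1) = a ^ 2 := by rw [pow_succ, pow_mul]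
    have hdecomp : a = 2 ^ (j + 3) * (a / 2 ^ (j + 3)) + (2 ^ (j + 2) + 1) := by
      conv_lhs => rw [← Nat.div_add_mod a (2 ^ (j + 3))]
      rw [ih]
    set m := a / 2 ^ (j + 3) with hm
    have hsq : a ^ 2 = 2 ^ (j + 4) * (2 ^ (j + 2) * m ^ 2 + (2 ^ (j + 2) + 1) * m + 2 ^ j)
        + (2 ^ (j + 3) + 1) := by
      rw [hdecomp]; ring
    have h1 : (1 : ℕ) < 2 ^ (j + 3) := Nat.one_lt_two_pow (by omega)
    have h2 : 2 ^ (j + 4) = 2 * 2 ^ (j + 3) := by ring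
    have e1 : j + 1 + 3 = j + 4 := by omega
    have e2 : j + 1 + 2 = j + 3 := by omega
    rw [e1, e2, hpow, hsq, Nat.mul_add_mod]
    exact Nat.mod_eq_of_lt (by omega)


/-- If `p ≡ 3` or `5 (mod 8)` is prime and `n ≥ 1`, then `p` splits into exactly `2`
primes in `ℚ(ζ_{2^{n+2}})` and is inert in its maximal real subfield: equivalently,
the order of `p` in `(ℤ/2^{n+2}ℤ)ˣ` is `2^n`, and the order of its image in
`(ℤ/2^{n+2}ℤ)ˣ/{±1}` is also `2^n`. -/
theorem stmt_13 (p n : ℕ) (hp : p.Prime) (hp8 : p % 8 = 3 ∨ p % 8 = 5) (hn : 1 ≤ n)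
    (u : (ZMod (2 ^ (n + 2)))ˣ) (hu : (u : ZMod (2 ^ (n + 2))) = (p : ZMod (2 ^ (n + 2)))) :
    orderOf u = 2 ^ n ∧
      orderOf ((QuotientGroup.mk u :
        (ZMod (2 ^ (n + 2)))ˣ ⧸ Subgroup.zpowers (-1 : (ZMod (2 ^ (n + 2)))ˣ))) = 2 ^ n := by
  haveI : Fact (Nat.Prime 2) := ⟨Nat.prime_two⟩
  have hN1 : 1 < 2 ^ (n + 2) := Nat.one_lt_two_pow (by omega)
  have h1 : p ^ 2 ^ n % 2 ^ (n + 2) = 1 := by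
    have hk := key_pow p hp8 n hn
    have hd : 2 ^ (n + 2) ∣ 2 ^ (n + 3) := pow_dvd_pow 2 (by omega)
    calc p ^ 2 ^ n % 2 ^ (n + 2)
        = p ^ 2 ^ n % 2 ^ (n + 3) % 2 ^ (n + 2) := (Nat.mod_mod_of_dvd _ hd).symm
      _ = (2 ^ (n + 2) + 1) % 2 ^ (n + 2) := by rw [hk]
      _ = 1 % 2 ^ (n + 2) := Nat.add_mod_left _ 1
      _ = 1 := Nat.mod_eq_of_lt hN1
  have hB : p ^ 2 ^ (n - 1) % 2 ^ (n + 2) ≠ 1 ∧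
      p ^ 2 ^ (n - 1) % 2 ^ (n + 2) ≠ 2 ^ (n + 2) - 1 := by
    rcases Nat.lt_or_ge n 2 with h2 | h2
    · have hn1 : n = 1 := by omega
      subst hn1
      norm_num
      omega
    · have hk := key_pow p hp8 (n - 1) (by omega)
      have e1 : n - 1 + 3 = n + 2 := by omega
      have e2 : n - 1 + 2 = n + 1 := by omega
      rw [e1, e2] at hk
      have h4 : 4 ≤ 2 ^ (n + 1) := by
        calc (4:ℕ) = 2 ^ 2 := by norm_num
          _ ≤ 2 ^ (n + 1) := Nat.pow_le_pow_right (by norm_num) (by omega)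
      have hNe : 2 ^ (n + 2) = 2 * 2 ^ (n + 1) := by ring
      rw [hk]
      omega
  have hA : u ^ 2 ^ n = 1 := by
    ext
    rw [Units.val_pow_eq_pow_val, Units.val_one, hu, ← Nat.cast_pow,
      ← ZMod.natCast_mod, h1, Nat.cast_one]
  have hBu1 : u ^ 2 ^ (n - 1) ≠ 1 := by
    intro h
    have h' : ((u : ZMod (2 ^ (n + 2))) ^ 2 ^ (n - 1)) = 1 := by
      rw [← Units.val_pow_eq_pow_val, h, Units.val_one]
    rw [hu, ← Nat.cast_pow, ← Nat.cast_one (R := ZMod (2 ^ (n + 2))),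
      ZMod.natCast_eq_natCast_iff] at h'
    have hme : p ^ 2 ^ (n - 1) % 2 ^ (n + 2) = 1 % 2 ^ (n + 2) := h'
    rw [Nat.mod_eq_of_lt hN1] at hme
    exact hB.1 hme
  have hBu2 : u ^ 2 ^ (n - 1) ≠ -1 := by
    intro h
    have hneg : ((2 ^ (n + 2) - 1 : ℕ) : ZMod (2 ^ (n + 2))) = -1 := by
      rw [Nat.cast_sub (by omega : 1 ≤ 2 ^ (n + 2)), ZMod.natCast_self, Nat.cast_one]
      ring
    have h' : ((u : ZMod (2 ^ (n + 2))) ^ 2 ^ (n - 1)) =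
        ((2 ^ (n + 2) - 1 : ℕ) : ZMod (2 ^ (n + 2))) := by
      rw [← Units.val_pow_eq_pow_val, h, hneg, Units.val_neg, Units.val_one]
    rw [hu, ← Nat.cast_pow, ZMod.natCast_eq_natCast_iff] at h'
    have hme : p ^ 2 ^ (n - 1) % 2 ^ (n + 2)
        = (2 ^ (n + 2) - 1) % 2 ^ (n + 2) := h'
    rw [Nat.mod_eq_of_lt (by omega : 2 ^ (n + 2) - 1 < 2 ^ (n + 2))] at hme
    exact hB.2 hme
  obtain ⟨k, rfl⟩ : ∃ k, n = k + 1 := ⟨n - 1, by omega⟩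
  have hk1 : k + 1 - 1 = k := by omega
  rw [hk1] at hBu1 hBu2
  refine ⟨orderOf_eq_prime_pow hBu1 hA, ?_⟩
  apply orderOf_eq_prime_pow
  · intro h
    rw [← QuotientGroup.mk_pow, QuotientGroup.eq_one_iff] at h
    obtain ⟨z, hz⟩ := Subgroup.mem_zpowers_iff.mp h
    rcases Int.even_or_odd z with he | ho
    · rw [Even.neg_one_zpow he] at hz
      exact hBu1 hz.symm
    · obtain ⟨w, rfl⟩ := ho
      rw [zpow_add, zpow_one, zpow_mul] at hz
      have h2 : ((-1 : (ZMod (2 ^ (k + 1 + 2)))ˣ)) ^ (2 : ℤ) = 1 := by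
        rw [zpow_two]; simp
      rw [h2, one_zpow, one_mul] at hz
      exact hBu2 hz.symm
  · rw [← QuotientGroup.mk_pow, hA]
    rfl
end

section
/- Let p and q be primes with q ≡ 7 (mod 8), p ≡ 5 (mod 8), and (p/q) = 1. Then there exist positive integers b₁, b₂ satisfying p·b₁² − q·b₂² = 1. -/
private lemma sq_pos_of_coprime {a b z : ℤ} (h : IsCoprime a b) (hab : a * b = z ^ 2)
    (ha : 0 < a) : ∃ u : ℤ, a = u ^ 2 := by
  obtain ⟨u, hu | hu⟩ := Int.sq_of_isCoprime h hab
  · exact ⟨u, hu⟩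
  · exfalso; nlinarith [sq_nonneg u]

/-- Splitting a coprime factorization of `p*q*z^2`. -/
private lemma split_lemma {p q m n z : ℤ} (hp : Prime p) (hq : Prime q)
    (hp0 : 0 < p) (hq0 : 0 < q) (hpq : ¬ p ∣ q) (hqp : ¬ q ∣ p)
    (hco : IsCoprime m n) (hm : 0 < m) (hn : 0 < n) (h : m * n = p * q * z ^ 2) :
    (∃ u v : ℤ, m = u ^ 2 ∧ n = p * q * v ^ 2) ∨
    (∃ u v : ℤ, m = p * q * u ^ 2 ∧ n = v ^ 2) ∨
    (∃ u v : ℤ, m = p * u ^ 2 ∧ n = q * v ^ 2) ∨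
    (∃ u v : ℤ, m = q * u ^ 2 ∧ n = p * v ^ 2) := by
  have hpd : p ∣ m * n := ⟨q * z ^ 2, by linarith [h]⟩
  have hqd : q ∣ m * n := ⟨p * z ^ 2, by rw [h]; ring⟩
  rcases (hp.dvd_mul.mp hpd) with hpm | hpn <;> rcases (hq.dvd_mul.mp hqd) with hqm | hqn
  · -- p ∣ m, q ∣ m
    obtain ⟨m₁, hm₁⟩ := hpm
    have : q ∣ p * m₁ := hm₁ ▸ hqm
    obtain ⟨m₂, hm₂⟩ := (hq.dvd_mul.mp this).resolve_left hqp
    have hmval : m = p * q * m₂ := by rw [hm₁, hm₂]; ring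
    have hz : m₂ * n = z ^ 2 := by
      have h0 : p * q ≠ 0 := mul_ne_zero hp.ne_zero hq.ne_zero
      apply mul_left_cancel₀ h0
      calc p * q * (m₂ * n) = m * n := by rw [hmval]; ring
        _ = p * q * z ^ 2 := h
    have hm₂pos : 0 < m₂ := by nlinarith [mul_pos hp0 hq0]
    have hco' : IsCoprime m₂ n := hco.of_isCoprime_of_dvd_left ⟨p * q, by rw [hmval]; ring⟩
    obtain ⟨u, hu⟩ := sq_pos_of_coprime hco' hz hm₂pos
    obtain ⟨v, hv⟩ := sq_pos_of_coprime hco'.symm (by rw [← hz]; ring) hn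
    exact Or.inr (Or.inl ⟨u, v, by rw [hmval, hu], hv⟩)
  · -- p ∣ m, q ∣ n
    obtain ⟨m₁, hm₁⟩ := hpm
    obtain ⟨n₁, hn₁⟩ := hqn
    have hz : m₁ * n₁ = z ^ 2 := by
      have h0 : p * q ≠ 0 := mul_ne_zero hp.ne_zero hq.ne_zero
      apply mul_left_cancel₀ h0
      calc p * q * (m₁ * n₁) = m * n := by rw [hm₁, hn₁]; ring
        _ = p * q * z ^ 2 := h
    have hm₁pos : 0 < m₁ := by nlinarith
    have hn₁pos : 0 < n₁ := by nlinarith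
    have hco' : IsCoprime m₁ n₁ :=
      (hco.of_isCoprime_of_dvd_left ⟨p, by rw [hm₁]; ring⟩).of_isCoprime_of_dvd_right
        ⟨q, by rw [hn₁]; ring⟩
    obtain ⟨u, hu⟩ := sq_pos_of_coprime hco' hz hm₁pos
    obtain ⟨v, hv⟩ := sq_pos_of_coprime hco'.symm (by rw [← hz]; ring) hn₁pos
    exact Or.inr (Or.inr (Or.inl ⟨u, v, by rw [hm₁, hu], by rw [hn₁, hv]⟩))
  · -- p ∣ n, q ∣ m
    obtain ⟨n₁, hn₁⟩ := hpn
    obtain ⟨m₁, hm₁⟩ := hqm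
    have hz : m₁ * n₁ = z ^ 2 := by
      have h0 : p * q ≠ 0 := mul_ne_zero hp.ne_zero hq.ne_zero
      apply mul_left_cancel₀ h0
      calc p * q * (m₁ * n₁) = m * n := by rw [hm₁, hn₁]; ring
        _ = p * q * z ^ 2 := h
    have hm₁pos : 0 < m₁ := by nlinarith
    have hn₁pos : 0 < n₁ := by nlinarith
    have hco' : IsCoprime m₁ n₁ :=
      (hco.of_isCoprime_of_dvd_left ⟨q, by rw [hm₁]; ring⟩).of_isCoprime_of_dvd_right
        ⟨p, by rw [hn₁]; ring⟩
    obtain ⟨u, hu⟩ := sq_pos_of_coprime hco' hz hm₁pos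
    obtain ⟨v, hv⟩ := sq_pos_of_coprime hco'.symm (by rw [← hz]; ring) hn₁pos
    exact Or.inr (Or.inr (Or.inr ⟨u, v, by rw [hm₁, hu], by rw [hn₁, hv]⟩))
  · -- p ∣ n, q ∣ n
    obtain ⟨n₁, hn₁⟩ := hpn
    have : q ∣ p * n₁ := hn₁ ▸ hqn
    obtain ⟨n₂, hn₂⟩ := (hq.dvd_mul.mp this).resolve_left hqp
    have hnval : n = p * q * n₂ := by rw [hn₁, hn₂]; ring
    have hz : m * n₂ = z ^ 2 := by
      have h0 : p * q ≠ 0 := mul_ne_zero hp.ne_zero hq.ne_zero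
      apply mul_left_cancel₀ h0
      calc p * q * (m * n₂) = m * n := by rw [hnval]; ring
        _ = p * q * z ^ 2 := h
    have hn₂pos : 0 < n₂ := by nlinarith [mul_pos hp0 hq0]
    have hco' : IsCoprime m n₂ := hco.of_isCoprime_of_dvd_right ⟨p * q, by rw [hnval]; ring⟩
    obtain ⟨u, hu⟩ := sq_pos_of_coprime hco' hz hm
    obtain ⟨v, hv⟩ := sq_pos_of_coprime hco'.symm (by rw [← hz]; ring) hn₂pos
    exact Or.inl ⟨u, v, hu, by rw [hnval, hv]⟩

/-- If `a * v ^ 2 ≡ c mod r` with `v` invertible, the Legendre symbols of `a` and `c` agree. -/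
private lemma leg_key (r : ℕ) [Fact r.Prime] (a c v : ℤ) (hv : ((v : ZMod r)) ≠ 0)
    (h : a * v ^ 2 ≡ c [ZMOD r]) : legendreSym r a = legendreSym r c := by
  have h' : a * v ^ 2 % (r : ℤ) = c % (r : ℤ) := h
  have h1 : legendreSym r (a * v ^ 2) = legendreSym r c := by
    rw [legendreSym.mod r (a * v ^ 2), h', ← legendreSym.mod]
  rwa [legendreSym.mul, legendreSym.sq_one' r hv, mul_one] at h1

private lemma no_small_sol (w x : ℤ) (h1 : 1 < w) (h2 : x ≤ w) (h3 : x = 2 * w ^ 2 - 1) :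
    False := by nlinarith

set_option maxHeartbeats 2000000 in
/-- If `q ≡ 7 (mod 8)`, `p ≡ 5 (mod 8)` are primes with `(p/q) = 1`, then the equation
`p·X² − q·Y² = 1` has a solution in positive integers. -/
theorem stmt_18 (p q : ℕ) (hp : p.Prime) (hq : q.Prime)
    (hq7 : q % 8 = 7) (hp5 : p % 8 = 5)
    (hleg : @legendreSym q ⟨hq⟩ (p : ℤ) = 1) :
    ∃ b₁ b₂ : ℤ, 0 < b₁ ∧ 0 < b₂ ∧ (p : ℤ) * b₁ ^ 2 - q * b₂ ^ 2 = 1 := by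
  haveI : Fact p.Prime := ⟨hp⟩
  haveI : Fact q.Prime := ⟨hq⟩
  have hp2 : p ≠ 2 := by omega
  have hq2 : q ≠ 2 := by omega
  have hpge : 5 ≤ p := by
    rcases Nat.lt_or_ge p 5 with h | h
    · interval_cases p <;> omega
    · exact h
  have hqge : 7 ≤ q := by
    rcases Nat.lt_or_ge q 7 with h | h
    · interval_cases q <;> omega
    · exact h
  have hpq : p ≠ q := by omega
  have hpInt : Prime (p : ℤ) := Nat.prime_iff_prime_int.mp hp
  have hqInt : Prime (q : ℤ) := Nat.prime_iff_prime_int.mp hq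
  have hpndq : ¬ (p : ℤ) ∣ (q : ℤ) := by
    rw [Int.natCast_dvd_natCast]
    exact fun h => hpq ((Nat.prime_dvd_prime_iff_eq hp hq).mp h)
  have hqndp : ¬ (q : ℤ) ∣ (p : ℤ) := by
    rw [Int.natCast_dvd_natCast]
    exact fun h => hpq.symm ((Nat.prime_dvd_prime_iff_eq hq hp).mp h)
  have hp0 : (0 : ℤ) < p := by exact_mod_cast hp.pos
  have hq0 : (0 : ℤ) < q := by exact_mod_cast hq.pos
  -- Legendre symbol values
  have legqp : legendreSym q (p : ℤ) = 1 := hleg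
  have legpq : legendreSym p (q : ℤ) = 1 := by
    rw [← legendreSym.quadratic_reciprocity_one_mod_four (by omega : p % 4 = 1) hq2]
    exact hleg
  have legq_neg1 : legendreSym q (-1) = -1 := by
    rw [legendreSym.at_neg_one hq2]
    exact ZMod.χ₄_nat_three_mod_four (by omega : q % 4 = 3)
  have legp_neg1 : legendreSym p (-1) = 1 := by
    rw [legendreSym.at_neg_one hp2]
    exact ZMod.χ₄_nat_one_mod_four (by omega : p % 4 = 1)
  have legp2 : legendreSym p 2 = -1 := by
    rw [legendreSym.at_two hp2, ZMod.χ₈_nat_eq_if_mod_eight, if_neg (by omega),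
      if_neg (by omega)]
  have legone : ∀ (r : ℕ) [Fact r.Prime], legendreSym r 1 = 1 := by
    intro r _
    simpa using legendreSym.sq_one' r (a := 1) (by simp)
  -- the Pell equation setup
  have hdns : ¬ IsSquare ((p : ℤ) * q) := by
    rintro ⟨r, hr⟩
    have hpr : (p : ℤ) ∣ r := by
      have : (p : ℤ) ∣ r * r := ⟨q, hr.symm⟩
      exact (hpInt.dvd_mul.mp this).elim id id
    obtain ⟨s, hs⟩ := hpr
    have : (q : ℤ) = p * (s * s) := by
      have h2 : (p : ℤ) * q = p * (p * (s * s)) := by rw [hr, hs]; ring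
      exact mul_left_cancel₀ hpInt.ne_zero h2
    exact hpndq ⟨s * s, this⟩
  set d : ℤ := (p : ℤ) * q with hd
  have hd0 : 0 < d := mul_pos hp0 hq0
  obtain ⟨a, ha⟩ := Pell.IsFundamental.exists_of_not_isSquare hd0 hdns
  set x : ℤ := a.x with hx
  set y : ℤ := a.y with hy
  have hprop : x ^ 2 - d * y ^ 2 = 1 := a.prop
  have hx1 : 1 < x := ha.1
  -- helper to derive q ∤ or p ∤ statements will be inline
  rcases Int.even_or_odd x with hxe | hxo
  · -- x even
    obtain ⟨s, hs⟩ := hxe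
    have hco : IsCoprime (x - 1) (x + 1) := ⟨s, 1 - s, by rw [hs]; ring⟩
    have hmn : (x - 1) * (x + 1) = (p : ℤ) * q * y ^ 2 := by
      have : x ^ 2 - 1 = d * y ^ 2 := by linarith [hprop]
      rw [hd] at this; linarith [this]
    have h1 : (0 : ℤ) < x - 1 := by omega
    have h2 : (0 : ℤ) < x + 1 := by omega
    have h2ne : ((2 : ℤ) : ZMod p) ≠ 0 := by
      intro h
      rw [ZMod.intCast_zmod_eq_zero_iff_dvd] at h
      have := Int.le_of_dvd (by norm_num) h
      omega
    rcases split_lemma hpInt hqInt hp0 hq0 hpndq hqndp hco h1 h2 hmn with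
      ⟨u, v, hu, hv⟩ | ⟨u, v, hu, hv⟩ | ⟨u, v, hu, hv⟩ | ⟨u, v, hu, hv⟩
    · -- x-1 = u², x+1 = pq v² : u² ≡ -2 mod p, contradiction
      exfalso
      have hu0 : ((u : ZMod p)) ≠ 0 := by
        intro h
        have hdu : (p : ℤ) ∣ u := by rwa [← ZMod.intCast_zmod_eq_zero_iff_dvd]
        obtain ⟨w, hw⟩ := hdu
        have hx1d : ((x - 1 : ℤ) : ZMod p) = 0 := by
          rw [hu, hw]; push_cast; ring_nf; simp [ZMod.natCast_self]
        have hx2d : ((x + 1 : ℤ) : ZMod p) = 0 := by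
          rw [hv]; push_cast; simp [ZMod.natCast_self]
        apply h2ne
        have : ((x + 1 : ℤ) : ZMod p) - ((x - 1 : ℤ) : ZMod p) = ((2 : ℤ) : ZMod p) := by
          push_cast; ring
        rw [hx1d, hx2d] at this; rw [← this]; ring
      have e1 : (x - 1 : ℤ) = u ^ 2 := hu
      have e2 : (x + 1 : ℤ) = (p : ℤ) * q * v ^ 2 := hv
      have hcong : (1 : ℤ) * u ^ 2 ≡ -2 [ZMOD (p : ℕ)] :=
        Int.modEq_iff_dvd.mpr ⟨-((q : ℤ) * v ^ 2), by linear_combination e1 - e2⟩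
      have := leg_key p 1 (-2) u hu0 hcong
      rw [legone p, show (-2 : ℤ) = -1 * 2 by ring, legendreSym.mul, legp_neg1, legp2] at this
      norm_num at this
    · -- x-1 = pq u², x+1 = v² : v² ≡ 2 mod p, contradiction
      exfalso
      have hv0 : ((v : ZMod p)) ≠ 0 := by
        intro h
        have hdv : (p : ℤ) ∣ v := by rwa [← ZMod.intCast_zmod_eq_zero_iff_dvd]
        obtain ⟨w, hw⟩ := hdv
        apply h2ne
        have e1 : ((x + 1 : ℤ) : ZMod p) = 0 := by
          rw [hv, hw]; push_cast; ring_nf; simp [ZMod.natCast_self]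
        have e2 : ((x - 1 : ℤ) : ZMod p) = 0 := by
          rw [hu]; push_cast; simp [ZMod.natCast_self]
        have : ((x + 1 : ℤ) : ZMod p) - ((x - 1 : ℤ) : ZMod p) = ((2 : ℤ) : ZMod p) := by
          push_cast; ring
        rw [e1, e2] at this; rw [← this]; ring
      have e1 : (x - 1 : ℤ) = (p : ℤ) * q * u ^ 2 := hu
      have e2 : (x + 1 : ℤ) = v ^ 2 := hv
      have hcong : (1 : ℤ) * v ^ 2 ≡ 2 [ZMOD (p : ℕ)] :=
        Int.modEq_iff_dvd.mpr ⟨-((q : ℤ) * u ^ 2), by linear_combination e2 - e1⟩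
      have := leg_key p 1 2 v hv0 hcong
      rw [legone p, legp2] at this
      norm_num at this
    · -- x-1 = p u², x+1 = q v² : q v² ≡ 2 mod p, contradiction
      exfalso
      have hv0 : ((v : ZMod p)) ≠ 0 := by
        intro h
        have hdv : (p : ℤ) ∣ v := by rwa [← ZMod.intCast_zmod_eq_zero_iff_dvd]
        obtain ⟨w, hw⟩ := hdv
        apply h2ne
        have e1 : ((x + 1 : ℤ) : ZMod p) = 0 := by
          rw [hv, hw]; push_cast; ring_nf; simp [ZMod.natCast_self]
        have e2 : ((x - 1 : ℤ) : ZMod p) = 0 := by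
          rw [hu]; push_cast; simp [ZMod.natCast_self]
        have : ((x + 1 : ℤ) : ZMod p) - ((x - 1 : ℤ) : ZMod p) = ((2 : ℤ) : ZMod p) := by
          push_cast; ring
        rw [e1, e2] at this; rw [← this]; ring
      have e1 : (x - 1 : ℤ) = (p : ℤ) * u ^ 2 := hu
      have e2 : (x + 1 : ℤ) = (q : ℤ) * v ^ 2 := hv
      have hcong : (q : ℤ) * v ^ 2 ≡ 2 [ZMOD (p : ℕ)] :=
        Int.modEq_iff_dvd.mpr ⟨-(u ^ 2), by linear_combination e2 - e1⟩
      have := leg_key p q 2 v hv0 hcong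
      rw [legpq, legp2] at this
      norm_num at this
    · -- x-1 = q u², x+1 = p v² : -q u² ≡ 2 mod p, contradiction
      exfalso
      have hu0 : ((u : ZMod p)) ≠ 0 := by
        intro h
        have hdu : (p : ℤ) ∣ u := by rwa [← ZMod.intCast_zmod_eq_zero_iff_dvd]
        obtain ⟨w, hw⟩ := hdu
        apply h2ne
        have e1 : ((x - 1 : ℤ) : ZMod p) = 0 := by
          rw [hu, hw]; push_cast; ring_nf; simp [ZMod.natCast_self]
        have e2 : ((x + 1 : ℤ) : ZMod p) = 0 := by
          rw [hv]; push_cast; simp [ZMod.natCast_self]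
        have : ((x + 1 : ℤ) : ZMod p) - ((x - 1 : ℤ) : ZMod p) = ((2 : ℤ) : ZMod p) := by
          push_cast; ring
        rw [e1, e2] at this; rw [← this]; ring
      have e1 : (x - 1 : ℤ) = (q : ℤ) * u ^ 2 := hu
      have e2 : (x + 1 : ℤ) = (p : ℤ) * v ^ 2 := hv
      have hcong : (-(q : ℤ)) * u ^ 2 ≡ 2 [ZMOD (p : ℕ)] :=
        Int.modEq_iff_dvd.mpr ⟨v ^ 2, by linear_combination e2 - e1⟩
      have := leg_key p (-(q : ℤ)) 2 u hu0 hcong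
      rw [show (-(q : ℤ)) = -1 * q by ring, legendreSym.mul, legp_neg1, legpq, legp2] at this
      norm_num at this
  · -- x odd
    obtain ⟨t, ht⟩ := hxo
    have ht0 : 0 < t := by omega
    have h4 : 4 * (t * (t + 1)) = (p : ℤ) * q * y ^ 2 := by
      have h' : x ^ 2 - 1 = d * y ^ 2 := by linarith [hprop]
      rw [hd, ht] at h'
      linear_combination h'
    -- y is even
    have h2y : (2 : ℤ) ∣ y := by
      have h2pq : ¬ (2 : ℤ) ∣ (p : ℤ) * q := by
        intro h
        have h' : (2 : ℕ) ∣ p * q := by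
          have : ((2 : ℕ) : ℤ) ∣ ((p * q : ℕ) : ℤ) := by push_cast; exact_mod_cast h
          exact_mod_cast this
        rcases (Nat.Prime.dvd_mul Nat.prime_two).mp h' with h'' | h'' <;> omega
      have h2d : (2 : ℤ) ∣ (p : ℤ) * q * y ^ 2 := ⟨2 * (t * (t + 1)), by linear_combination -h4⟩
      rcases Int.prime_two.dvd_mul.mp h2d with h' | h'
      · exact absurd h' h2pq
      · exact Int.prime_two.dvd_of_dvd_pow h'
    obtain ⟨z, hz⟩ := h2y
    have hmn : t * (t + 1) = (p : ℤ) * q * z ^ 2 := by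
      rw [hz] at h4
      have h5 : 4 * (t * (t + 1)) = 4 * ((p : ℤ) * q * z ^ 2) := by linear_combination h4
      exact mul_left_cancel₀ (by norm_num) h5
    have hco : IsCoprime t (t + 1) := ⟨-1, 1, by ring⟩
    have hz0 : z ≠ 0 := by
      intro h
      rw [h] at hmn
      simp only [ne_eq, OfNat.ofNat_ne_zero, not_false_eq_true, zero_pow, mul_zero] at hmn
      have hpos : 0 < t * (t + 1) := mul_pos ht0 (by linarith)
      exact hpos.ne' hmn
    rcases split_lemma hpInt hqInt hp0 hq0 hpndq hqndp hco ht0 (by omega) hmn with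
      ⟨u, v, hu, hv⟩ | ⟨u, v, hu, hv⟩ | ⟨u, v, hu, hv⟩ | ⟨u, v, hu, hv⟩
    · -- t = u², t+1 = pq v² : u² ≡ -1 mod q, contradiction
      exfalso
      have hu0 : ((u : ZMod q)) ≠ 0 := by
        intro h
        have hdu : (q : ℤ) ∣ u := by rwa [← ZMod.intCast_zmod_eq_zero_iff_dvd]
        obtain ⟨w, hw⟩ := hdu
        haveI : Fact (1 < q) := ⟨hq.one_lt⟩
        have e1 : ((t : ℤ) : ZMod q) = 0 := by
          rw [hu, hw]; push_cast; ring_nf; simp [ZMod.natCast_self]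
        have e2 : ((t + 1 : ℤ) : ZMod q) = 0 := by
          rw [hv]; push_cast; simp [ZMod.natCast_self]
        have : ((t + 1 : ℤ) : ZMod q) - ((t : ℤ) : ZMod q) = 1 := by push_cast; ring
        rw [e1, e2] at this
        simpa using this.symm
      have e1 : t = u ^ 2 := hu
      have e2 : (t + 1 : ℤ) = (p : ℤ) * q * v ^ 2 := hv
      have hcong : (1 : ℤ) * u ^ 2 ≡ -1 [ZMOD (q : ℕ)] :=
        Int.modEq_iff_dvd.mpr ⟨-((p : ℤ) * v ^ 2), by linear_combination e1 - e2⟩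
      have := leg_key q 1 (-1) u hu0 hcong
      rw [legone q, legq_neg1] at this
      norm_num at this
    · -- t = pq u², t+1 = v² : smaller Pell solution, contradiction with fundamentality
      exfalso
      set w : ℤ := |v| with hwdef
      set s : ℤ := |u| with hsdef
      have hw2 : w ^ 2 = v ^ 2 := sq_abs v
      have hs2 : s ^ 2 = u ^ 2 := sq_abs u
      have hsol : w ^ 2 - d * s ^ 2 = 1 := by
        rw [hw2, hs2, hd]
        have e1 : t = (p : ℤ) * q * u ^ 2 := hu
        have e2 : (t + 1 : ℤ) = v ^ 2 := hv
        linarith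
      have hw1 : 1 < w := by
        have : 2 ≤ w ^ 2 := by rw [hw2, ← hv]; omega
        nlinarith [abs_nonneg v]
      have hsx : (Pell.Solution₁.mk w s hsol).x = w := Pell.Solution₁.x_mk w s hsol
      have hle : a.x ≤ (Pell.Solution₁.mk w s hsol).x := ha.2.2 (by rw [hsx]; exact hw1)
      rw [hsx] at hle
      -- a.x = x = 2t+1 and w² = t+1, so x = 2w² - 1 > w ≥ a.x, contradiction
      have hxw : x = 2 * w ^ 2 - 1 := by
        rw [hw2, ← hv]; omega
      exact no_small_sol w x hw1 hle hxw
    · -- t = p u², t+1 = q v² : p u² ≡ -1 mod q, contradiction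
      exfalso
      have hu0 : ((u : ZMod q)) ≠ 0 := by
        intro h
        have hdu : (q : ℤ) ∣ u := by rwa [← ZMod.intCast_zmod_eq_zero_iff_dvd]
        obtain ⟨w, hw⟩ := hdu
        haveI : Fact (1 < q) := ⟨hq.one_lt⟩
        have e1 : ((t : ℤ) : ZMod q) = 0 := by
          rw [hu, hw]; push_cast; ring_nf; simp [ZMod.natCast_self]
        have e2 : ((t + 1 : ℤ) : ZMod q) = 0 := by
          rw [hv]; push_cast; simp [ZMod.natCast_self]
        have : ((t + 1 : ℤ) : ZMod q) - ((t : ℤ) : ZMod q) = 1 := by push_cast; ring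
        rw [e1, e2] at this
        simpa using this.symm
      have e1 : t = (p : ℤ) * u ^ 2 := hu
      have e2 : (t + 1 : ℤ) = (q : ℤ) * v ^ 2 := hv
      have hcong : (p : ℤ) * u ^ 2 ≡ -1 [ZMOD (q : ℕ)] :=
        Int.modEq_iff_dvd.mpr ⟨-(v ^ 2), by linear_combination e1 - e2⟩
      have := leg_key q p (-1) u hu0 hcong
      rw [legqp, legq_neg1] at this
      norm_num at this
    · -- t = q u², t+1 = p v² : the desired solution!
      refine ⟨|v|, |u|, ?_, ?_, ?_⟩
      · rw [abs_pos]
        intro h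
        rw [h] at hv
        simp at hv
        omega
      · rw [abs_pos]
        intro h
        rw [h] at hu
        simp at hu
        omega
      · rw [sq_abs, sq_abs]
        have e1 : t = (q : ℤ) * u ^ 2 := hu
        have e2 : (t + 1 : ℤ) = p * v ^ 2 := hv
        linarith
end

section
/- Let p and q be primes with q ≡ 7 (mod 8), p ≡ 3 (mod 8), and (p/q) = 1. Then there exist positive integers y₁, y₂ (integers or half-odd-integers) satisfying p·y₂² − q·y₁² = 1; in particular, the equation p X² − q Y² = 1 has a solution in positive rationals with denominators dividing 2. -/
/-- Coprime natural numbers whose product is a square are each squares. -/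
lemma my_nat_sq_of_coprime {a b c : ℕ} (h : Nat.Coprime a b) (heq : a * b = c ^ 2) :
    ∃ a', a = a' ^ 2 :=
  exists_eq_pow_of_mul_eq_pow (Nat.isUnit_iff.mpr (h : Nat.gcd a b = 1)) heq

/-- If `q ≡ 7 (mod 8)`, `p ≡ 3 (mod 8)` are primes with `(p/q) = 1`, then the equation
`p·X² − q·Y² = 1` has a solution in positive rationals with denominators dividing `2`
(i.e. integers or half-odd-integers). -/
theorem stmt_19 (p q : ℕ) (hp : p.Prime) (hq : q.Prime)
    (hq7 : q % 8 = 7) (hp3 : p % 8 = 3)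
    (hleg : @legendreSym q ⟨hq⟩ (p : ℤ) = 1) :
    ∃ y₁ y₂ : ℚ, 0 < y₁ ∧ 0 < y₂ ∧ (∃ a : ℤ, 2 * y₁ = a) ∧ (∃ b : ℤ, 2 * y₂ = b) ∧
      (p : ℚ) * y₂ ^ 2 - q * y₁ ^ 2 = 1 := by
  classical
  haveI : Fact q.Prime := ⟨hq⟩
  haveI : Fact p.Prime := ⟨hp⟩
  have hq4 : q % 4 = 3 := by omega
  have hp4 : p % 4 = 3 := by omega
  have hpq : p ≠ q := by omega
  set d := p * q with hd
  have hdpos : 0 < d := Nat.mul_pos hp.pos hq.pos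
  have hd4 : d % 4 = 1 := by rw [hd, Nat.mul_mod, hp4, hq4]
  -- it suffices to find a positive integer solution to `p a² − q b² = 1`
  suffices H : ∃ a b : ℕ, 0 < a ∧ 0 < b ∧ p * a ^ 2 = q * b ^ 2 + 1 by
    obtain ⟨a, b, ha, hb, heq⟩ := H
    refine ⟨(b : ℚ), (a : ℚ), by exact_mod_cast hb, by exact_mod_cast ha,
      ⟨2 * b, by push_cast; ring⟩, ⟨2 * a, by push_cast; ring⟩, ?_⟩
    have := congrArg (Nat.cast : ℕ → ℚ) heq
    push_cast at this
    linarith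
  -- `d` is not a square
  have hnsq : ¬ IsSquare ((d : ℕ) : ℤ) := by
    rintro ⟨r, hr⟩
    have hdn : d = r.natAbs * r.natAbs := by
      have := congrArg Int.natAbs hr
      simpa [Int.natAbs_mul] using this
    have hpd : p ∣ r.natAbs * r.natAbs := hdn ▸ Dvd.intro q rfl
    obtain ⟨s, hs⟩ := (hp.dvd_mul.mp hpd).elim id id
    have hqs : q = p * (s * s) := by
      refine Nat.eq_of_mul_eq_mul_left hp.pos ?_
      rw [← hd, hdn, hs]; ring
    exact hpq ((Nat.prime_dvd_prime_iff_eq hp hq).mp ⟨s * s, hqs⟩)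
  -- existence of a nontrivial Pell solution
  obtain ⟨x0, y0, hxy, hy0⟩ :=
    Pell.exists_of_not_isSquare (d := (d : ℤ)) (by exact_mod_cast hdpos) hnsq
  have hQex : ∃ y : ℕ, 0 < y ∧ ∃ x : ℕ, x ^ 2 = d * y ^ 2 + 1 := by
    refine ⟨y0.natAbs, Int.natAbs_pos.mpr hy0, x0.natAbs, ?_⟩
    have h1 : ((x0.natAbs : ℤ)) ^ 2 = (d : ℤ) * ((y0.natAbs : ℤ)) ^ 2 + 1 := by
      rw [Int.natAbs_sq, Int.natAbs_sq]; linarith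
    exact_mod_cast h1
  -- a minimal positive solution
  obtain ⟨k, ⟨hkpos, x, hx⟩, hmin⟩ :
      ∃ k : ℕ, (0 < k ∧ ∃ x : ℕ, x ^ 2 = d * k ^ 2 + 1) ∧
        ∀ m, m < k → ¬(0 < m ∧ ∃ x : ℕ, x ^ 2 = d * m ^ 2 + 1) :=
    ⟨Nat.find hQex, Nat.find_spec hQex, fun m hm => Nat.find_min hQex hm⟩
  -- k is even
  have hkeven : k % 2 = 0 := by
    by_contra hodd
    obtain ⟨t, ht⟩ : ∃ t, k = 2 * t + 1 := ⟨k / 2, by omega⟩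
    rcases Nat.even_or_odd x with ⟨s, hsx⟩ | ⟨s, hsx⟩
    · -- x = 2s : 4s² = 4d(t²+t) + d + 1, impossible mod 4
      have key : 4 * (s * s) = 4 * (d * (t * t + t)) + d + 1 := by
        have e1 : x ^ 2 = 4 * (s * s) := by rw [hsx]; ring
        have e2 : d * k ^ 2 + 1 = 4 * (d * (t * t + t)) + d + 1 := by rw [ht]; ring
        rw [← e1, ← e2]; exact hx
      generalize s * s = A at key
      generalize d * (t * t + t) = B at key
      omega
    · -- x = 2s+1 : 4(s²+s) = 4d(t²+t) + d, impossible mod 4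
      have key : 4 * (s * s + s) + 1 = 4 * (d * (t * t + t)) + d + 1 := by
        have e1 : x ^ 2 = 4 * (s * s + s) + 1 := by rw [hsx]; ring
        have e2 : d * k ^ 2 + 1 = 4 * (d * (t * t + t)) + d + 1 := by rw [ht]; ring
        rw [← e1, ← e2]; exact hx
      generalize s * s + s = A at key
      generalize d * (t * t + t) = B at key
      omega
  obtain ⟨z, hzk⟩ : ∃ z, k = 2 * z := ⟨k / 2, by omega⟩
  have hzpos : 0 < z := by omega
  -- x is odd
  obtain ⟨u, hu⟩ : ∃ u, x = 2 * u + 1 := by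
    rcases Nat.even_or_odd x with ⟨s, hsx⟩ | ⟨s, hsx⟩
    · exfalso
      have key : 4 * (s * s) = 4 * (d * (z * z)) + 1 := by
        have e1 : x ^ 2 = 4 * (s * s) := by rw [hsx]; ring
        have e2 : d * k ^ 2 + 1 = 4 * (d * (z * z)) + 1 := by rw [hzk]; ring
        rw [← e1, ← e2]; exact hx
      generalize s * s = A at key
      generalize d * (z * z) = B at key
      omega
    · exact ⟨s, by omega⟩
  -- factor the equation as u(u+1) = d z²
  have hfac : u * (u + 1) = d * (z * z) := by
    have e1 : x ^ 2 = 4 * (u * (u + 1)) + 1 := by rw [hu]; ring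
    have e2 : d * k ^ 2 + 1 = 4 * (d * (z * z)) + 1 := by rw [hzk]; ring
    have key : 4 * (u * (u + 1)) + 1 = 4 * (d * (z * z)) + 1 := by
      rw [← e1, ← e2]; exact hx
    generalize u * (u + 1) = A at key ⊢
    generalize d * (z * z) = B at key ⊢
    omega
  have hupos : 0 < u := by
    rcases Nat.eq_zero_or_pos u with h0 | h
    · exfalso
      rw [h0] at hfac
      simp at hfac
      have : 0 < d * (z * z) := Nat.mul_pos hdpos (Nat.mul_pos hzpos hzpos)
      omega
    · exact h
  have hcop : Nat.Coprime u (u + 1) := by simp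
  have hpdvd : p ∣ u ∨ p ∣ (u + 1) := hp.dvd_mul.mp ⟨q * (z * z), by rw [hfac, hd]; ring⟩
  have hqdvd : q ∣ u ∨ q ∣ (u + 1) := hq.dvd_mul.mp ⟨p * (z * z), by rw [hfac, hd]; ring⟩
  rcases hpdvd with hpu | hpu1 <;> rcases hqdvd with hqu | hqu1
  · -- Case 1 : p ∣ u and q ∣ u : contradicts minimality
    exfalso
    obtain ⟨m₁, hm₁⟩ := ((Nat.coprime_primes hp hq).mpr hpq).mul_dvd_of_dvd_of_dvd hpu hqu
    rw [← hd] at hm₁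
    have hcan : m₁ * (u + 1) = z * z := by
      refine Nat.eq_of_mul_eq_mul_left hdpos ?_
      rw [← hfac, hm₁]; ring
    have hcop1 : Nat.Coprime m₁ (u + 1) :=
      hcop.coprime_dvd_left ⟨d, by rw [hm₁]; ring⟩
    have hsq1 : m₁ * (u + 1) = z ^ 2 := by rw [pow_two]; exact hcan
    obtain ⟨a, ha⟩ := my_nat_sq_of_coprime hcop1 hsq1
    obtain ⟨b, hb⟩ := my_nat_sq_of_coprime hcop1.symm (by rwa [mul_comm] at hsq1)
    have hapos : 0 < a := by
      rcases Nat.eq_zero_or_pos a with h0 | h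
      · exfalso; rw [h0] at ha; simp at ha; rw [ha] at hm₁; simp at hm₁; omega
      · exact h
    have hbpos : 0 < b := by
      rcases Nat.eq_zero_or_pos b with h0 | h
      · exfalso; rw [h0] at hb; simp at hb
      · exact h
    -- (b, a) is a smaller Pell solution
    have hsol : b ^ 2 = d * a ^ 2 + 1 := by
      rw [← hb, hm₁, ha]
    have hzab : z = a * b := by
      refine Nat.mul_self_inj.mp ?_
      rw [← hcan, ha, hb]; ring
    have hak : a < k := by
      have h1 : a ≤ a * b := Nat.le_mul_of_pos_right a hbpos
      omega
    exact hmin a hak ⟨hapos, b, hsol⟩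
  · -- Case 2 : p ∣ u, q ∣ u+1 : contradiction mod q
    exfalso
    obtain ⟨b', hb'⟩ := hpu
    obtain ⟨a', ha'⟩ := hqu1
    have hcan : b' * a' = z * z := by
      refine Nat.eq_of_mul_eq_mul_left hdpos ?_
      rw [← hfac, hd, ha', hb']; ring
    have hcop' : Nat.Coprime b' a' :=
      (hcop.coprime_dvd_left ⟨p, by rw [hb']; ring⟩).coprime_dvd_right
        ⟨q, by rw [ha']; ring⟩
    obtain ⟨b, hbsq⟩ := my_nat_sq_of_coprime hcop' (by rw [pow_two]; exact hcan)
    obtain ⟨a, hasq⟩ := my_nat_sq_of_coprime hcop'.symm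
      (by rw [pow_two, mul_comm]; exact hcan)
    have heq2 : q * a ^ 2 = p * b ^ 2 + 1 := by
      have h1 : u = p * b ^ 2 := by rw [hb', hbsq]
      have h2 : u + 1 = q * a ^ 2 := by rw [ha', hasq]
      rw [← h2, ← h1]
    -- mod q : p b² ≡ -1, but p is a QR and -1 is not
    have hne : ((p : ℤ) : ZMod q) ≠ 0 := by
      rw [Int.cast_natCast]
      intro h
      have : q ∣ p := (ZMod.natCast_eq_zero_iff p q).mp h
      exact hpq ((Nat.prime_dvd_prime_iff_eq hq hp).mp this).symm
    have hsqp : IsSquare ((p : ℤ) : ZMod q) := (legendreSym.eq_one_iff q hne).mp hleg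
    rw [Int.cast_natCast] at hsqp
    obtain ⟨c, hc⟩ := hsqp
    have hzq : (0 : ZMod q) = (p : ZMod q) * (b : ZMod q) ^ 2 + 1 := by
      have hcast := congrArg (Nat.cast : ℕ → ZMod q) heq2
      push_cast at hcast
      rw [← hcast]
      simp
    have hm1 : IsSquare (-1 : ZMod q) := by
      refine ⟨c * (b : ZMod q), ?_⟩
      linear_combination hzq + (b : ZMod q) ^ 2 * hc
    exact (ZMod.exists_sq_eq_neg_one_iff.mp hm1) hq4
  · -- Case 3 : p ∣ u+1, q ∣ u : the good case
    obtain ⟨a', ha'⟩ := hpu1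
    obtain ⟨b', hb'⟩ := hqu
    have hcan : b' * a' = z * z := by
      refine Nat.eq_of_mul_eq_mul_left hdpos ?_
      rw [← hfac, hd, ha', hb']; ring
    have hcop' : Nat.Coprime b' a' :=
      (hcop.coprime_dvd_left ⟨q, by rw [hb']; ring⟩).coprime_dvd_right
        ⟨p, by rw [ha']; ring⟩
    obtain ⟨b, hbsq⟩ := my_nat_sq_of_coprime hcop' (by rw [pow_two]; exact hcan)
    obtain ⟨a, hasq⟩ := my_nat_sq_of_coprime hcop'.symm
      (by rw [pow_two, mul_comm]; exact hcan)
    have heq2 : p * a ^ 2 = q * b ^ 2 + 1 := by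
      have h1 : u = q * b ^ 2 := by rw [hb', hbsq]
      have h2 : u + 1 = p * a ^ 2 := by rw [ha', hasq]
      rw [← h2, ← h1]
    have hapos : 0 < a := by
      rcases Nat.eq_zero_or_pos a with h0 | h
      · exfalso; rw [h0] at heq2; simp at heq2
      · exact h
    have hbpos : 0 < b := by
      rcases Nat.eq_zero_or_pos b with h0 | h
      · exfalso
        rw [h0] at heq2
        simp at heq2
        exact hp.one_lt.ne' heq2.1
      · exact h
    exact ⟨a, b, hapos, hbpos, heq2⟩
  · -- Case 4 : p ∣ u+1 and q ∣ u+1 : contradiction mod p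
    exfalso
    obtain ⟨n₁, hn₁⟩ := ((Nat.coprime_primes hp hq).mpr hpq).mul_dvd_of_dvd_of_dvd hpu1 hqu1
    rw [← hd] at hn₁
    have hcan : u * n₁ = z * z := by
      refine Nat.eq_of_mul_eq_mul_left hdpos ?_
      rw [← hfac, hn₁]; ring
    have hcop1 : Nat.Coprime u n₁ :=
      hcop.coprime_dvd_right ⟨d, by rw [hn₁]; ring⟩
    obtain ⟨a, ha⟩ := my_nat_sq_of_coprime hcop1 (by rw [pow_two]; exact hcan)
    obtain ⟨b, hb⟩ := my_nat_sq_of_coprime hcop1.symm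
      (by rw [pow_two, mul_comm]; exact hcan)
    have heq2 : a ^ 2 + 1 = p * (q * b ^ 2) := by
      rw [← ha, hn₁, hb, hd]; ring
    have hzp : ((a : ZMod p)) ^ 2 + 1 = 0 := by
      have hcast := congrArg (Nat.cast : ℕ → ZMod p) heq2
      push_cast at hcast
      rw [hcast]
      simp
    have hm1 : IsSquare (-1 : ZMod p) := by
      refine ⟨(a : ZMod p), ?_⟩
      linear_combination -hzp
    exact (ZMod.exists_sq_eq_neg_one_iff.mp hm1) hp4
end
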